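/- arXiv:2212.14685 — 9 statements merged into one kernel-verified Lean document; each statement's English description precedes it below -/
import Mathlib

section
/- Let F be a subcube partition of {0,1}^n and let G ⊆ F with |G| > 1 such that the union of the subcubes in G is itself a subcube. Let S be an inclusion-minimal star pattern occurring among the subcubes of G (no star pattern of a subcube in G is strictly contained in S). Then among the subcubes in G whose star pattern is exactly S, exactly half have an even number of 1s and half have an odd number of 1s. -/
/-- A subcube of `{0,1}^n`, given as a word over `{0,1,*}` (`none` is `*`). -/
abbrev Subcube (n : ℕ) := Fin n → Option Bool

/-- The set of points of `{0,1}^n` covered by a subcube. -/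
def Subcube.points {n : ℕ} (s : Subcube n) : Set (Fin n → Bool) :=
  {x | ∀ i : Fin n, ∀ b : Bool, s i = some b → x i = b}

/-- A subcube partition: pairwise disjoint subcubes covering the whole cube. -/
def IsSubcubePartition {n : ℕ} (F : Finset (Subcube n)) : Prop :=
  (∀ s ∈ F, ∀ t ∈ F, s ≠ t → Disjoint (Subcube.points s) (Subcube.points t)) ∧
  (⋃ s ∈ F, Subcube.points s) = Set.univ

/-- Tightness: every coordinate is mentioned by some subcube. -/
def IsTight {n : ℕ} (F : Finset (Subcube n)) : Prop :=
  ∀ i : Fin n, ∃ s ∈ F, s i ≠ none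

/-- Irreducibility of a subcube partition. -/
def IsIrreduciblePartition {n : ℕ} (F : Finset (Subcube n)) : Prop :=
  ¬ ∃ G ⊆ F, 1 < G.card ∧ G.card < F.card ∧
      ∃ u : Subcube n, (⋃ s ∈ G, Subcube.points s) = Subcube.points u

/-- The codimension: number of non-star coordinates. -/
def Subcube.codim {n : ℕ} (s : Subcube n) : ℕ :=
  (Finset.univ.filter (fun i : Fin n => s i ≠ none)).card

/-- The weight: number of coordinates equal to `1`. -/
def Subcube.weight {n : ℕ} (s : Subcube n) : ℕ :=
  (Finset.univ.filter (fun i : Fin n => s i = some true)).card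

/-- The star pattern of a subcube. -/
def Subcube.pattern {n : ℕ} (s : Subcube n) : Finset (Fin n) :=
  Finset.univ.filter (fun i : Fin n => s i = none)

open Finset

def pts {n : ℕ} (s : Subcube n) : Finset (Fin n → Bool) :=
  univ.filter (fun x => ∀ i : Fin n, ∀ b : Bool, s i = some b → x i = b)

lemma mem_pts {n : ℕ} {s : Subcube n} {x : Fin n → Bool} :
    x ∈ pts s ↔ ∀ i : Fin n, ∀ b : Bool, s i = some b → x i = b := by
  simp [pts]

lemma coe_pts {n : ℕ} (s : Subcube n) : (pts s : Set (Fin n → Bool)) = Subcube.points s := by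
  ext x; simp [mem_pts, Subcube.points]

lemma pts_nonempty {n : ℕ} (s : Subcube n) : (pts s).Nonempty := by
  refine ⟨fun i => (s i).getD false, mem_pts.mpr ?_⟩
  intro i b h; rw [h]; rfl

lemma mem_pattern {n : ℕ} {s : Subcube n} {i : Fin n} :
    i ∈ Subcube.pattern s ↔ s i = none := by simp [Subcube.pattern]

lemma card_pts {n : ℕ} (s : Subcube n) : (pts s).card = 2 ^ (Subcube.pattern s).card := by
  classical
  have e : {x // x ∈ pts s} ≃ ({i // i ∈ Subcube.pattern s} → Bool) :=
    { toFun := fun x i => x.1 i.1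
      invFun := fun g => ⟨fun i => if h : s i = none then g ⟨i, mem_pattern.mpr h⟩
          else (s i).getD false, by
        refine mem_pts.mpr fun i b hb => ?_
        have hne : ¬ s i = none := by simp [hb]
        simp [dif_neg hne, hb]⟩
      left_inv := fun x => by
        ext i
        by_cases h : s i = none
        · simp [dif_pos h]
        · obtain ⟨b, hb⟩ := Option.ne_none_iff_exists'.mp h
          simp [dif_neg h, hb, mem_pts.mp x.2 i b hb]
      right_inv := fun g => by
        ext i
        simp [dif_pos (mem_pattern.mp i.2)] }
  have := Fintype.card_congr e
  simpa [Fintype.card_coe] using this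

def sgn {n : ℕ} (S : Finset (Fin n)) (x : Fin n → Bool) : ℤ :=
  ∏ i ∈ Sᶜ, (if x i = true then (-1 : ℤ) else 1)

lemma sgn_update {n : ℕ} (S : Finset (Fin n)) (x : Fin n → Bool) {i₀ : Fin n}
    (h : i₀ ∉ S) : sgn S (Function.update x i₀ (!x i₀)) = - sgn S x := by
  classical
  have hmem : i₀ ∈ Sᶜ := Finset.mem_compl.mpr h
  have key : ∀ y : Fin n → Bool,
      sgn S y = (if y i₀ = true then (-1 : ℤ) else 1) *
        ∏ i ∈ Sᶜ.erase i₀, (if y i = true then (-1 : ℤ) else 1) :=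
    fun y => (Finset.mul_prod_erase _ _ hmem).symm
  rw [key, key x]
  have hrest : ∏ i ∈ Sᶜ.erase i₀, (if Function.update x i₀ (!x i₀) i = true then (-1 : ℤ) else 1)
      = ∏ i ∈ Sᶜ.erase i₀, (if x i = true then (-1 : ℤ) else 1) := by
    refine Finset.prod_congr rfl fun i hi => ?_
    rw [Function.update_of_ne (Finset.ne_of_mem_erase hi)]
  rw [hrest, Function.update_self]
  cases hx : x i₀ <;> simp [hx]

lemma sgn_const {n : ℕ} {S : Finset (Fin n)} {s : Subcube n} (hS : Subcube.pattern s = S)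
    {x : Fin n → Bool} (hx : x ∈ pts s) : sgn S x = (-1 : ℤ) ^ Subcube.weight s := by
  classical
  have hfac : ∀ i ∈ Sᶜ, (if x i = true then (-1 : ℤ) else 1)
      = (if s i = some true then (-1 : ℤ) else 1) := by
    intro i hi
    have hne : ¬ s i = none := by
      intro h
      exact (Finset.mem_compl.mp hi) (hS ▸ mem_pattern.mpr h)
    obtain ⟨b, hb⟩ := Option.ne_none_iff_exists'.mp hne
    rw [mem_pts.mp hx i b hb, hb]
    cases b <;> simp
  rw [sgn, Finset.prod_congr rfl hfac, Finset.prod_ite, Finset.prod_const, Finset.prod_const,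
    one_pow, mul_one]
  congr 1
  rw [Subcube.weight]
  congr 1
  ext i
  simp only [Finset.mem_filter, Finset.mem_compl, Finset.mem_univ, true_and]
  refine ⟨fun h => h.2, fun h => ⟨fun hiS => ?_, h⟩⟩
  rw [← hS, mem_pattern] at hiS
  simp [h] at hiS

lemma sum_sgn_zero {n : ℕ} {S : Finset (Fin n)} {s : Subcube n} {i₀ : Fin n}
    (hstar : s i₀ = none) (hi₀ : i₀ ∉ S) : ∑ x ∈ pts s, sgn S x = 0 := by
  classical
  refine Finset.sum_involution (fun x _ => Function.update x i₀ (!x i₀)) ?_ ?_ ?_ ?_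
  · intro x _; rw [sgn_update S x hi₀]; ring
  · intro x _ _ h
    have := congrFun h i₀
    simp at this
  · intro x hx
    refine mem_pts.mpr fun i b hb => ?_
    have hne : i ≠ i₀ := fun h => by rw [h, hstar] at hb; exact (Option.some_ne_none b) hb.symm
    show Function.update x i₀ (!x i₀) i = b
    rw [Function.update_of_ne hne]
    exact mem_pts.mp hx i b hb
  · intro x _
    show Function.update (Function.update x i₀ (!x i₀)) i₀ (!(Function.update x i₀ (!x i₀) i₀)) = x
    ext i
    by_cases h : i = i₀
    · subst h; simp
    · simp [Function.update_of_ne h]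

/-- Parity lemma: in a subset `G` of a subcube partition whose union is a
subcube, for any inclusion-minimal star pattern `S` of `G`, the subcubes of `G` with
star pattern `S` split evenly between even and odd parity. -/
theorem parity_lemma {n : ℕ} (F : Finset (Subcube n)) (hF : IsSubcubePartition F)
    (G : Finset (Subcube n)) (hGF : G ⊆ F) (hcard : 1 < G.card)
    (hcube : ∃ u : Subcube n, (⋃ s ∈ G, Subcube.points s) = Subcube.points u)
    (S : Finset (Fin n)) (hocc : ∃ s ∈ G, Subcube.pattern s = S)
    (hmin : ∀ s ∈ G, ¬ Subcube.pattern s ⊂ S) :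
    (G.filter (fun s => Subcube.pattern s = S ∧ Even (Subcube.weight s))).card =
      (G.filter (fun s => Subcube.pattern s = S ∧ ¬ Even (Subcube.weight s))).card := by
  classical
  obtain ⟨u, hu⟩ := hcube
  obtain ⟨s₀, hs₀G, hs₀S⟩ := hocc
  have hbi : G.biUnion pts = pts u := by
    apply Finset.coe_injective
    rw [Finset.coe_biUnion]
    simp only [coe_pts, Finset.mem_coe]
    exact hu
  have hdisj : ∀ s ∈ G, ∀ t ∈ G, s ≠ t → Disjoint (pts s) (pts t) := by
    intro s hs t ht hst
    rw [← Finset.disjoint_coe, coe_pts, coe_pts]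
    exact hF.1 s (hGF hs) t (hGF ht) hst
  have hsub' : ∀ s ∈ G, pts s ⊆ pts u := fun s hs => hbi ▸ Finset.subset_biUnion_of_mem pts hs
  -- u has a star coordinate outside S
  have hexists : ∃ i₀, u i₀ = none ∧ i₀ ∉ S := by
    by_contra h
    push_neg at h
    have hsubS : Subcube.pattern u ⊆ S := fun i hi => h i (mem_pattern.mp hi)
    have hcardle : (pts u).card ≤ (pts s₀).card := by
      rw [card_pts, card_pts, hs₀S]
      exact Nat.pow_le_pow_right (by norm_num) (Finset.card_le_card hsubS)
    have heq : pts s₀ = pts u :=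
      Finset.eq_of_subset_of_card_le (hsub' s₀ hs₀G) hcardle
    obtain ⟨t, htG, hts⟩ := Finset.exists_mem_ne hcard s₀
    obtain ⟨x, hx⟩ := pts_nonempty t
    have hxu : x ∈ pts s₀ := heq ▸ hsub' t htG hx
    exact Finset.disjoint_left.mp (hdisj t htG s₀ hs₀G hts) hx hxu
  obtain ⟨i₀, hi₀star, hi₀S⟩ := hexists
  have htotal : ∑ x ∈ pts u, sgn S x = 0 := sum_sgn_zero hi₀star hi₀S
  have hsplit : ∑ x ∈ pts u, sgn S x = ∑ s ∈ G, ∑ x ∈ pts s, sgn S x := by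
    rw [← hbi]
    exact Finset.sum_biUnion (fun s hs t ht hst => hdisj s hs t ht hst)
  have hper : ∀ s ∈ G, ∑ x ∈ pts s, sgn S x =
      if Subcube.pattern s = S then (2 : ℤ) ^ S.card * (-1) ^ Subcube.weight s else 0 := by
    intro s hs
    by_cases hS : Subcube.pattern s = S
    · rw [if_pos hS, Finset.sum_congr rfl (fun x hx => sgn_const hS hx), Finset.sum_const,
        card_pts, hS]
      ring
    · rw [if_neg hS]
      have hnot : ¬ Subcube.pattern s ⊆ S := fun hsub => hmin s hs (hsub.ssubset_of_ne hS)
      obtain ⟨j, hjp, hjS⟩ := Finset.not_subset.mp hnot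
      exact sum_sgn_zero (mem_pattern.mp hjp) hjS
  have hmain : (2 : ℤ) ^ S.card *
      ∑ s ∈ G.filter (fun s => Subcube.pattern s = S), (-1 : ℤ) ^ Subcube.weight s = 0 := by
    rw [Finset.mul_sum]
    rw [Finset.sum_filter]
    rw [← Finset.sum_congr rfl hper, ← hsplit, htotal]
  have h0 : ∑ s ∈ G.filter (fun s => Subcube.pattern s = S), (-1 : ℤ) ^ Subcube.weight s = 0 := by
    have h2 : ((2 : ℤ) ^ S.card) ≠ 0 := by positivity
    exact (mul_eq_zero.mp hmain).resolve_left h2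
  have hsplit2 := Finset.sum_filter_add_sum_filter_not
    (G.filter (fun s => Subcube.pattern s = S)) (fun s => Even (Subcube.weight s))
    (fun s => (-1 : ℤ) ^ Subcube.weight s)
  rw [Finset.filter_filter, Finset.filter_filter] at hsplit2
  have he : ∑ s ∈ G.filter (fun s => Subcube.pattern s = S ∧ Even (Subcube.weight s)),
      (-1 : ℤ) ^ Subcube.weight s =
      (G.filter (fun s => Subcube.pattern s = S ∧ Even (Subcube.weight s))).card := by
    rw [Finset.sum_congr rfl (fun s hs => (Finset.mem_filter.mp hs).2.2.neg_one_pow)]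
    simp
  have ho : ∑ s ∈ G.filter (fun s => Subcube.pattern s = S ∧ ¬ Even (Subcube.weight s)),
      (-1 : ℤ) ^ Subcube.weight s =
      -((G.filter (fun s => Subcube.pattern s = S ∧ ¬ Even (Subcube.weight s))).card : ℤ) := by
    rw [Finset.sum_congr rfl (fun s hs =>
      (Nat.not_even_iff_odd.mp (Finset.mem_filter.mp hs).2.2).neg_one_pow)]
    simp
  have hfin : ((G.filter (fun s => Subcube.pattern s = S ∧ Even (Subcube.weight s))).card : ℤ) +
      -((G.filter (fun s => Subcube.pattern s = S ∧ ¬ Even (Subcube.weight s))).card : ℤ) = 0 := by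
    rw [← he, ← ho, hsplit2]
    exact h0
  omega
end

section
/- Let F be a subcube partition of {0,1}^n in which exactly one star pattern S occurs on exactly two subcubes and every other star pattern occurs on at most one subcube. If G ⊆ F has |G| > 1 and the union of the subcubes of G is a subcube, then G contains both subcubes of F whose star pattern is S. -/
namespace ParityAux

variable {n : ℕ}

def pts (s : Subcube n) : Finset (Fin n → Bool) :=
  Fintype.piFinset (fun i => (s i).elim Finset.univ (fun b => {b}))

lemma mem_pts {s : Subcube n} {x : Fin n → Bool} :
    x ∈ pts s ↔ ∀ i : Fin n, ∀ b : Bool, s i = some b → x i = b := by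
  simp only [pts, Fintype.mem_piFinset]
  constructor
  · intro h i b hb
    have := h i
    rw [hb] at this
    simpa using this
  · intro h i
    cases hsi : s i with
    | none => simp [hsi]
    | some b => simpa [hsi] using h i b hsi

lemma mem_pattern {s : Subcube n} {i : Fin n} :
    i ∈ Subcube.pattern s ↔ s i = none := by
  simp [Subcube.pattern]

lemma card_pts (s : Subcube n) : (pts s).card = 2 ^ (Subcube.pattern s).card := by
  classical
  rw [pts, Fintype.card_piFinset]
  have h : ∀ i : Fin n, ((s i).elim Finset.univ (fun b => ({b} : Finset Bool))).card
      = if s i = none then 2 else 1 := by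
    intro i; cases hsi : s i <;> simp
  rw [Finset.prod_congr rfl (fun i _ => h i), Finset.prod_ite, Finset.prod_const,
    Finset.prod_const, one_pow, mul_one, Subcube.pattern]

lemma pts_nonempty (s : Subcube n) : (pts s).Nonempty := by
  rw [← Finset.card_pos, card_pts]
  positivity

def sgn (A : Finset (Fin n)) (x : Fin n → Bool) : ℤ :=
  ∏ i ∈ A, (if x i = true then -1 else 1)

lemma charSum_zero {s : Subcube n} {A : Finset (Fin n)} {i0 : Fin n}
    (hi0 : i0 ∈ A) (hs : s i0 = none) :
    ∑ x ∈ pts s, sgn A x = 0 := by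
  classical
  refine Finset.sum_involution (fun x _ => Function.update x i0 (!x i0))
    ?_ ?_ (fun x hx => ?_) (fun x hx => ?_)
  · intro x hx
    unfold sgn
    rw [← Finset.mul_prod_erase A _ hi0, ← Finset.mul_prod_erase A
      (fun i => if Function.update x i0 (!x i0) i = true then (-1:ℤ) else 1) hi0]
    have hrest : ∏ i ∈ A.erase i0, (if Function.update x i0 (!x i0) i = true then (-1:ℤ) else 1)
        = ∏ i ∈ A.erase i0, (if x i = true then (-1:ℤ) else 1) := by
      refine Finset.prod_congr rfl fun i hi => ?_
      rw [Function.update_of_ne (Finset.mem_erase.1 hi).1]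
    rw [hrest, Function.update_self]
    cases x i0 <;> simp
  · intro x hx _
    intro h
    have := congrFun h i0
    simp only [Function.update_self] at this
    cases hxi : x i0 <;> rw [hxi] at this <;> simp at this
  · rw [mem_pts] at hx ⊢
    intro i b hb
    rcases eq_or_ne i i0 with rfl | hne
    · rw [hs] at hb; exact absurd hb (by simp)
    · simp only [Function.update_of_ne hne]; exact hx i b hb
  · funext j
    rcases eq_or_ne j i0 with rfl | hne
    · simp
    · simp [Function.update_of_ne hne]

lemma prod_pm (A : Finset (Fin n)) (f : Fin n → ℤ) (hf : ∀ i, f i = 1 ∨ f i = -1) :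
    A.prod f = 1 ∨ A.prod f = -1 := by
  classical
  induction A using Finset.induction with
  | empty => left; simp
  | @insert a B h ih =>
      rw [Finset.prod_insert h]
      rcases hf a with h1 | h1 <;> rcases ih with h2 | h2 <;> simp [h1, h2]

lemma charSum_const {s : Subcube n} {A : Finset (Fin n)} (h : ∀ i ∈ A, s i ≠ none) :
    ∃ ε : ℤ, (ε = 1 ∨ ε = -1) ∧
      ∑ x ∈ pts s, sgn A x = ε * 2 ^ (Subcube.pattern s).card := by
  classical
  set c : ℤ := ∏ i ∈ A, (if s i = some true then -1 else 1) with hc_def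
  have hc : c = 1 ∨ c = -1 := prod_pm A _ (fun i => by split <;> simp)
  refine ⟨c, hc, ?_⟩
  have hx : ∀ x ∈ pts s, sgn A x = c := by
    intro x hx
    unfold sgn
    refine Finset.prod_congr rfl fun i hi => ?_
    cases hsi : s i with
    | none => exact absurd hsi (h i hi)
    | some b =>
        have := mem_pts.1 hx i b hsi
        rw [this]; cases b <;> simp
  rw [Finset.sum_congr rfl hx, Finset.sum_const, card_pts, nsmul_eq_mul]
  push_cast
  ring

lemma fix_of_subset {s t : Subcube n} (hsub : pts s ⊆ pts t)
    {i : Fin n} {b : Bool} (hti : t i = some b) : s i = some b := by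
  classical
  have hx : ∀ v : Bool, (fun j => (s j).getD (if j = i then v else false)) ∈ pts s := by
    intro v; rw [mem_pts]; intro j c hc; simp [hc]
  have hb : ∀ v : Bool, (s i).getD (if i = i then v else false) = b := by
    intro v; exact mem_pts.1 (hsub (hx v)) i b hti
  simp only [if_pos rfl] at hb
  cases hsi : s i with
  | none =>
      have h1 := hb true; have h2 := hb false
      rw [hsi] at h1 h2
      simp at h1 h2
      rw [h1] at h2; exact absurd h2 (by simp)
  | some c =>
      have h1 := hb true
      rw [hsi] at h1
      simp at h1
      rw [h1]

lemma pattern_subset {s t : Subcube n} (hsub : pts s ⊆ pts t) :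
    Subcube.pattern s ⊆ Subcube.pattern t := by
  intro i hi
  rw [mem_pattern] at hi ⊢
  by_contra hne
  cases hti : t i with
  | none => exact hne hti
  | some b =>
      have := fix_of_subset hsub hti
      rw [hi] at this; exact absurd this (by simp)

lemma repeated_pattern (G : Finset (Subcube n))
    (hdisj : ∀ s ∈ G, ∀ t ∈ G, s ≠ t → Disjoint (pts s) (pts t))
    (u : Subcube n) (hu : G.biUnion pts = pts u) (hcard : 1 < G.card) :
    ∃ s ∈ G, ∃ t ∈ G, s ≠ t ∧ Subcube.pattern s = Subcube.pattern t := by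
  classical
  have hGne : G.Nonempty := Finset.card_pos.1 (by omega)
  obtain ⟨s0, hs0G, hs0min⟩ := Finset.exists_min_image G
    (fun s => (Subcube.pattern s).card) hGne
  have hsubpts : ∀ s ∈ G, pts s ⊆ pts u := by
    intro s hs x hx
    rw [← hu]
    exact Finset.mem_biUnion.2 ⟨s, hs, hx⟩
  have hpat : ∀ s ∈ G, Subcube.pattern s ⊆ Subcube.pattern u :=
    fun s hs => pattern_subset (hsubpts s hs)
  set A : Finset (Fin n) := Subcube.pattern u \ Subcube.pattern s0 with hA_def
  rcases Finset.eq_empty_or_nonempty A with hA | ⟨i0, hi0A⟩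
  · -- pattern s0 = pattern u, so pts s0 = pts u, contradiction with card > 1
    exfalso
    have hsub : Subcube.pattern u ⊆ Subcube.pattern s0 :=
      Finset.sdiff_eq_empty_iff_subset.1 hA
    have heq : Subcube.pattern s0 = Subcube.pattern u :=
      Finset.Subset.antisymm (hpat s0 hs0G) hsub
    have hpts_eq : pts s0 = pts u :=
      Finset.eq_of_subset_of_card_le (hsubpts s0 hs0G) (by rw [card_pts, card_pts, heq])
    obtain ⟨t, htG, htne⟩ := Finset.exists_mem_ne hcard s0
    obtain ⟨x, hxt⟩ := pts_nonempty t
    have hxs0 : x ∈ pts s0 := hpts_eq ▸ hsubpts t htG hxt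
    exact Finset.disjoint_left.1 (hdisj t htG s0 hs0G htne) hxt hxs0
  · have hi0u : u i0 = none := mem_pattern.1 (Finset.mem_sdiff.1 hi0A).1
    have hi0s0 : i0 ∉ Subcube.pattern s0 := (Finset.mem_sdiff.1 hi0A).2
    have htotal : ∑ x ∈ pts u, sgn A x = 0 := charSum_zero hi0A hi0u
    have hPD : (↑G : Set (Subcube n)).PairwiseDisjoint pts :=
      fun s hs t ht hne => hdisj s hs t ht hne
    rw [← hu, Finset.sum_biUnion hPD] at htotal
    set P : Subcube n → Prop := fun s => ∀ i ∈ A, s i ≠ none with hP_def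
    rw [← Finset.sum_filter_add_sum_filter_not G P] at htotal
    have hzero : ∑ s ∈ G.filter (fun s => ¬ P s), (∑ x ∈ pts s, sgn A x) = 0 := by
      refine Finset.sum_eq_zero fun s hs => ?_
      have hns : ¬ P s := (Finset.mem_filter.1 hs).2
      simp only [hP_def] at hns
      push_neg at hns
      obtain ⟨i, hiA, hsi⟩ := hns
      exact charSum_zero hiA hsi
    rw [hzero, add_zero] at htotal
    -- every element of the filter has pattern equal to pattern s0
    have hpat_eq : ∀ s ∈ G.filter P, Subcube.pattern s = Subcube.pattern s0 := by
      intro s hs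
      obtain ⟨hsG, hPs⟩ := Finset.mem_filter.1 hs
      have hsubp : Subcube.pattern s ⊆ Subcube.pattern s0 := by
        intro i hi
        have hiu : i ∈ Subcube.pattern u := hpat s hsG hi
        have hiA : i ∉ A := fun hiA => hPs i hiA (mem_pattern.1 hi)
        by_contra hns0
        exact hiA (Finset.mem_sdiff.2 ⟨hiu, hns0⟩)
      exact Finset.eq_of_subset_of_card_le hsubp (hs0min s hsG)
    have hs0P : s0 ∈ G.filter P := by
      refine Finset.mem_filter.2 ⟨hs0G, fun i hiA hsi => ?_⟩
      have : i ∈ Subcube.pattern s0 := mem_pattern.2 hsi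
      exact (Finset.mem_sdiff.1 (by exact hiA : i ∈ A)).2 this
    -- the filter has at least two elements
    have h2 : 1 < (G.filter P).card := by
      by_contra hle
      push_neg at hle
      have h1 : (G.filter P).card = 1 :=
        le_antisymm hle (Finset.card_pos.2 ⟨s0, hs0P⟩)
      obtain ⟨a, ha⟩ := Finset.card_eq_one.1 h1
      have has0 : a = s0 := by
        have := hs0P; rw [ha, Finset.mem_singleton] at this; exact this.symm
      rw [ha, has0, Finset.sum_singleton] at htotal
      have hPs0 : P s0 := (Finset.mem_filter.1 hs0P).2
      obtain ⟨ε, hε, hsum⟩ := charSum_const hPs0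
      rw [hsum] at htotal
      rcases hε with rfl | rfl <;> simp at htotal
    obtain ⟨a, haP, b, hbP, hab⟩ := Finset.one_lt_card.1 h2
    exact ⟨a, (Finset.mem_filter.1 haP).1, b, (Finset.mem_filter.1 hbP).1, hab,
      (hpat_eq a haP).trans (hpat_eq b hbP).symm⟩

end ParityAux

/-- If a star pattern `S` occurs exactly twice in a subcube partition `F`
and every other star pattern occurs at most once, then any subset `G` of size `> 1` whose
union is a subcube contains both subcubes with star pattern `S`. -/
theorem parity_corollary {n : ℕ} (F : Finset (Subcube n)) (hF : IsSubcubePartition F)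
    (S : Finset (Fin n))
    (hS : (F.filter (fun s => Subcube.pattern s = S)).card = 2)
    (hother : ∀ T : Finset (Fin n), T ≠ S →
      (F.filter (fun s => Subcube.pattern s = T)).card ≤ 1)
    (G : Finset (Subcube n)) (hGF : G ⊆ F) (hcard : 1 < G.card)
    (hcube : ∃ u : Subcube n, (⋃ s ∈ G, Subcube.points s) = Subcube.points u) :
    ∀ s ∈ F, Subcube.pattern s = S → s ∈ G := by
  classical
  obtain ⟨u, hu⟩ := hcube
  have hpp : ∀ (s : Subcube n) (x : Fin n → Bool),
      x ∈ ParityAux.pts s ↔ x ∈ Subcube.points s := by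
    intro s x; rw [ParityAux.mem_pts]; exact Iff.rfl
  have hubi : G.biUnion ParityAux.pts = ParityAux.pts u := by
    ext x
    rw [Finset.mem_biUnion, hpp]
    rw [← hu]
    simp only [Set.mem_iUnion]
    constructor
    · rintro ⟨s, hs, hx⟩; exact ⟨s, hs, (hpp s x).1 hx⟩
    · rintro ⟨s, hs, hx⟩; exact ⟨s, hs, (hpp s x).2 hx⟩
  have hdisj : ∀ s ∈ G, ∀ t ∈ G, s ≠ t → Disjoint (ParityAux.pts s) (ParityAux.pts t) := by
    intro s hs t ht hne
    rw [Finset.disjoint_left]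
    intro x hx1 hx2
    exact Set.disjoint_left.1 (hF.1 s (hGF hs) t (hGF ht) hne)
      ((hpp s x).1 hx1) ((hpp t x).1 hx2)
  obtain ⟨s, hsG, t, htG, hst, hpatst⟩ :=
    ParityAux.repeated_pattern G hdisj u hubi hcard
  have hsubset : ({s, t} : Finset (Subcube n)) ⊆
      F.filter (fun z => Subcube.pattern z = Subcube.pattern s) := by
    intro z hz
    rcases Finset.mem_insert.1 hz with rfl | hz
    · exact Finset.mem_filter.2 ⟨hGF hsG, rfl⟩
    · rw [Finset.mem_singleton] at hz
      subst hz
      exact Finset.mem_filter.2 ⟨hGF htG, hpatst.symm⟩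
  have hcard2 : ({s, t} : Finset (Subcube n)).card = 2 := Finset.card_pair hst
  have hPS : Subcube.pattern s = S := by
    by_contra hne
    have h1 := hother _ hne
    have h2 := Finset.card_le_card hsubset
    rw [hcard2] at h2
    omega
  rw [hPS] at hsubset
  have hfilter_eq : F.filter (fun z => Subcube.pattern z = S) = {s, t} :=
    (Finset.eq_of_subset_of_card_le hsubset (by rw [hS, hcard2])).symm
  intro s' hs'F hs'S
  have : s' ∈ F.filter (fun z => Subcube.pattern z = S) :=
    Finset.mem_filter.2 ⟨hs'F, hs'S⟩
  rw [hfilter_eq] at this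
  rcases Finset.mem_insert.1 this with rfl | h
  · exact hsG
  · rw [Finset.mem_singleton] at h; subst h; exact htG
end

section
/- If F is a tight irreducible subcube partition of {0,1}^n with n ≥ 2, then F is regular: for every coordinate i and every bit b, there are at least two subcubes s in F with s_i = b. -/
section Aux
variable {n : ℕ}

def SPdefaultPt (s : Subcube n) (d : Fin n → Bool) : Fin n → Bool :=
  fun j => (s j).getD (d j)

lemma SPdefaultPt_mem (s : Subcube n) (d : Fin n → Bool) :
    SPdefaultPt s d ∈ Subcube.points s := by
  intro j b hj; simp [SPdefaultPt, hj]

lemma SPpoints_nonempty (s : Subcube n) : (Subcube.points s).Nonempty :=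
  ⟨SPdefaultPt s (fun _ => false), SPdefaultPt_mem s _⟩

lemma SPsub_fix {s t : Subcube n} (h : Subcube.points s ⊆ Subcube.points t)
    {i : Fin n} {c : Bool} (hti : t i = some c) : s i = some c := by
  have hx := h (SPdefaultPt_mem s (fun j => if j = i then !c else false))
  have h2 := hx i c hti
  cases hs : s i with
  | none => simp [SPdefaultPt, hs] at h2
  | some b =>
    simp [SPdefaultPt, hs] at h2
    rw [h2]

lemma SPpoints_inj {s t : Subcube n} (h : Subcube.points s = Subcube.points t) : s = t := by
  funext i
  cases hs : s i with
  | none =>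
    cases ht : t i with
    | none => rfl
    | some c => rw [SPsub_fix h.le ht] at hs; exact absurd hs (by simp)
  | some c =>
    rw [SPsub_fix h.ge hs]

lemma SPupdate_mem {s : Subcube n} {x : Fin n → Bool} (hx : x ∈ Subcube.points s)
    {i : Fin n} (hi : s i = none) (c : Bool) :
    Function.update x i c ∈ Subcube.points s := by
  intro j b hj
  by_cases hji : j = i
  · subst hji; rw [hj] at hi; exact absurd hi (by simp)
  · rw [Function.update_of_ne hji]; exact hx j b hj

end Aux

/-- A tight irreducible subcube partition with `n ≥ 2` is regular. -/
theorem tight_irreducible_regular {n : ℕ} (hn : 2 ≤ n) (F : Finset (Subcube n))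
    (hF : IsSubcubePartition F) (htight : IsTight F) (hirr : IsIrreduciblePartition F) :
    ∀ i : Fin n, ∀ b : Bool, 2 ≤ (F.filter (fun s => s i = some b)).card := by
  obtain ⟨hdisj, hcover⟩ := hF
  have hcov : ∀ x : Fin n → Bool, ∃ s ∈ F, x ∈ Subcube.points s := by
    intro x
    have hx : x ∈ ⋃ s ∈ F, Subcube.points s := hcover ▸ Set.mem_univ x
    simpa using hx
  -- Step 1: for each i, b there is a subcube fixing i to b.
  have hne : ∀ i : Fin n, ∀ b : Bool, ∃ s ∈ F, s i = some b := by
    intro i b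
    by_contra h
    push_neg at h
    obtain ⟨t, htF, hti⟩ := htight i
    have htib : t i = some (!b) := by
      cases hc : t i with
      | none => exact absurd hc hti
      | some c =>
        have hcb : c ≠ b := fun e => h t htF (e ▸ hc)
        congr 1
        cases b <;> cases c <;> first | rfl | exact absurd rfl hcb
    obtain ⟨x, hx⟩ := SPpoints_nonempty t
    obtain ⟨u, huF, hyu⟩ := hcov (Function.update x i b)
    have hui : u i = none := by
      cases hc : u i with
      | none => rfl
      | some c =>
        have h1 : Function.update x i b i = c := hyu i c hc
        rw [Function.update_self] at h1
        exact absurd (h1 ▸ hc) (h u huF)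
    have hxu : x ∈ Subcube.points u := by
      have := SPupdate_mem hyu hui (x i)
      rwa [Function.update_idem, Function.update_eq_self] at this
    have hut : u ≠ t := fun e => hti (e ▸ hui)
    exact Set.disjoint_left.mp (hdisj u huF t htF hut) hxu hx
  -- Main argument
  intro i b
  by_contra hlt
  push_neg at hlt
  set Gb := F.filter (fun s => s i = some b) with hGb
  obtain ⟨s, hsF, hsi⟩ := hne i b
  have hsGb : s ∈ Gb := Finset.mem_filter.mpr ⟨hsF, hsi⟩
  have hcard1 : Gb.card = 1 := by
    have h1 : 1 ≤ Gb.card := Finset.card_pos.mpr ⟨s, hsGb⟩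
    omega
  obtain ⟨s0, hs0⟩ := Finset.card_eq_one.mp hcard1
  have hss0 : s = s0 := by simpa [hs0] using hsGb
  subst hss0
  -- uniqueness: any member of F fixing i to b equals s
  have huniq : ∀ u ∈ F, u i = some b → u = s := by
    intro u huF hui
    have : u ∈ Gb := Finset.mem_filter.mpr ⟨huF, hui⟩
    simpa [hs0] using this
  set Gnb := F.filter (fun t => t i = some (!b)) with hGnb
  have hGnbF : Gnb ⊆ F := Finset.filter_subset _ _
  have hsnot : s ∉ Gnb := by
    intro hmem
    have := (Finset.mem_filter.mp hmem).2
    rw [hsi] at this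
    cases b <;> simp_all
  set s' : Subcube n := Function.update s i (some (!b)) with hs'
  -- Key claim: union of Gnb is points s'
  have hkey : (⋃ t ∈ Gnb, Subcube.points t) = Subcube.points s' := by
    apply Set.eq_of_subset_of_subset
    · -- each t in Gnb has points ⊆ points s'
      refine Set.iUnion₂_subset ?_
      intro t htG x hxt
      obtain ⟨htF, hti⟩ : t ∈ F ∧ t i = some (!b) := Finset.mem_filter.mp htG
      intro j c hjc
      by_cases hji : j = i
      · subst hji
        rw [hs', Function.update_self] at hjc
        have : (!b) = c := by simpa using hjc
        subst this
        exact hxt _ _ hti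
      · rw [hs', Function.update_of_ne hji] at hjc
        -- consider y = update x i b, covered by some u
        obtain ⟨u, huF, hyu⟩ := hcov (Function.update x i b)
        have hxi : x i = !b := hxt i (!b) hti
        have hus : u = s := by
          cases hc : u i with
          | none =>
            exfalso
            have hxu : x ∈ Subcube.points u := by
              have := SPupdate_mem hyu hc (x i)
              rwa [Function.update_idem, Function.update_eq_self] at this
            have hut : u ≠ t := by
              intro e
              rw [e, hti] at hc
              exact Option.noConfusion rfl (heq_of_eq hc)
            exact Set.disjoint_left.mp (hdisj u huF t htF hut) hxu hxt
          | some c' =>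
            have h1 : Function.update x i b i = c' := hyu i c' hc
            rw [Function.update_self] at h1
            exact huniq u huF (h1 ▸ hc)
        subst hus
        have : Function.update x i b j = c := hyu j c hjc
        rwa [Function.update_of_ne hji] at this
    · -- points s' covered by Gnb
      intro x hxs'
      have hxi : x i = !b := hxs' i (!b) (by rw [hs', Function.update_self])
      obtain ⟨t, htF, hxt⟩ := hcov x
      have hti : t i = some (!b) := by
        cases hc : t i with
        | none =>
          exfalso
          have hyt : Function.update x i b ∈ Subcube.points t := SPupdate_mem hxt hc b
          have hys : Function.update x i b ∈ Subcube.points s := by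
            intro j c hjc
            by_cases hji : j = i
            · subst hji; rw [hsi] at hjc
              rw [Function.update_self]; simpa using hjc
            · rw [Function.update_of_ne hji]
              exact hxs' j c (by rw [hs', Function.update_of_ne hji]; exact hjc)
          have hts : t ≠ s := fun e => by rw [e, hsi] at hc; simp at hc
          exact Set.disjoint_left.mp (hdisj t htF s hsF hts) hyt hys
        | some c =>
          have h1 : x i = c := hxt i c hc
          rw [hxi] at h1
          rw [← h1]
      exact Set.mem_biUnion (Finset.mem_filter.mpr ⟨htF, hti⟩) hxt
  -- Gnb is nonempty
  obtain ⟨t0, ht0F, ht0i⟩ := hne i (!b)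
  have ht0G : t0 ∈ Gnb := Finset.mem_filter.mpr ⟨ht0F, ht0i⟩
  have hGnblt : Gnb.card < F.card :=
    Finset.card_lt_card (Finset.ssubset_iff_of_subset hGnbF |>.mpr ⟨s, hsF, hsnot⟩)
  have hGnb1 : Gnb.card = 1 := by
    rcases Nat.lt_or_ge Gnb.card 2 with h2 | h2
    · have : 1 ≤ Gnb.card := Finset.card_pos.mpr ⟨t0, ht0G⟩
      omega
    · exact absurd ⟨Gnb, hGnbF, h2, hGnblt, s', hkey⟩ hirr
  obtain ⟨t, ht⟩ := Finset.card_eq_one.mp hGnb1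
  have htt0 : t0 = t := by simpa [ht] using ht0G
  subst htt0
  -- points t0 = points s', so t0 = s'
  have ht0s' : t0 = s' := by
    apply SPpoints_inj
    have : (⋃ u ∈ Gnb, Subcube.points u) = Subcube.points t0 := by
      rw [ht]; simp
    rw [← this, hkey]
  -- Now {s, t0} unions to update s i none
  set u0 : Subcube n := Function.update s i none with hu0
  have hst0 : s ≠ t0 := by
    intro e
    rw [e, ht0s', hs', Function.update_self] at hsi
    have hbb : b = !b := by simpa using hsi
    simp at hbb
  have hunion : Subcube.points s ∪ Subcube.points t0 = Subcube.points u0 := by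
    apply Set.eq_of_subset_of_subset
    · rintro x (hx | hx) <;> intro j c hjc <;> by_cases hji : j = i
      · subst hji; rw [hu0, Function.update_self] at hjc; simp at hjc
      · rw [hu0, Function.update_of_ne hji] at hjc; exact hx j c hjc
      · subst hji; rw [hu0, Function.update_self] at hjc; simp at hjc
      · rw [hu0, Function.update_of_ne hji] at hjc
        exact hx j c (by rw [ht0s', hs', Function.update_of_ne hji]; exact hjc)
    · intro x hx
      by_cases hxi : x i = b
      · left
        intro j c hjc
        by_cases hji : j = i
        · subst hji; rw [hsi] at hjc; rw [hxi]; simpa using hjc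
        · exact hx j c (by rw [hu0, Function.update_of_ne hji]; exact hjc)
      · right
        have hxi' : x i = !b := by cases hb : x i <;> cases b <;> simp_all
        intro j c hjc
        rw [ht0s', hs'] at hjc
        by_cases hji : j = i
        · subst hji; rw [Function.update_self] at hjc; rw [hxi']; simpa using hjc
        · rw [Function.update_of_ne hji] at hjc
          exact hx j c (by rw [hu0, Function.update_of_ne hji]; exact hjc)
  set G2 : Finset (Subcube n) := {s, t0} with hG2
  have hG2F : G2 ⊆ F := by
    intro u hu
    rcases Finset.mem_insert.mp hu with h | h
    · exact h ▸ hsF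
    · exact (Finset.mem_singleton.mp h) ▸ ht0F
  have hG2card : G2.card = 2 := by
    rw [hG2, Finset.card_insert_of_notMem (by simpa using hst0), Finset.card_singleton]
  have hG2union : (⋃ u ∈ G2, Subcube.points u) = Subcube.points u0 := by
    rw [← hunion, hG2]
    simp [Set.biUnion_insert]
  have hF2 : F.card = 2 := by
    have hle : 2 ≤ F.card := hG2card ▸ Finset.card_le_card hG2F
    rcases Nat.lt_or_ge F.card 3 with h3 | h3
    · omega
    · exact absurd ⟨G2, hG2F, by omega, by omega, u0, hG2union⟩ hirr
  have hFG2 : F = G2 := (Finset.eq_of_subset_of_card_le hG2F (by omega)).symm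
  -- cover gives points u0 = univ, so u0 is all stars
  have huniv : Subcube.points u0 = Set.univ := by
    rw [← hG2union, ← hFG2, hcover]
  have hu0none : ∀ j : Fin n, u0 j = none := by
    have he : u0 = (fun _ => none : Subcube n) := by
      apply SPpoints_inj
      rw [huniv]
      symm
      apply Set.eq_of_subset_of_subset (Set.subset_univ _)
      intro x _ j c hjc
      simp at hjc
    intro j; rw [he]
  -- tightness at some j ≠ i gives contradiction
  obtain ⟨j, hji⟩ := Fintype.exists_ne_of_one_lt_card (by simpa using (show 1 < n by omega)) i
  obtain ⟨w, hwF, hwj⟩ := htight j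
  rcases Finset.mem_insert.mp (hFG2 ▸ hwF) with h | h
  · subst h
    have : u0 j = w j := by rw [hu0, Function.update_of_ne hji]
    rw [hu0none j] at this
    exact hwj this.symm
  · rw [Finset.mem_singleton.mp h, ht0s', hs', Function.update_of_ne hji] at hwj
    have : u0 j = s j := by rw [hu0, Function.update_of_ne hji]
    rw [hu0none j] at this
    exact hwj this.symm
end

section
/- Let F_0 and F_1 be subcube partitions of {0,1}^n, and define G = { 0x : x ∈ F_0 \ F_1 } ∪ { 1x : x ∈ F_1 \ F_0 } ∪ { *x : x ∈ F_0 ∩ F_1 } (prepending a symbol to each word). Then G is a subcube partition of {0,1}^{n+1}. Moreover, if F_0 ≠ F_1 and at least one of F_0, F_1 is tight, then G is tight; and if F_0 ∩ F_1 ≠ ∅ and both F_0 \ F_1 and F_1 are irreducible, then G is irreducible. -/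
/-- Irreducibility for a subset of a subcube partition: no subset of size `> 1` has union
equal to a subcube other than the full cube. -/
def IsIrreducibleSubset {n : ℕ} (F' : Finset (Subcube n)) : Prop :=
  ¬ ∃ G ⊆ F', 1 < G.card ∧ ∃ u : Subcube n,
      Subcube.points u ≠ Set.univ ∧ (⋃ s ∈ G, Subcube.points s) = Subcube.points u

/-- The merge of two subcube partitions:
`{0x : x ∈ F₀ \ F₁} ∪ {1x : x ∈ F₁ \ F₀} ∪ {*x : x ∈ F₀ ∩ F₁}`. -/
def mergeG {n : ℕ} (F0 F1 : Finset (Subcube n)) : Finset (Subcube (n + 1)) :=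
  (F0 \ F1).image (fun s => Fin.cons (some false) s) ∪
  (F1 \ F0).image (fun s => Fin.cons (some true) s) ∪
  (F0 ∩ F1).image (fun s => Fin.cons (none : Option Bool) s)

lemma points_cons {n : ℕ} (a : Option Bool) (s : Subcube n) (x : Fin (n+1) → Bool) :
    x ∈ Subcube.points (Fin.cons a s) ↔
      (∀ b : Bool, a = some b → x 0 = b) ∧ Fin.tail x ∈ Subcube.points s := by
  constructor
  · intro h
    refine ⟨fun b hb => h 0 b (by simpa using hb), fun i b hb => ?_⟩
    have := h i.succ b (by simpa using hb)
    simpa [Fin.tail] using this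
  · rintro ⟨h1, h2⟩ i
    induction i using Fin.cases with
    | zero => intro b hb; exact h1 b (by simpa using hb)
    | succ j => intro b hb; exact h2 j b (by simpa using hb)


lemma points_nonempty {n : ℕ} (s : Subcube n) : (Subcube.points s).Nonempty := by
  refine ⟨fun i => (s i).getD false, fun i b hb => by simp [hb]⟩


lemma points_inj {n : ℕ} {s t : Subcube n} (h : Subcube.points s = Subcube.points t) :
    s = t := by
  funext i
  by_contra hne
  -- helper: if s i = some b and t i ≠ some b, construct point of t with x i = !b
  have key : ∀ (s t : Subcube n) (i : Fin n) (b : Bool), Subcube.points s = Subcube.points t →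
      s i = some b → t i ≠ some b → False := by
    intro s t i b h hs ht
    rcases Option.eq_none_or_eq_some (t i) with h' | ⟨b', h'⟩
    · -- t i = none; take point of t with x i = !b
      have hx : (fun j => if j = i then !b else (t j).getD false) ∈ Subcube.points t := by
        intro j c hc
        by_cases hj : j = i
        · subst hj; rw [h'] at hc; exact absurd hc (by simp)
        · simp [hj, hc]
      rw [← h] at hx
      have := hx i b hs
      simp at this
    · have hb' : b' ≠ b := fun e => ht (e ▸ h')
      obtain ⟨x, hx⟩ := points_nonempty s
      have h1 := hx i b hs
      have h2 := (h ▸ hx) i b' h'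
      exact hb' (by rw [← h1, ← h2])
  rcases Option.eq_none_or_eq_some (s i) with hs | ⟨b, hs⟩
  · rcases Option.eq_none_or_eq_some (t i) with ht | ⟨b, ht⟩
    · exact hne (hs ▸ ht ▸ rfl)
    · exact key t s i b h.symm ht (by rw [hs]; simp)
  · exact key s t i b h hs (fun e => hne (hs ▸ e ▸ rfl))


lemma cover_eq {n : ℕ} {F H : Finset (Subcube n)} (hP : IsSubcubePartition F)
    (hHF : H ⊆ F) (hcov : (⋃ s ∈ H, Subcube.points s) = Set.univ) : H = F := by
  refine Finset.Subset.antisymm hHF (fun t ht => ?_)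
  by_contra htH
  obtain ⟨x, hx⟩ := points_nonempty t
  have : x ∈ ⋃ s ∈ H, Subcube.points s := hcov ▸ Set.mem_univ x
  simp only [Set.mem_iUnion] at this
  obtain ⟨s, hs, hxs⟩ := this
  exact (hP.1 s (hHF hs) t ht (fun e => htH (e ▸ hs))).le_bot ⟨hxs, hx⟩ 

-- two elements of a partition with points s ⊆ points t are equal

lemma sub_in_partition {n : ℕ} {F : Finset (Subcube n)} (hP : IsSubcubePartition F)
    {s t : Subcube n} (hs : s ∈ F) (ht : t ∈ F)
    (h : Subcube.points s ⊆ Subcube.points t) : s = t := by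
  by_contra hne
  obtain ⟨x, hx⟩ := points_nonempty s
  exact (hP.1 s hs t ht hne).le_bot ⟨hx, h hx⟩


lemma cons_inj {n : ℕ} {a a' : Option Bool} {s t : Subcube n}
    (h : (Fin.cons a s : Subcube (n+1)) = Fin.cons a' t) : a = a' ∧ s = t := by
  constructor
  · have := congrFun h 0; simpa using this
  · funext i; have := congrFun h i.succ; simpa using this


lemma mem_mergeG {n : ℕ} {F0 F1 : Finset (Subcube n)} {v : Subcube (n+1)} :
    v ∈ mergeG F0 F1 ↔
      (∃ s, (s ∈ F0 ∧ s ∉ F1) ∧ v = Fin.cons (some false) s) ∨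
      (∃ s, (s ∈ F1 ∧ s ∉ F0) ∧ v = Fin.cons (some true) s) ∨
      (∃ s, (s ∈ F0 ∧ s ∈ F1) ∧ v = Fin.cons (none : Option Bool) s) := by
  simp [mergeG, Finset.mem_union, Finset.mem_image, Finset.mem_sdiff, Finset.mem_inter,
    or_assoc, eq_comm]


lemma mem_points_cons {n : ℕ} (a : Option Bool) (s : Subcube n) (b : Bool) (y : Fin n → Bool) :
    Fin.cons b y ∈ Subcube.points (Fin.cons a s) ↔
      (∀ b' : Bool, a = some b' → b = b') ∧ y ∈ Subcube.points s := by
  rw [points_cons]; simp [Fin.tail_cons]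


lemma mem_points_iff_cons {n : ℕ} (u : Subcube (n+1)) (b : Bool) (y : Fin n → Bool) :
    Fin.cons b y ∈ Subcube.points u ↔
      (∀ b' : Bool, u 0 = some b' → b = b') ∧ y ∈ Subcube.points (Fin.tail u) := by
  have := mem_points_cons (u 0) (Fin.tail u) b y
  rwa [Fin.cons_self_tail] at this


lemma merge_isPartition {n : ℕ} (F0 F1 : Finset (Subcube n))
    (h0 : IsSubcubePartition F0) (h1 : IsSubcubePartition F1) :
    IsSubcubePartition (mergeG F0 F1) := by
  constructor
  · intro v hv w hw hvw
    rw [Set.disjoint_left]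
    intro x hxv hxw
    rw [mem_mergeG] at hv hw
    have hx0 : ∀ (a : Option Bool) (s : Subcube n), x ∈ Subcube.points (Fin.cons a s) →
        (∀ b, a = some b → x 0 = b) ∧ Fin.tail x ∈ Subcube.points s := by
      intro a s h; exact (points_cons a s x).1 h
    rcases hv with ⟨s, ⟨hs0, hs1⟩, rfl⟩ | ⟨s, ⟨hs1, hs0⟩, rfl⟩ | ⟨s, ⟨hs0, hs1⟩, rfl⟩ <;>
      rcases hw with ⟨t, ⟨ht0, ht1⟩, rfl⟩ | ⟨t, ⟨ht1, ht0⟩, rfl⟩ | ⟨t, ⟨ht0, ht1⟩, rfl⟩ <;>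
      obtain ⟨hhv, htv⟩ := hx0 _ _ hxv <;>
      obtain ⟨hhw, htw⟩ := hx0 _ _ hxw
    · exact (h0.1 s hs0 t ht0 (fun e => hvw (by rw [e]))).le_bot ⟨htv, htw⟩
    · have h2 := hhw true rfl; rw [hhv false rfl] at h2; exact Bool.noConfusion h2
    · exact (h0.1 s hs0 t ht0 (fun e => hs1 (e ▸ ht1))).le_bot ⟨htv, htw⟩
    · have h2 := hhw false rfl; rw [hhv true rfl] at h2; exact Bool.noConfusion h2
    · exact (h1.1 s hs1 t ht1 (fun e => hvw (by rw [e]))).le_bot ⟨htv, htw⟩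
    · exact (h1.1 s hs1 t ht1 (fun e => hs0 (e ▸ ht0))).le_bot ⟨htv, htw⟩
    · exact (h0.1 s hs0 t ht0 (fun e => ht1 (e ▸ hs1))).le_bot ⟨htv, htw⟩
    · exact (h1.1 s hs1 t ht1 (fun e => ht0 (e ▸ hs0))).le_bot ⟨htv, htw⟩
    · exact (h0.1 s hs0 t ht0 (fun e => hvw (by rw [e]))).le_bot ⟨htv, htw⟩
  · rw [Set.eq_univ_iff_forall]
    intro x
    simp only [Set.mem_iUnion]
    cases hb : x 0 with
    | false =>
      have hcov : Fin.tail x ∈ ⋃ s ∈ F0, Subcube.points s := h0.2 ▸ Set.mem_univ _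
      simp only [Set.mem_iUnion] at hcov
      obtain ⟨s, hs, hxs⟩ := hcov
      by_cases hs1 : s ∈ F1
      · refine ⟨Fin.cons none s, mem_mergeG.2 (Or.inr (Or.inr ⟨s, ⟨hs, hs1⟩, rfl⟩)), ?_⟩
        rw [points_cons]; exact ⟨by simp, hxs⟩
      · refine ⟨Fin.cons (some false) s, mem_mergeG.2 (Or.inl ⟨s, ⟨hs, hs1⟩, rfl⟩), ?_⟩
        rw [points_cons]
        exact ⟨fun b e => hb.trans (Option.some.inj e), hxs⟩
    | true =>
      have hcov : Fin.tail x ∈ ⋃ s ∈ F1, Subcube.points s := h1.2 ▸ Set.mem_univ _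
      simp only [Set.mem_iUnion] at hcov
      obtain ⟨s, hs, hxs⟩ := hcov
      by_cases hs0 : s ∈ F0
      · refine ⟨Fin.cons none s, mem_mergeG.2 (Or.inr (Or.inr ⟨s, ⟨hs0, hs⟩, rfl⟩)), ?_⟩
        rw [points_cons]; exact ⟨by simp, hxs⟩
      · refine ⟨Fin.cons (some true) s, mem_mergeG.2 (Or.inr (Or.inl ⟨s, ⟨hs, hs0⟩, rfl⟩)), ?_⟩
        rw [points_cons]
        exact ⟨fun b e => hb.trans (Option.some.inj e), hxs⟩


lemma merge_tight {n : ℕ} (F0 F1 : Finset (Subcube n))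
    (hne : F0 ≠ F1) (ht : IsTight F0 ∨ IsTight F1) : IsTight (mergeG F0 F1) := by
  intro i
  induction i using Fin.cases with
  | zero =>
    have hd : (F0 \ F1).Nonempty ∨ (F1 \ F0).Nonempty := by
      by_contra h
      push_neg at h
      obtain ⟨h01, h10⟩ := h
      rw [Finset.sdiff_eq_empty_iff_subset] at h01 h10
      exact hne (Finset.Subset.antisymm h01 h10)
    rcases hd with ⟨s, hs⟩ | ⟨s, hs⟩
    · rw [Finset.mem_sdiff] at hs
      exact ⟨Fin.cons (some false) s, mem_mergeG.2 (Or.inl ⟨s, hs, rfl⟩), by simp⟩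
    · rw [Finset.mem_sdiff] at hs
      exact ⟨Fin.cons (some true) s, mem_mergeG.2 (Or.inr (Or.inl ⟨s, hs, rfl⟩)), by simp⟩
  | succ j =>
    rcases ht with ht | ht
    · obtain ⟨s, hs, hj⟩ := ht j
      by_cases hs1 : s ∈ F1
      · exact ⟨Fin.cons none s, mem_mergeG.2 (Or.inr (Or.inr ⟨s, ⟨hs, hs1⟩, rfl⟩)),
          by simpa using hj⟩
      · exact ⟨Fin.cons (some false) s, mem_mergeG.2 (Or.inl ⟨s, ⟨hs, hs1⟩, rfl⟩),
          by simpa using hj⟩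
    · obtain ⟨s, hs, hj⟩ := ht j
      by_cases hs0 : s ∈ F0
      · exact ⟨Fin.cons none s, mem_mergeG.2 (Or.inr (Or.inr ⟨s, ⟨hs0, hs⟩, rfl⟩)),
          by simpa using hj⟩
      · exact ⟨Fin.cons (some true) s, mem_mergeG.2 (Or.inr (Or.inl ⟨s, ⟨hs, hs0⟩, rfl⟩)),
          by simpa using hj⟩


lemma merge_irred {n : ℕ} (F0 F1 : Finset (Subcube n))
    (h0 : IsSubcubePartition F0) (h1 : IsSubcubePartition F1)
    (hne : (F0 ∩ F1).Nonempty) (hirr0 : IsIrreducibleSubset (F0 \ F1))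
    (hirr1 : IsIrreduciblePartition F1) : IsIrreduciblePartition (mergeG F0 F1) := by
  classical
  rintro ⟨G', hsub, hcard1, hcardlt, u, hu⟩
  set A := (F0 \ F1).filter (fun s => Fin.cons (some false) s ∈ G') with hAdef
  set B := (F1 \ F0).filter (fun s => Fin.cons (some true) s ∈ G') with hBdef
  set C := (F0 ∩ F1).filter (fun s => Fin.cons (none : Option Bool) s ∈ G') with hCdef
  have memA : ∀ s : Subcube n, Fin.cons (some false) s ∈ G' ↔ s ∈ A := by
    intro s
    refine ⟨fun h => ?_, fun h => (Finset.mem_filter.1 h).2⟩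
    rcases mem_mergeG.1 (hsub h) with ⟨t, ht, he⟩ | ⟨t, ht, he⟩ | ⟨t, ht, he⟩
    · obtain ⟨-, rfl⟩ := cons_inj he
      exact Finset.mem_filter.2 ⟨Finset.mem_sdiff.2 ht, h⟩
    · exact absurd (cons_inj he).1 (by simp)
    · exact absurd (cons_inj he).1 (by simp)
  have memB : ∀ s : Subcube n, Fin.cons (some true) s ∈ G' ↔ s ∈ B := by
    intro s
    refine ⟨fun h => ?_, fun h => (Finset.mem_filter.1 h).2⟩
    rcases mem_mergeG.1 (hsub h) with ⟨t, ht, he⟩ | ⟨t, ht, he⟩ | ⟨t, ht, he⟩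
    · exact absurd (cons_inj he).1 (by simp)
    · obtain ⟨-, rfl⟩ := cons_inj he
      exact Finset.mem_filter.2 ⟨Finset.mem_sdiff.2 ht, h⟩
    · exact absurd (cons_inj he).1 (by simp)
  have memC : ∀ s : Subcube n, Fin.cons (none : Option Bool) s ∈ G' ↔ s ∈ C := by
    intro s
    refine ⟨fun h => ?_, fun h => (Finset.mem_filter.1 h).2⟩
    rcases mem_mergeG.1 (hsub h) with ⟨t, ht, he⟩ | ⟨t, ht, he⟩ | ⟨t, ht, he⟩
    · exact absurd (cons_inj he).1 (by simp)
    · exact absurd (cons_inj he).1 (by simp)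
    · obtain ⟨-, rfl⟩ := cons_inj he
      exact Finset.mem_filter.2 ⟨Finset.mem_inter.2 ht, h⟩
  have hAF : A ⊆ F0 \ F1 := Finset.filter_subset _ _
  have hBF : B ⊆ F1 \ F0 := Finset.filter_subset _ _
  have hCF : C ⊆ F0 ∩ F1 := Finset.filter_subset _ _
  have hACF0 : A ∪ C ⊆ F0 := by
    intro s hs
    rcases Finset.mem_union.1 hs with h | h
    · exact (Finset.mem_sdiff.1 (hAF h)).1
    · exact (Finset.mem_inter.1 (hCF h)).1
  have hBCF1 : B ∪ C ⊆ F1 := by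
    intro s hs
    rcases Finset.mem_union.1 hs with h | h
    · exact (Finset.mem_sdiff.1 (hBF h)).1
    · exact (Finset.mem_inter.1 (hCF h)).2
  have hshape : ∀ v ∈ G', (∃ s ∈ A, v = Fin.cons (some false) s) ∨
      (∃ s ∈ B, v = Fin.cons (some true) s) ∨
      (∃ s ∈ C, v = Fin.cons (none : Option Bool) s) := by
    intro v hv
    rcases mem_mergeG.1 (hsub hv) with ⟨t, ht, rfl⟩ | ⟨t, ht, rfl⟩ | ⟨t, ht, rfl⟩
    · exact Or.inl ⟨t, (memA t).1 hv, rfl⟩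
    · exact Or.inr (Or.inl ⟨t, (memB t).1 hv, rfl⟩)
    · exact Or.inr (Or.inr ⟨t, (memC t).1 hv, rfl⟩)
  have huni : ∀ x, x ∈ Subcube.points u ↔ ∃ v ∈ G', x ∈ Subcube.points v := by
    intro x; rw [← hu]; simp
  -- slice lemmas
  have hsliceF : ∀ y : Fin n → Bool,
      Fin.cons false y ∈ Subcube.points u ↔ ∃ s ∈ A ∪ C, y ∈ Subcube.points s := by
    intro y
    rw [huni]
    constructor
    · rintro ⟨v, hv, hxv⟩
      rcases hshape v hv with ⟨s, hs, rfl⟩ | ⟨s, hs, rfl⟩ | ⟨s, hs, rfl⟩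
      · exact ⟨s, Finset.mem_union_left _ hs, ((mem_points_cons _ _ _ _).1 hxv).2⟩
      · exact absurd (((mem_points_cons _ _ _ _).1 hxv).1 true rfl) (by simp)
      · exact ⟨s, Finset.mem_union_right _ hs, ((mem_points_cons _ _ _ _).1 hxv).2⟩
    · rintro ⟨s, hs, hy⟩
      rcases Finset.mem_union.1 hs with h | h
      · exact ⟨Fin.cons (some false) s, (memA s).2 h,
          (mem_points_cons _ _ _ _).2 ⟨fun b' e => Option.some.inj e, hy⟩⟩
      · exact ⟨Fin.cons (none : Option Bool) s, (memC s).2 h,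
          (mem_points_cons _ _ _ _).2 ⟨fun b' e => (by cases e), hy⟩⟩
  have hsliceT : ∀ y : Fin n → Bool,
      Fin.cons true y ∈ Subcube.points u ↔ ∃ s ∈ B ∪ C, y ∈ Subcube.points s := by
    intro y
    rw [huni]
    constructor
    · rintro ⟨v, hv, hxv⟩
      rcases hshape v hv with ⟨s, hs, rfl⟩ | ⟨s, hs, rfl⟩ | ⟨s, hs, rfl⟩
      · exact absurd (((mem_points_cons _ _ _ _).1 hxv).1 false rfl) (by simp)
      · exact ⟨s, Finset.mem_union_left _ hs, ((mem_points_cons _ _ _ _).1 hxv).2⟩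
      · exact ⟨s, Finset.mem_union_right _ hs, ((mem_points_cons _ _ _ _).1 hxv).2⟩
    · rintro ⟨s, hs, hy⟩
      rcases Finset.mem_union.1 hs with h | h
      · exact ⟨Fin.cons (some true) s, (memB s).2 h,
          (mem_points_cons _ _ _ _).2 ⟨fun b' e => Option.some.inj e, hy⟩⟩
      · exact ⟨Fin.cons (none : Option Bool) s, (memC s).2 h,
          (mem_points_cons _ _ _ _).2 ⟨fun b' e => (by cases e), hy⟩⟩
  rcases Option.eq_none_or_eq_some (u 0) with hu0 | ⟨b0, hu0⟩
  · -- u 0 = none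
    have hptF : ∀ (b : Bool) (y : Fin n → Bool),
        Fin.cons b y ∈ Subcube.points u ↔ y ∈ Subcube.points (Fin.tail u) := by
      intro b y
      rw [mem_points_iff_cons, hu0]
      simp
    have hACu : (⋃ s ∈ (A ∪ C : Finset (Subcube n)), Subcube.points s)
        = Subcube.points (Fin.tail u) := by
      ext y
      simp only [Set.mem_iUnion]
      rw [← hptF false y, hsliceF]
      simp
    have hBCu : (⋃ s ∈ (B ∪ C : Finset (Subcube n)), Subcube.points s)
        = Subcube.points (Fin.tail u) := by
      ext y
      simp only [Set.mem_iUnion]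
      rw [← hptF true y, hsliceT]
      simp
    by_cases hWuniv : Subcube.points (Fin.tail u) = Set.univ
    · have hACeq : A ∪ C = F0 := cover_eq h0 hACF0 (hACu.trans hWuniv)
      have hBCeq : B ∪ C = F1 := cover_eq h1 hBCF1 (hBCu.trans hWuniv)
      have hGsup : mergeG F0 F1 ⊆ G' := by
        intro v hv
        rcases mem_mergeG.1 hv with ⟨t, ⟨ht0, ht1⟩, rfl⟩ | ⟨t, ⟨ht1, ht0⟩, rfl⟩ |
            ⟨t, ⟨ht0, ht1⟩, rfl⟩
        · have : t ∈ A ∪ C := hACeq ▸ ht0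
          rcases Finset.mem_union.1 this with h | h
          · exact (memA t).2 h
          · exact absurd (Finset.mem_inter.1 (hCF h)).2 ht1
        · have : t ∈ B ∪ C := hBCeq ▸ ht1
          rcases Finset.mem_union.1 this with h | h
          · exact (memB t).2 h
          · exact absurd (Finset.mem_inter.1 (hCF h)).1 ht0
        · have : t ∈ A ∪ C := hACeq ▸ ht0
          rcases Finset.mem_union.1 this with h | h
          · exact absurd (Finset.mem_sdiff.1 (hAF h)).2 (not_not.2 ht1)
          · exact (memC t).2 h
      exact absurd (Finset.card_le_card hGsup) (not_le.2 hcardlt)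
    · -- points (tail u) ≠ univ
      obtain ⟨y, hy⟩ := points_nonempty (Fin.tail u)
      have hyBC : ∃ t ∈ B ∪ C, y ∈ Subcube.points t := by
        have : y ∈ ⋃ s ∈ (B ∪ C : Finset (Subcube n)), Subcube.points s := hBCu ▸ hy
        simpa using this
      have hBC1 : (B ∪ C).card = 1 := by
        rcases Nat.lt_or_ge 1 (B ∪ C).card with h | h
        · exfalso
          refine hirr1 ⟨B ∪ C, hBCF1, h, ?_, Fin.tail u, hBCu⟩
          refine Finset.card_lt_card (Finset.ssubset_iff_subset_ne.2 ⟨hBCF1, ?_⟩)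
          intro e
          apply hWuniv
          rw [← hBCu, e]
          exact h1.2
        · obtain ⟨t, ht, -⟩ := hyBC
          have : 0 < (B ∪ C).card := Finset.card_pos.2 ⟨t, ht⟩
          omega
      obtain ⟨t, hBCt⟩ := Finset.card_eq_one.1 hBC1
      have htBC : t ∈ B ∪ C := hBCt ▸ Finset.mem_singleton_self t
      have hptw : Subcube.points t = Subcube.points (Fin.tail u) := by
        rw [← hBCu, hBCt]
        simp
      rcases Finset.eq_empty_or_nonempty C with hCe | ⟨c, hc⟩
      · -- C = ∅, so B = {t}
        have htB : t ∈ B := by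
          rcases Finset.mem_union.1 htBC with h | h
          · exact h
          · exact absurd h (by rw [hCe]; simp)
        have hAu : (⋃ s ∈ A, Subcube.points s) = Subcube.points (Fin.tail u) := by
          rw [← hACu, hCe]
          simp
        have hyA : ∃ s ∈ A, y ∈ Subcube.points s := by
          have : y ∈ ⋃ s ∈ A, Subcube.points s := hAu ▸ hy
          simpa using this
        rcases Nat.lt_or_ge 1 A.card with h | h
        · exact hirr0 ⟨A, hAF, h, Fin.tail u, hWuniv, hAu⟩
        · obtain ⟨s, hsA, -⟩ := hyA
          have h1c : A.card = 1 := by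
            have : 0 < A.card := Finset.card_pos.2 ⟨s, hsA⟩
            omega
          obtain ⟨s', hs'⟩ := Finset.card_eq_one.1 h1c
          have hsA' : s' ∈ A := hs' ▸ Finset.mem_singleton_self s'
          have hps : Subcube.points s' = Subcube.points (Fin.tail u) := by
            rw [← hAu, hs']
            simp
          have : s' = t := points_inj (hps.trans hptw.symm)
          have hs'F : s' ∈ F0 := (Finset.mem_sdiff.1 (hAF hsA')).1
          have htF : t ∉ F0 := (Finset.mem_sdiff.1 (hBF htB)).2
          exact htF (this ▸ hs'F)
      · -- C nonempty
        have hcBC : c ∈ B ∪ C := Finset.mem_union_right _ hc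
        have hct : c = t := by
          have := hBCt ▸ hcBC
          simpa using this
        have htC : t ∈ C := hct ▸ hc
        have htF0 : t ∈ F0 := (Finset.mem_inter.1 (hCF htC)).1
        have htF1 : t ∈ F1 := (Finset.mem_inter.1 (hCF htC)).2
        have hGsing : G' ⊆ {Fin.cons (none : Option Bool) t} := by
          intro v hv
          rcases hshape v hv with ⟨s, hs, rfl⟩ | ⟨s, hs, rfl⟩ | ⟨s, hs, rfl⟩
          · exfalso
            have hsp : Subcube.points s ⊆ Subcube.points t := by
              rw [hptw, ← hACu]
              intro z hz
              simp only [Set.mem_iUnion]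
              exact ⟨s, Finset.mem_union_left _ hs, hz⟩
            have heq : s = t := sub_in_partition h0
              ((Finset.mem_sdiff.1 (hAF hs)).1) htF0 hsp
            exact (Finset.mem_sdiff.1 (hAF hs)).2 (heq ▸ htF1)
          · exfalso
            have : s ∈ B ∪ C := Finset.mem_union_left _ hs
            have hst : s = t := by
              have := hBCt ▸ this
              simpa using this
            exact (Finset.mem_sdiff.1 (hBF hs)).2 (hst ▸ htF0)
          · have hst : s = t := by
              have : s ∈ B ∪ C := Finset.mem_union_right _ hs
              have := hBCt ▸ this
              simpa using this
            rw [hst]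
            exact Finset.mem_singleton_self _
        have : G'.card ≤ 1 := by
          have := Finset.card_le_card hGsing
          simpa using this
        omega
  · -- u 0 = some b0
    cases b0 with
    | false =>
      have hBe : B = ∅ := by
        rw [Finset.eq_empty_iff_forall_notMem]
        intro t ht
        obtain ⟨y, hy⟩ := points_nonempty t
        have : Fin.cons true y ∈ Subcube.points u := by
          rw [huni]
          exact ⟨Fin.cons (some true) t, (memB t).2 ht,
            (mem_points_cons _ _ _ _).2 ⟨fun b' e => Option.some.inj e, hy⟩⟩
        have := ((mem_points_iff_cons u true y).1 this).1 false hu0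
        exact Bool.noConfusion this
      have hCe : C = ∅ := by
        rw [Finset.eq_empty_iff_forall_notMem]
        intro t ht
        obtain ⟨y, hy⟩ := points_nonempty t
        have : Fin.cons true y ∈ Subcube.points u := by
          rw [huni]
          exact ⟨Fin.cons (none : Option Bool) t, (memC t).2 ht,
            (mem_points_cons _ _ _ _).2 ⟨fun b' e => (by cases e), hy⟩⟩
        have := ((mem_points_iff_cons u true y).1 this).1 false hu0
        exact Bool.noConfusion this
      have hAu : (⋃ s ∈ A, Subcube.points s) = Subcube.points (Fin.tail u) := by
        ext y
        simp only [Set.mem_iUnion]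
        have h1' := hsliceF y
        rw [mem_points_iff_cons, hu0] at h1'
        rw [hCe] at h1'
        simp only [Finset.union_empty] at h1'
        constructor
        · intro ⟨s, hs, hy⟩
          exact (h1'.2 ⟨s, hs, hy⟩).2
        · intro hy
          obtain ⟨s, hs, hy'⟩ := h1'.1 ⟨fun b' e => Option.some.inj e, hy⟩
          exact ⟨s, hs, hy'⟩
      have hGeq : G' = A.image (fun s => Fin.cons (some false) s) := by
        ext v
        constructor
        · intro hv
          rcases hshape v hv with ⟨s, hs, rfl⟩ | ⟨s, hs, rfl⟩ | ⟨s, hs, rfl⟩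
          · exact Finset.mem_image.2 ⟨s, hs, rfl⟩
          · exact absurd hs (by rw [hBe]; simp)
          · exact absurd hs (by rw [hCe]; simp)
        · intro hv
          obtain ⟨s, hs, rfl⟩ := Finset.mem_image.1 hv
          exact (memA s).2 hs
      have hcardA : G'.card = A.card := by
        rw [hGeq]
        exact Finset.card_image_of_injective _ (fun a b h => (cons_inj h).2)
      have hWuniv : Subcube.points (Fin.tail u) ≠ Set.univ := by
        intro h
        have hAeq : A = F0 := cover_eq h0 (fun s hs => (Finset.mem_sdiff.1 (hAF hs)).1)
          (hAu.trans h)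
        obtain ⟨t, ht⟩ := hne
        rw [Finset.mem_inter] at ht
        exact (Finset.mem_sdiff.1 (hAF (hAeq ▸ ht.1))).2 ht.2
      exact hirr0 ⟨A, hAF, hcardA ▸ hcard1, Fin.tail u, hWuniv, hAu⟩
    | true =>
      have hAe : A = ∅ := by
        rw [Finset.eq_empty_iff_forall_notMem]
        intro t ht
        obtain ⟨y, hy⟩ := points_nonempty t
        have : Fin.cons false y ∈ Subcube.points u := by
          rw [huni]
          exact ⟨Fin.cons (some false) t, (memA t).2 ht,
            (mem_points_cons _ _ _ _).2 ⟨fun b' e => Option.some.inj e, hy⟩⟩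
        have := ((mem_points_iff_cons u false y).1 this).1 true hu0
        exact Bool.noConfusion this
      have hCe : C = ∅ := by
        rw [Finset.eq_empty_iff_forall_notMem]
        intro t ht
        obtain ⟨y, hy⟩ := points_nonempty t
        have : Fin.cons false y ∈ Subcube.points u := by
          rw [huni]
          exact ⟨Fin.cons (none : Option Bool) t, (memC t).2 ht,
            (mem_points_cons _ _ _ _).2 ⟨fun b' e => (by cases e), hy⟩⟩
        have := ((mem_points_iff_cons u false y).1 this).1 true hu0
        exact Bool.noConfusion this
      have hBu : (⋃ s ∈ B, Subcube.points s) = Subcube.points (Fin.tail u) := by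
        ext y
        simp only [Set.mem_iUnion]
        have h1' := hsliceT y
        rw [mem_points_iff_cons, hu0] at h1'
        rw [hCe] at h1'
        simp only [Finset.union_empty] at h1'
        constructor
        · intro ⟨s, hs, hy⟩
          exact (h1'.2 ⟨s, hs, hy⟩).2
        · intro hy
          obtain ⟨s, hs, hy'⟩ := h1'.1 ⟨fun b' e => Option.some.inj e, hy⟩
          exact ⟨s, hs, hy'⟩
      have hGeq : G' = B.image (fun s => Fin.cons (some true) s) := by
        ext v
        constructor
        · intro hv
          rcases hshape v hv with ⟨s, hs, rfl⟩ | ⟨s, hs, rfl⟩ | ⟨s, hs, rfl⟩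
          · exact absurd hs (by rw [hAe]; simp)
          · exact Finset.mem_image.2 ⟨s, hs, rfl⟩
          · exact absurd hs (by rw [hCe]; simp)
        · intro hv
          obtain ⟨s, hs, rfl⟩ := Finset.mem_image.1 hv
          exact (memB s).2 hs
      have hcardB : G'.card = B.card := by
        rw [hGeq]
        exact Finset.card_image_of_injective _ (fun a b h => (cons_inj h).2)
      have hBltF1 : B.card < F1.card := by
        refine Finset.card_lt_card (Finset.ssubset_iff_subset_ne.2
          ⟨fun s hs => (Finset.mem_sdiff.1 (hBF hs)).1, ?_⟩)
        intro e
        obtain ⟨t, ht⟩ := hne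
        rw [Finset.mem_inter] at ht
        exact (Finset.mem_sdiff.1 (hBF (e ▸ ht.2))).2 ht.1
      exact hirr1 ⟨B, fun s hs => (Finset.mem_sdiff.1 (hBF hs)).1,
        hcardB ▸ hcard1, hBltF1, Fin.tail u, hBu⟩


/-- The merge of two subcube partitions is a subcube partition, which is
tight if `F₀ ≠ F₁` and one of them is tight, and irreducible if `F₀ ∩ F₁ ≠ ∅` and both
`F₀ \ F₁` and `F₁` are irreducible. -/
theorem merge_lemma {n : ℕ} (F0 F1 : Finset (Subcube n))
    (h0 : IsSubcubePartition F0) (h1 : IsSubcubePartition F1) :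
    IsSubcubePartition (mergeG F0 F1) ∧
    (F0 ≠ F1 → (IsTight F0 ∨ IsTight F1) → IsTight (mergeG F0 F1)) ∧
    ((F0 ∩ F1).Nonempty → IsIrreducibleSubset (F0 \ F1) → IsIrreduciblePartition F1 →
      IsIrreduciblePartition (mergeG F0 F1)) := by
  exact ⟨merge_isPartition F0 F1 h0 h1,
    fun hne ht => merge_tight F0 F1 hne ht,
    fun hne hi0 hi1 => merge_irred F0 F1 h0 h1 hne hi0 hi1⟩
end

section
/- For every n ≥ 3 there exists a tight irreducible subcube partition of {0,1}^n of size 2n − 1. -/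
namespace Constr

variable {n : ℕ}

/-- all-zeros point -/
def Pp (n : ℕ) : Subcube n := fun _ => some false
/-- zeros on [0,n-3], star at n-2, one at n-1 -/
def Tp (n : ℕ) : Subcube n := fun i =>
  if i.val + 2 < n then some false else if i.val + 1 = n then some true else none
/-- one at 0, zero at 1, stars elsewhere -/
def Sp (n : ℕ) : Subcube n := fun i =>
  if i.val = 0 then some true else if i.val = 1 then some false else none
/-- zeros below k, ones at k,k+1,k+2, stars above -/
def Cp (n k : ℕ) : Subcube n := fun i =>
  if i.val < k then some false else if i.val < k + 3 then some true else none
/-- zeros below k, star at k, one at k+1, zero at k+2, stars above -/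
def Dp (n k : ℕ) : Subcube n := fun i =>
  if i.val < k then some false
  else if i.val = k then none
  else if i.val = k + 1 then some true
  else if i.val = k + 2 then some false
  else none

abbrev Lab (n : ℕ) := Fin 3 ⊕ (Fin (n - 2) × Bool)

def piece (n : ℕ) : Lab n → Subcube n
  | .inl j => if j.val = 0 then Pp n else if j.val = 1 then Tp n else Sp n
  | .inr (k, b) => if b then Dp n k.val else Cp n k.val

end Constr
namespace Constr
variable {n : ℕ}

lemma Pp_app (i : Fin n) : Pp n i = some false := rfl
lemma Tp_low {i : Fin n} (h : i.val + 2 < n) : Tp n i = some false := by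
  unfold Tp; rw [if_pos h]
lemma Tp_hi {i : Fin n} (h : i.val + 1 = n) : Tp n i = some true := by
  unfold Tp; rw [if_neg (by omega), if_pos h]
lemma Tp_star {i : Fin n} (h : i.val + 2 = n) : Tp n i = none := by
  unfold Tp; rw [if_neg (by omega), if_neg (by omega)]
lemma Sp_zero {i : Fin n} (h : i.val = 0) : Sp n i = some true := by
  unfold Sp; rw [if_pos h]
lemma Sp_one {i : Fin n} (h : i.val = 1) : Sp n i = some false := by
  unfold Sp; rw [if_neg (by omega), if_pos h]
lemma Sp_star {i : Fin n} (h : 2 ≤ i.val) : Sp n i = none := by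
  unfold Sp; rw [if_neg (by omega), if_neg (by omega)]
lemma Cp_low {k : ℕ} {i : Fin n} (h : i.val < k) : Cp n k i = some false := by
  unfold Cp; rw [if_pos h]
lemma Cp_mid {k : ℕ} {i : Fin n} (h1 : k ≤ i.val) (h2 : i.val < k + 3) : Cp n k i = some true := by
  unfold Cp; rw [if_neg (by omega), if_pos h2]
lemma Cp_star {k : ℕ} {i : Fin n} (h : k + 3 ≤ i.val) : Cp n k i = none := by
  unfold Cp; rw [if_neg (by omega), if_neg (by omega)]
lemma Dp_low {k : ℕ} {i : Fin n} (h : i.val < k) : Dp n k i = some false := by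
  unfold Dp; rw [if_pos h]
lemma Dp_starr {k : ℕ} {i : Fin n} (h : i.val = k) : Dp n k i = none := by
  unfold Dp; rw [if_neg (by omega), if_pos h]
lemma Dp_one {k : ℕ} {i : Fin n} (h : i.val = k + 1) : Dp n k i = some true := by
  unfold Dp; rw [if_neg (by omega), if_neg (by omega), if_pos h]
lemma Dp_two {k : ℕ} {i : Fin n} (h : i.val = k + 2) : Dp n k i = some false := by
  unfold Dp; rw [if_neg (by omega), if_neg (by omega), if_neg (by omega), if_pos h]
lemma Dp_hi {k : ℕ} {i : Fin n} (h : k + 3 ≤ i.val) : Dp n k i = none := by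
  unfold Dp; rw [if_neg (by omega), if_neg (by omega), if_neg (by omega), if_neg (by omega)]

lemma piece_inl0 : piece n (.inl 0) = Pp n := rfl
lemma piece_inl1 : piece n (.inl 1) = Tp n := rfl
lemma piece_inl2 : piece n (.inl 2) = Sp n := rfl
lemma piece_C (k : Fin (n-2)) : piece n (.inr (k, false)) = Cp n k.val := rfl
lemma piece_D (k : Fin (n-2)) : piece n (.inr (k, true)) = Dp n k.val := rfl


/-- conflict relation -/
def Confl (s t : Subcube n) : Prop := ∃ (i : Fin n) (b : Bool), s i = some b ∧ t i = some (!b)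

lemma Confl.symm {s t : Subcube n} (h : Confl s t) : Confl t s := by
  obtain ⟨i, b, h1, h2⟩ := h; exact ⟨i, !b, h2, by simpa using h1⟩

lemma Confl.ne {s t : Subcube n} (h : Confl s t) : s ≠ t := by
  obtain ⟨i, b, h1, h2⟩ := h
  intro he; rw [he, h2] at h1; cases b <;> simp at h1

section prim
variable (hn : 3 ≤ n)
include hn

lemma con_PT : Confl (Pp n) (Tp n) :=
  ⟨⟨n-1, by omega⟩, false, Pp_app _, by rw [Tp_hi (by simp only [Fin.val_mk]; omega)]; rfl⟩
lemma con_PS : Confl (Pp n) (Sp n) :=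
  ⟨⟨0, by omega⟩, false, Pp_app _, by rw [Sp_zero rfl]; rfl⟩
lemma con_TS : Confl (Tp n) (Sp n) :=
  ⟨⟨0, by omega⟩, false, Tp_low (by simp only [Fin.val_mk]; omega), by rw [Sp_zero rfl]; rfl⟩
lemma con_PC {k : ℕ} (hk : k < n - 2) : Confl (Pp n) (Cp n k) :=
  ⟨⟨k, by omega⟩, false, Pp_app _, by rw [Cp_mid (by simp only [Fin.val_mk]; omega) (by simp only [Fin.val_mk]; omega)]; rfl⟩
lemma con_PD {k : ℕ} (hk : k < n - 2) : Confl (Pp n) (Dp n k) :=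
  ⟨⟨k+1, by omega⟩, false, Pp_app _, by rw [Dp_one rfl]; rfl⟩
lemma con_TC {k : ℕ} (hk : k < n - 2) : Confl (Tp n) (Cp n k) :=
  ⟨⟨k, by omega⟩, false, Tp_low (by simp only [Fin.val_mk]; omega), by rw [Cp_mid (by simp only [Fin.val_mk]; omega) (by simp only [Fin.val_mk]; omega)]; rfl⟩
lemma con_TD {k : ℕ} (hk : k < n - 2) : Confl (Tp n) (Dp n k) := by
  by_cases h : k + 3 < n
  · exact ⟨⟨k+1, by omega⟩, false, Tp_low (by simp only [Fin.val_mk]; omega), by rw [Dp_one rfl]; rfl⟩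
  · exact ⟨⟨k+2, by omega⟩, true, Tp_hi (by simp only [Fin.val_mk]; omega), by rw [Dp_two rfl]; rfl⟩
lemma con_SC {k : ℕ} (hk : k < n - 2) : Confl (Sp n) (Cp n k) := by
  rcases Nat.eq_zero_or_pos k with h | h
  · exact ⟨⟨1, by omega⟩, false, Sp_one rfl, by rw [Cp_mid (by simp only [Fin.val_mk]; omega) (by simp only [Fin.val_mk]; omega)]; rfl⟩
  · exact ⟨⟨0, by omega⟩, true, Sp_zero rfl, by rw [Cp_low (by simp only [Fin.val_mk]; omega)]; rfl⟩
lemma con_SD {k : ℕ} (hk : k < n - 2) : Confl (Sp n) (Dp n k) := by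
  rcases Nat.eq_zero_or_pos k with h | h
  · exact ⟨⟨1, by omega⟩, false, Sp_one rfl, by rw [Dp_one (by simp only [Fin.val_mk]; omega)]; rfl⟩
  · exact ⟨⟨0, by omega⟩, true, Sp_zero rfl, by rw [Dp_low (by simp only [Fin.val_mk]; omega)]; rfl⟩
lemma con_CC {k l : ℕ} (hl : l < n - 2) (hkl : k < l) : Confl (Cp n k) (Cp n l) :=
  ⟨⟨k, by omega⟩, true, Cp_mid (by simp only [Fin.val_mk]; omega) (by simp only [Fin.val_mk]; omega), by rw [Cp_low (by simp only [Fin.val_mk]; omega)]; rfl⟩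
lemma con_DD {k l : ℕ} (hl : l < n - 2) (hkl : k < l) : Confl (Dp n k) (Dp n l) := by
  by_cases h : l = k + 1
  · exact ⟨⟨k+2, by omega⟩, false, Dp_two rfl, by rw [Dp_one (by simp only [Fin.val_mk]; omega)]; rfl⟩
  · exact ⟨⟨k+1, by omega⟩, true, Dp_one rfl, by rw [Dp_low (by simp only [Fin.val_mk]; omega)]; rfl⟩
lemma con_CD {k l : ℕ} (hk : k < n - 2) (hl : l < n - 2) : Confl (Cp n k) (Dp n l) := by
  rcases lt_trichotomy k l with h | h | h
  · exact ⟨⟨k, by omega⟩, true, Cp_mid (by simp only [Fin.val_mk]; omega) (by simp only [Fin.val_mk]; omega),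
      by rw [Dp_low (by simp only [Fin.val_mk]; omega)]; rfl⟩
  · exact ⟨⟨k+2, by omega⟩, true, Cp_mid (Nat.le_add_right k 2) (by simp only [Fin.val_mk]; omega),
      by rw [Dp_two (by simp only [Fin.val_mk]; omega)]; rfl⟩
  · by_cases h2 : l + 1 < k
    · exact ⟨⟨l+1, by omega⟩, false, Cp_low (by simp only [Fin.val_mk]; omega), by rw [Dp_one rfl]; rfl⟩
    · exact ⟨⟨l+2, by omega⟩, true, Cp_mid (by simp only [Fin.val_mk]; omega) (by simp only [Fin.val_mk]; omega),
        by rw [Dp_two rfl]; rfl⟩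

end prim

/-- any two pieces with distinct labels conflict at some coordinate -/
lemma conflict (hn : 3 ≤ n) {l₁ l₂ : Lab n} (h : l₁ ≠ l₂) :
    Confl (piece n l₁) (piece n l₂) := by
  rcases l₁ with j1 | ⟨k1, b1⟩ <;> rcases l₂ with j2 | ⟨k2, b2⟩
  · fin_cases j1 <;> fin_cases j2 <;> simp_all <;>
    first
      | exact con_PT hn | exact con_PS hn | exact con_TS hn
      | exact (con_PT hn).symm | exact (con_PS hn).symm | exact (con_TS hn).symm
  · fin_cases j1 <;> cases b2 <;>
    first
      | exact con_PC hn k2.isLt | exact con_PD hn k2.isLt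
      | exact con_TC hn k2.isLt | exact con_TD hn k2.isLt
      | exact con_SC hn k2.isLt | exact con_SD hn k2.isLt
  · fin_cases j2 <;> cases b1 <;>
    first
      | exact (con_PC hn k1.isLt).symm | exact (con_PD hn k1.isLt).symm
      | exact (con_TC hn k1.isLt).symm | exact (con_TD hn k1.isLt).symm
      | exact (con_SC hn k1.isLt).symm | exact (con_SD hn k1.isLt).symm
  · cases b1 <;> cases b2
    · have hne : k1.val ≠ k2.val := by
        intro he; exact h (by rw [show k1 = k2 from Fin.ext he])
      rcases lt_or_gt_of_ne hne with h' | h'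
      · exact con_CC hn k2.isLt h'
      · exact (con_CC hn k1.isLt h').symm
    · exact con_CD hn k1.isLt k2.isLt
    · exact (con_CD hn k2.isLt k1.isLt).symm
    · have hne : k1.val ≠ k2.val := by
        intro he; exact h (by rw [show k1 = k2 from Fin.ext he])
      rcases lt_or_gt_of_ne hne with h' | h'
      · exact con_DD hn k2.isLt h'
      · exact (con_DD hn k1.isLt h').symm

end Constr
namespace Constr
variable {n : ℕ}

/-- witness point of each piece -/
def wit (n : ℕ) : Lab n → (Fin n → Bool)
  | .inl j => if j.val = 0 then (fun _ => false)
      else if j.val = 1 then (fun i => decide (i.val + 1 = n)) else (fun i => decide (i.val = 0))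
  | .inr (k, b) => if b then (fun i => decide (i.val = k.val + 1))
      else (fun i => decide (k.val ≤ i.val ∧ i.val < k.val + 3))

lemma wit_inl0 : wit n (.inl 0) = fun _ => false := rfl
lemma wit_inl1 : wit n (.inl 1) = fun i => decide (i.val + 1 = n) := rfl
lemma wit_inl2 : wit n (.inl 2) = fun i => decide (i.val = 0) := rfl
lemma wit_C (k : Fin (n-2)) :
    wit n (.inr (k, false)) = fun i => decide (k.val ≤ i.val ∧ i.val < k.val + 3) := rfl
lemma wit_D (k : Fin (n-2)) : wit n (.inr (k, true)) = fun i => decide (i.val = k.val + 1) := rfl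

lemma wit_mem (l : Lab n) : wit n l ∈ (piece n l).points := by
  rcases l with j | ⟨k, bb⟩
  · fin_cases j
    · intro i b hb
      replace hb : some false = some b := hb
      simp at hb; subst hb; rfl
    · intro i b hb
      replace hb : Tp n i = some b := hb
      show (decide (i.val + 1 = n) : Bool) = b
      have hin := i.isLt
      by_cases h1 : i.val + 2 < n
      · rw [Tp_low h1] at hb; simp at hb; subst hb; simp; omega
      · by_cases h2 : i.val + 1 = n
        · rw [Tp_hi h2] at hb; simp at hb; subst hb; simp [h2]
        · rw [Tp_star (by omega)] at hb; simp at hb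
    · intro i b hb
      replace hb : Sp n i = some b := hb
      show (decide (i.val = 0) : Bool) = b
      by_cases h1 : i.val = 0
      · rw [Sp_zero h1] at hb; simp at hb; subst hb; simp [h1]
      · by_cases h2 : i.val = 1
        · rw [Sp_one h2] at hb; simp at hb; subst hb; simp; omega
        · rw [Sp_star (by omega)] at hb; simp at hb
  · cases bb
    · intro i b hb
      rw [piece_C] at hb
      rw [wit_C]
      by_cases h1 : i.val < k.val
      · rw [Cp_low h1] at hb; simp at hb; subst hb; simp; omega
      · by_cases h2 : i.val < k.val + 3
        · rw [Cp_mid (by omega) h2] at hb; simp at hb; subst hb; simp; omega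
        · rw [Cp_star (by omega)] at hb; simp at hb
    · intro i b hb
      rw [piece_D] at hb
      rw [wit_D]
      by_cases h1 : i.val < k.val
      · rw [Dp_low h1] at hb; simp at hb; subst hb; simp; omega
      · by_cases h2 : i.val = k.val
        · rw [Dp_starr h2] at hb; simp at hb
        · by_cases h3 : i.val = k.val + 1
          · rw [Dp_one h3] at hb; simp at hb; subst hb; simp [h3]
          · by_cases h4 : i.val = k.val + 2
            · rw [Dp_two h4] at hb; simp at hb; subst hb; simp; omega
            · rw [Dp_hi (by omega)] at hb; simp at hb

lemma piece_inj (hn : 3 ≤ n) : Function.Injective (piece n) := by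
  intro a b h
  by_contra hne
  exact (conflict hn hne).ne h

/-- the family -/
def fam (n : ℕ) : Finset (Subcube n) := Finset.univ.image (piece n)

lemma mem_fam {s : Subcube n} : s ∈ fam n ↔ ∃ l, piece n l = s := by
  simp [fam]

lemma fam_card (hn : 3 ≤ n) : (fam n).card = 2 * n - 1 := by
  rw [fam, Finset.card_image_of_injective _ (piece_inj hn), Finset.card_univ]
  simp [Fintype.card_sum]
  omega

lemma piece_disj (hn : 3 ≤ n) {l₁ l₂ : Lab n} (h : l₁ ≠ l₂) {x : Fin n → Bool}
    (h1 : x ∈ (piece n l₁).points) (h2 : x ∈ (piece n l₂).points) : False := by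
  obtain ⟨i, b, e1, e2⟩ := conflict hn h
  have := h1 i b e1
  have := h2 i (!b) e2
  cases b <;> simp_all

end Constr
namespace Constr
variable {n : ℕ}

lemma cover (hn : 3 ≤ n) (x : Fin n → Bool) : ∃ l : Lab n, x ∈ (piece n l).points := by
  classical
  by_cases hx : ∀ i, x i = false
  · refine ⟨.inl 0, fun i b hb => ?_⟩
    replace hb : some false = some b := hb
    simp at hb; subst hb; exact hx i
  · push_neg at hx
    obtain ⟨i0, hi0⟩ := hx
    have hQ : ∃ m : ℕ, ∃ h : m < n, x ⟨m, h⟩ = true :=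
      ⟨i0.val, i0.isLt, by rw [Fin.eta]; simpa using hi0⟩
    set j := Nat.find hQ with hjdef
    obtain ⟨hjn, hxj⟩ : ∃ h : j < n, x ⟨j, h⟩ = true := Nat.find_spec hQ
    have hlow : ∀ i : Fin n, i.val < j → x i = false := by
      intro i hi
      have h1 := Nat.find_min hQ (m := i.val) hi
      push_neg at h1
      have h2 := h1 i.isLt
      rw [Fin.eta] at h2
      simpa using h2
    by_cases hb1 : j + 1 = n
    · -- piece T
      refine ⟨.inl 1, fun i b hb => ?_⟩
      replace hb : Tp n i = some b := hb
      by_cases h1 : i.val + 2 < n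
      · rw [Tp_low h1] at hb; simp at hb; subst hb
        exact hlow i (by omega)
      · by_cases h2 : i.val + 1 = n
        · rw [Tp_hi h2] at hb; simp at hb; subst hb
          have he : i = ⟨j, hjn⟩ := by apply Fin.ext; simp; omega
          rw [he]; exact hxj
        · rw [Tp_star (by have := i.isLt; omega)] at hb; simp at hb
    · by_cases hb2 : j + 2 = n
      · cases hxl : x ⟨j+1, by omega⟩
        · -- piece D (j-1)
          refine ⟨.inr (⟨j-1, by omega⟩, true), fun i b hb => ?_⟩
          replace hb : Dp n (j-1) i = some b := hb
          have hij := i.isLt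
          have hj1 : 1 ≤ j := by omega
          by_cases h1 : i.val < j - 1
          · rw [Dp_low h1] at hb; simp at hb; subst hb
            exact hlow i (by omega)
          · by_cases h2 : i.val = j - 1
            · rw [Dp_starr h2] at hb; simp at hb
            · by_cases h3 : i.val = j
              · rw [Dp_one (by omega)] at hb; simp at hb; subst hb
                have he : i = ⟨j, hjn⟩ := by apply Fin.ext; simp; omega
                rw [he]; exact hxj
              · by_cases h4 : i.val = j + 1
                · rw [Dp_two (by omega)] at hb; simp at hb; subst hb
                  have he : i = ⟨j+1, by omega⟩ := by apply Fin.ext; simp; omega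
                  rw [he]; exact hxl
                · exact absurd hij (by omega)
        · -- piece T
          refine ⟨.inl 1, fun i b hb => ?_⟩
          replace hb : Tp n i = some b := hb
          by_cases h1 : i.val + 2 < n
          · rw [Tp_low h1] at hb; simp at hb; subst hb
            exact hlow i (by omega)
          · by_cases h2 : i.val + 1 = n
            · rw [Tp_hi h2] at hb; simp at hb; subst hb
              have he : i = ⟨j+1, by omega⟩ := by apply Fin.ext; simp; omega
              rw [he]; exact hxl
            · rw [Tp_star (by have := i.isLt; omega)] at hb; simp at hb
      · -- j + 3 ≤ n
        have hc : j + 3 ≤ n := by omega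
        cases hx1 : x ⟨j+1, by omega⟩
        · by_cases hj0 : j = 0
          · -- piece S
            refine ⟨.inl 2, fun i b hb => ?_⟩
            replace hb : Sp n i = some b := hb
            by_cases h1 : i.val = 0
            · rw [Sp_zero h1] at hb; simp at hb; subst hb
              have he : i = ⟨j, hjn⟩ := by apply Fin.ext; simp; omega
              rw [he]; exact hxj
            · by_cases h2 : i.val = 1
              · rw [Sp_one h2] at hb; simp at hb; subst hb
                have he : i = ⟨j+1, by omega⟩ := by apply Fin.ext; simp; omega
                rw [he]; exact hx1
              · rw [Sp_star (by omega)] at hb; simp at hb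
          · -- piece D (j-1)
            refine ⟨.inr (⟨j-1, by omega⟩, true), fun i b hb => ?_⟩
            replace hb : Dp n (j-1) i = some b := hb
            by_cases h1 : i.val < j - 1
            · rw [Dp_low h1] at hb; simp at hb; subst hb
              exact hlow i (by omega)
            · by_cases h2 : i.val = j - 1
              · rw [Dp_starr h2] at hb; simp at hb
              · by_cases h3 : i.val = j
                · rw [Dp_one (by omega)] at hb; simp at hb; subst hb
                  have he : i = ⟨j, hjn⟩ := by apply Fin.ext; simp; omega
                  rw [he]; exact hxj
                · by_cases h4 : i.val = j + 1
                  · rw [Dp_two (by omega)] at hb; simp at hb; subst hb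
                    have he : i = ⟨j+1, by omega⟩ := by apply Fin.ext; simp; omega
                    rw [he]; exact hx1
                  · rw [Dp_hi (by omega)] at hb; simp at hb
        · cases hx2 : x ⟨j+2, by omega⟩
          · -- piece D j
            refine ⟨.inr (⟨j, by omega⟩, true), fun i b hb => ?_⟩
            replace hb : Dp n j i = some b := hb
            by_cases h1 : i.val < j
            · rw [Dp_low h1] at hb; simp at hb; subst hb
              exact hlow i (by omega)
            · by_cases h2 : i.val = j
              · rw [Dp_starr h2] at hb; simp at hb
              · by_cases h3 : i.val = j + 1
                · rw [Dp_one h3] at hb; simp at hb; subst hb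
                  have he : i = ⟨j+1, by omega⟩ := by apply Fin.ext; simp; omega
                  rw [he]; exact hx1
                · by_cases h4 : i.val = j + 2
                  · rw [Dp_two h4] at hb; simp at hb; subst hb
                    have he : i = ⟨j+2, by omega⟩ := by apply Fin.ext; simp; omega
                    rw [he]; exact hx2
                  · rw [Dp_hi (by omega)] at hb; simp at hb
          · -- piece C j
            refine ⟨.inr (⟨j, by omega⟩, false), fun i b hb => ?_⟩
            replace hb : Cp n j i = some b := hb
            by_cases h1 : i.val < j
            · rw [Cp_low h1] at hb; simp at hb; subst hb
              exact hlow i (by omega)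
            · by_cases h2 : i.val < j + 3
              · rw [Cp_mid (by omega) h2] at hb; simp at hb; subst hb
                by_cases e1 : i.val = j
                · have he : i = ⟨j, hjn⟩ := by apply Fin.ext; simp; omega
                  rw [he]; exact hxj
                · by_cases e2 : i.val = j + 1
                  · have he : i = ⟨j+1, by omega⟩ := by apply Fin.ext; simp; omega
                    rw [he]; exact hx1
                  · have he : i = ⟨j+2, by omega⟩ := by apply Fin.ext; simp; omega
                    rw [he]; exact hx2
              · rw [Cp_star (by omega)] at hb; simp at hb

end Constr
namespace Constr
variable {n : ℕ}

lemma memP {x : Fin n → Bool} (h0 : ∀ i : Fin n, x i = false) : x ∈ (Pp n).points := by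
  intro i b hb
  replace hb : some false = some b := hb
  simp at hb; subst hb; exact h0 i

lemma memT {x : Fin n → Bool} (h0 : ∀ i : Fin n, i.val + 2 < n → x i = false)
    (h1 : ∀ i : Fin n, i.val + 1 = n → x i = true) : x ∈ (Tp n).points := by
  intro i b hb
  by_cases c1 : i.val + 2 < n
  · rw [Tp_low c1] at hb; simp at hb; subst hb; exact h0 i c1
  · by_cases c2 : i.val + 1 = n
    · rw [Tp_hi c2] at hb; simp at hb; subst hb; exact h1 i c2
    · rw [Tp_star (by have := i.isLt; omega)] at hb; simp at hb

lemma memS {x : Fin n → Bool} (h0 : ∀ i : Fin n, i.val = 0 → x i = true)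
    (h1 : ∀ i : Fin n, i.val = 1 → x i = false) : x ∈ (Sp n).points := by
  intro i b hb
  by_cases c1 : i.val = 0
  · rw [Sp_zero c1] at hb; simp at hb; subst hb; exact h0 i c1
  · by_cases c2 : i.val = 1
    · rw [Sp_one c2] at hb; simp at hb; subst hb; exact h1 i c2
    · rw [Sp_star (by omega)] at hb; simp at hb

lemma memC {k : ℕ} {x : Fin n → Bool} (h0 : ∀ i : Fin n, i.val < k → x i = false)
    (h1 : ∀ i : Fin n, k ≤ i.val → i.val < k + 3 → x i = true) : x ∈ (Cp n k).points := by
  intro i b hb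
  by_cases c1 : i.val < k
  · rw [Cp_low c1] at hb; simp at hb; subst hb; exact h0 i c1
  · by_cases c2 : i.val < k + 3
    · rw [Cp_mid (by omega) c2] at hb; simp at hb; subst hb; exact h1 i (by omega) c2
    · rw [Cp_star (by omega)] at hb; simp at hb

lemma memD {k : ℕ} {x : Fin n → Bool} (h0 : ∀ i : Fin n, i.val < k → x i = false)
    (h1 : ∀ i : Fin n, i.val = k + 1 → x i = true)
    (h2 : ∀ i : Fin n, i.val = k + 2 → x i = false) : x ∈ (Dp n k).points := by
  intro i b hb
  by_cases c1 : i.val < k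
  · rw [Dp_low c1] at hb; simp at hb; subst hb; exact h0 i c1
  · by_cases c2 : i.val = k
    · rw [Dp_starr c2] at hb; simp at hb
    · by_cases c3 : i.val = k + 1
      · rw [Dp_one c3] at hb; simp at hb; subst hb; exact h1 i c3
      · by_cases c4 : i.val = k + 2
        · rw [Dp_two c4] at hb; simp at hb; subst hb; exact h2 i c4
        · rw [Dp_hi (by omega)] at hb; simp at hb

lemma invT_true {i : Fin n} (h : Tp n i = some true) : i.val + 1 = n := by
  by_cases c1 : i.val + 2 < n
  · rw [Tp_low c1] at h; simp at h
  · by_cases c2 : i.val + 1 = n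
    · exact c2
    · rw [Tp_star (by have := i.isLt; omega)] at h; simp at h

lemma invT_false {i : Fin n} (h : Tp n i = some false) : i.val + 2 < n := by
  by_cases c1 : i.val + 2 < n
  · exact c1
  · by_cases c2 : i.val + 1 = n
    · rw [Tp_hi c2] at h; simp at h
    · rw [Tp_star (by have := i.isLt; omega)] at h; simp at h

lemma invS_true {i : Fin n} (h : Sp n i = some true) : i.val = 0 := by
  by_cases c1 : i.val = 0
  · exact c1
  · by_cases c2 : i.val = 1
    · rw [Sp_one c2] at h; simp at h
    · rw [Sp_star (by omega)] at h; simp at h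

lemma invS_false {i : Fin n} (h : Sp n i = some false) : i.val = 1 := by
  by_cases c1 : i.val = 0
  · rw [Sp_zero c1] at h; simp at h
  · by_cases c2 : i.val = 1
    · exact c2
    · rw [Sp_star (by omega)] at h; simp at h

lemma invC_true {k : ℕ} {i : Fin n} (h : Cp n k i = some true) : k ≤ i.val ∧ i.val < k + 3 := by
  by_cases c1 : i.val < k
  · rw [Cp_low c1] at h; simp at h
  · by_cases c2 : i.val < k + 3
    · exact ⟨by omega, c2⟩
    · rw [Cp_star (by omega)] at h; simp at h

lemma invC_false {k : ℕ} {i : Fin n} (h : Cp n k i = some false) : i.val < k := by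
  by_cases c1 : i.val < k
  · exact c1
  · by_cases c2 : i.val < k + 3
    · rw [Cp_mid (by omega) c2] at h; simp at h
    · rw [Cp_star (by omega)] at h; simp at h

lemma invD_true {k : ℕ} {i : Fin n} (h : Dp n k i = some true) : i.val = k + 1 := by
  by_cases c1 : i.val < k
  · rw [Dp_low c1] at h; simp at h
  · by_cases c2 : i.val = k
    · rw [Dp_starr c2] at h; simp at h
    · by_cases c3 : i.val = k + 1
      · exact c3
      · by_cases c4 : i.val = k + 2
        · rw [Dp_two c4] at h; simp at h
        · rw [Dp_hi (by omega)] at h; simp at h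

lemma invD_false {k : ℕ} {i : Fin n} (h : Dp n k i = some false) : i.val < k ∨ i.val = k + 2 := by
  by_cases c1 : i.val < k
  · exact Or.inl c1
  · by_cases c2 : i.val = k
    · rw [Dp_starr c2] at h; simp at h
    · by_cases c3 : i.val = k + 1
      · rw [Dp_one c3] at h; simp at h
      · by_cases c4 : i.val = k + 2
        · exact Or.inr c4
        · rw [Dp_hi (by omega)] at h; simp at h

lemma none_of {u s : Subcube n} {i : Fin n} (h : ∀ b, u i = some b → s i = some b)
    (hs : s i = none) : u i = none := by
  cases hui : u i with
  | none => rfl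
  | some c => have := h c hui; rw [hs] at this; cases this

lemma refines {s u : Subcube n} {y : Fin n → Bool} (hy : y ∈ s.points)
    (hsub : s.points ⊆ u.points) : ∀ (i : Fin n) (b : Bool), u i = some b → s i = some b := by
  intro i b hb
  have hyi : y i = b := hsub hy i b hb
  cases hs : s i with
  | some c =>
    have h3 : y i = c := hy i c hs
    rw [h3] at hyi
    rw [hyi]
  | none =>
    exfalso
    have hy' : Function.update y i (!(y i)) ∈ s.points := by
      intro i' b' hb'
      by_cases hii : i' = i
      · subst hii; rw [hs] at hb'; cases hb'
      · rw [Function.update_of_ne hii]; exact hy i' b' hb'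
    have h2 := hsub hy' i b hb
    rw [Function.update_self, hyi] at h2
    cases b <;> simp at h2

end Constr
namespace Constr
variable {n : ℕ}

theorem fam_irred (hn : 3 ≤ n) : IsIrreduciblePartition (fam n) := by
  rintro ⟨G, hGF, hG1, hG2, u, hU⟩
  classical
  have hsub : ∀ s ∈ G, Subcube.points s ⊆ Subcube.points u := by
    intro s hs
    rw [← hU]
    exact Set.subset_biUnion_of_mem hs
  have hmemG : ∀ y, y ∈ Subcube.points u → ∀ q : Lab n,
      y ∈ (piece n q).points → piece n q ∈ G := by
    intro y hy q hq
    have hy' : y ∈ ⋃ s ∈ G, Subcube.points s := by rw [hU]; exact hy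
    simp only [Set.mem_iUnion] at hy'
    obtain ⟨s, hsG, hys⟩ := hy'
    obtain ⟨l, rfl⟩ := mem_fam.mp (hGF hsG)
    by_cases he : l = q
    · subst he; exact hsG
    · exact absurd hq (fun hq' => piece_disj hn he hys hq')
  have K : ∀ y, y ∈ Subcube.points u → ∀ q : Lab n, y ∈ (piece n q).points →
      ∀ (i : Fin n) (b : Bool), u i = some b → piece n q i = some b := by
    intro y hy q hq
    exact refines hq (hsub _ (hmemG y hy q hq))
  have hfin : ∀ l₀ : Lab n, u = piece n l₀ → False := by
    intro l₀ hul
    have hall : ∀ s ∈ G, s = piece n l₀ := by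
      intro s hs
      obtain ⟨l, rfl⟩ := mem_fam.mp (hGF hs)
      have hwu : wit n l ∈ Subcube.points u := hsub _ hs (wit_mem l)
      have hr := K (wit n l) hwu l (wit_mem l)
      by_cases he : l = l₀
      · rw [he]
      · obtain ⟨i, b, e1, e2⟩ := conflict hn (show l₀ ≠ l from fun h => he h.symm)
        have hcb := hr i b (by rw [hul]; exact e1)
        rw [e2] at hcb
        cases b <;> simp at hcb
    have hcard : G.card ≤ 1 := Finset.card_le_one.mpr
      (fun a ha b hb => by rw [hall a ha, hall b hb])
    omega
  have E : ∃ (i : Fin n) (b : Bool), u i = some b := by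
    by_contra hE
    push_neg at hE
    have huniv : ∀ y : Fin n → Bool, y ∈ Subcube.points u := by
      intro y i b hb; exact absurd hb (hE i b)
    have hFG : fam n ⊆ G := by
      intro s hsF
      obtain ⟨l, rfl⟩ := mem_fam.mp hsF
      exact hmemG (wit n l) (huniv _) l (wit_mem l)
    have h1 := Finset.card_le_card hFG
    have h2 := Finset.card_le_card hGF
    omega
  set x0 : Fin n → Bool := fun i => (u i).getD false with hx0def
  have hx0u : x0 ∈ Subcube.points u := by intro i b hb; simp [hx0def, hb]
  have hx0t : ∀ i : Fin n, x0 i = true ↔ u i = some true := by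
    intro i
    cases h : u i with
    | none => simp [hx0def, h]
    | some c => cases c <;> simp [hx0def, h]
  have hx0f : ∀ i : Fin n, ¬ u i = some true → x0 i = false := by
    intro i h
    cases hxi : x0 i
    · rfl
    · exact absurd ((hx0t i).mp hxi) h
  have mem_aug : ∀ (c : ℕ) (hc : c < n), u ⟨c, hc⟩ = none →
      (fun i : Fin n => (decide (i.val = c) || x0 i)) ∈ Subcube.points u := by
    intro c hc hnone i b hb
    cases b
    · have h1 : x0 i = false := by simp [hx0def, hb]
      have h2 : ¬ i.val = c := by
        intro h
        have he : i = ⟨c, hc⟩ := Fin.ext h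
        rw [he, hnone] at hb; cases hb
      simp [h1, h2]
    · have h1 : x0 i = true := (hx0t i).mpr hb
      simp [h1]
  by_cases hA : ∃ i : Fin n, u i = some true
  · -- some coordinate of u is fixed to 1
    obtain ⟨ia, hia⟩ := hA
    have hQ : ∃ m : ℕ, ∃ h : m < n, u ⟨m, h⟩ = some true :=
      ⟨ia.val, ia.isLt, by rw [Fin.eta]; exact hia⟩
    set j := Nat.find hQ with hjdef
    obtain ⟨hjn, huj⟩ : ∃ h : j < n, u ⟨j, h⟩ = some true := Nat.find_spec hQ
    have hlowA : ∀ i : Fin n, i.val < j → ¬ u i = some true := by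
      intro i hi hcon
      exact Nat.find_min hQ hi ⟨i.isLt, by rw [Fin.eta]; exact hcon⟩
    by_cases hb1 : j + 1 = n
    · -- A1 : j = n-1, refine through T
      have hTmem : x0 ∈ (Tp n).points := memT
        (fun i hi => hx0f i (hlowA i (by omega)))
        (fun i hi => by
          rw [hx0t]
          have he : i = ⟨j, hjn⟩ := Fin.ext (by simp only [Fin.val_mk]; omega)
          rw [he]; exact huj)
      have hT : ∀ (i : Fin n) (b : Bool), u i = some b → Tp n i = some b :=
        K x0 hx0u (.inl 1) hTmem
      have hAset : ∀ i : Fin n, u i = some true → i.val = j := by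
        intro i hi
        have h9 := invT_true (hT i true hi)
        omega
      by_cases hcex : ∃ i : Fin n, i.val + 2 < n ∧ u i = none
      · obtain ⟨c, hc2, hcn⟩ := hcex
        have hy := mem_aug c.val c.isLt (by rw [Fin.eta]; exact hcn)
        by_cases hc0 : c.val = 0
        · have hSm : (fun i : Fin n => (decide (i.val = c.val) || x0 i)) ∈ (Sp n).points := by
            apply memS
            · intro i hi
              simp only [Bool.or_eq_true, decide_eq_true_eq]
              exact Or.inl (by omega)
            · intro i hi
              simp only [Bool.or_eq_false_iff, decide_eq_false_iff_not]
              exact ⟨by omega, hx0f i (fun h => by have := hAset i h; omega)⟩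
          have hcon : Sp n ⟨j, hjn⟩ = some true := K _ hy (.inl 2) hSm ⟨j, hjn⟩ true huj
          have h9 := invS_true hcon
          simp only [Fin.val_mk] at h9
          omega
        · have hDm : (fun i : Fin n => (decide (i.val = c.val) || x0 i)) ∈
              (Dp n (c.val - 1)).points := by
            apply memD
            · intro i hi
              simp only [Bool.or_eq_false_iff, decide_eq_false_iff_not]
              exact ⟨by omega, hx0f i (fun h => by have := hAset i h; omega)⟩
            · intro i hi
              simp only [Bool.or_eq_true, decide_eq_true_eq]
              exact Or.inl (by omega)
            · intro i hi
              simp only [Bool.or_eq_false_iff, decide_eq_false_iff_not]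
              exact ⟨by omega, hx0f i (fun h => by have := hAset i h; omega)⟩
          have hcon : Dp n (c.val - 1) ⟨j, hjn⟩ = some true := K _ hy (.inr (⟨c.val - 1, by omega⟩, true)) hDm ⟨j, hjn⟩ true huj
          have h9 := invD_true hcon
          simp only [Fin.val_mk] at h9
          omega
      · push_neg at hcex
        apply hfin (.inl 1)
        funext i
        show u i = Tp n i
        by_cases h1 : i.val + 2 < n
        · rw [Tp_low h1]
          cases hui : u i with
          | none => exact absurd hui (hcex i h1)
          | some cc =>
            cases cc with
            | false => rfl
            | true => exact absurd hui (hlowA i (by omega))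
        · by_cases h2 : i.val + 1 = n
          · rw [Tp_hi h2]
            have he : i = ⟨j, hjn⟩ := Fin.ext (by simp only [Fin.val_mk]; omega)
            rw [he]; exact huj
          · rw [Tp_star (by have := i.isLt; omega)]
            exact none_of (fun b hb => hT i b hb) (Tp_star (by have := i.isLt; omega))
    · have hj1n : j + 1 < n := by omega
      by_cases hb2 : u ⟨j+1, hj1n⟩ = some true
      · by_cases hb3 : j + 2 = n
        · -- x0 lies in T, but T has a star at j = n-2
          have hTmem : x0 ∈ (Tp n).points := memT
            (fun i hi => hx0f i (hlowA i (by omega)))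
            (fun i hi => by
              rw [hx0t]
              have he : i = ⟨j+1, hj1n⟩ := Fin.ext (by simp only [Fin.val_mk]; omega)
              rw [he]; exact hb2)
          have hcon : Tp n ⟨j, hjn⟩ = some true := K x0 hx0u (.inl 1) hTmem ⟨j, hjn⟩ true huj
          have h9 := invT_true hcon
          simp only [Fin.val_mk] at h9
          omega
        · have hj3 : j + 3 ≤ n := by omega
          by_cases hb4 : u ⟨j+2, by omega⟩ = some true
          · -- A2a : refine through C j
            have hCm : x0 ∈ (Cp n j).points := memC
              (fun i hi => hx0f i (hlowA i hi))
              (fun i hi1 hi2 => by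
                rw [hx0t]
                rcases (by omega : i.val = j ∨ i.val = j + 1 ∨ i.val = j + 2) with h | h | h
                · have he : i = ⟨j, hjn⟩ := Fin.ext h; rw [he]; exact huj
                · have he : i = ⟨j+1, hj1n⟩ := Fin.ext h; rw [he]; exact hb2
                · have he : i = ⟨j+2, by omega⟩ := Fin.ext h; rw [he]; exact hb4)
            have hC : ∀ (i : Fin n) (b : Bool), u i = some b → Cp n j i = some b :=
              K x0 hx0u (.inr (⟨j, by omega⟩, false)) hCm
            have hAset : ∀ i : Fin n, u i = some true → j ≤ i.val ∧ i.val < j + 3 :=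
              fun i hi => invC_true (hC i true hi)
            by_cases hcex : ∃ i : Fin n, i.val < j ∧ u i = none
            · obtain ⟨c, hcj, hcn⟩ := hcex
              have hy := mem_aug c.val c.isLt (by rw [Fin.eta]; exact hcn)
              by_cases hcc : c.val + 1 = j
              · have hCm2 : (fun i : Fin n => (decide (i.val = c.val) || x0 i)) ∈
                    (Cp n c.val).points := by
                  apply memC
                  · intro i hi
                    simp only [Bool.or_eq_false_iff, decide_eq_false_iff_not]
                    exact ⟨by omega, hx0f i (fun h => by have := hAset i h; omega)⟩
                  · intro i hi1 hi2
                    simp only [Bool.or_eq_true, decide_eq_true_eq]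
                    rcases (by omega : i.val = c.val ∨ i.val = j ∨ i.val = j + 1) with h | h | h
                    · exact Or.inl h
                    · refine Or.inr ((hx0t i).mpr ?_)
                      have he : i = ⟨j, hjn⟩ := Fin.ext h; rw [he]; exact huj
                    · refine Or.inr ((hx0t i).mpr ?_)
                      have he : i = ⟨j+1, hj1n⟩ := Fin.ext h; rw [he]; exact hb2
                have hcon : Cp n c.val ⟨j+2, by omega⟩ = some true := K _ hy (.inr (⟨c.val, by omega⟩, false)) hCm2 ⟨j+2, by omega⟩ true hb4
                have h9 := invC_true hcon
                simp only [Fin.val_mk] at h9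
                omega
              · by_cases hc0 : c.val = 0
                · have hSm : (fun i : Fin n => (decide (i.val = c.val) || x0 i)) ∈
                      (Sp n).points := by
                    apply memS
                    · intro i hi
                      simp only [Bool.or_eq_true, decide_eq_true_eq]
                      exact Or.inl (by omega)
                    · intro i hi
                      simp only [Bool.or_eq_false_iff, decide_eq_false_iff_not]
                      exact ⟨by omega, hx0f i (fun h => by have := hAset i h; omega)⟩
                  have hcon : Sp n ⟨j, hjn⟩ = some true := K _ hy (.inl 2) hSm ⟨j, hjn⟩ true huj
                  have h9 := invS_true hcon
                  simp only [Fin.val_mk] at h9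
                  omega
                · have hDm : (fun i : Fin n => (decide (i.val = c.val) || x0 i)) ∈
                      (Dp n (c.val - 1)).points := by
                    apply memD
                    · intro i hi
                      simp only [Bool.or_eq_false_iff, decide_eq_false_iff_not]
                      exact ⟨by omega, hx0f i (fun h => by have := hAset i h; omega)⟩
                    · intro i hi
                      simp only [Bool.or_eq_true, decide_eq_true_eq]
                      exact Or.inl (by omega)
                    · intro i hi
                      simp only [Bool.or_eq_false_iff, decide_eq_false_iff_not]
                      exact ⟨by omega, hx0f i (fun h => by have := hAset i h; omega)⟩
                  have hcon : Dp n (c.val - 1) ⟨j, hjn⟩ = some true := K _ hy (.inr (⟨c.val - 1, by omega⟩, true)) hDm ⟨j, hjn⟩ true huj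
                  have h9 := invD_true hcon
                  simp only [Fin.val_mk] at h9
                  omega
            · push_neg at hcex
              apply hfin (.inr (⟨j, by omega⟩, false))
              funext i
              show u i = Cp n j i
              by_cases h1 : i.val < j
              · rw [Cp_low h1]
                cases hui : u i with
                | none => exact absurd hui (hcex i h1)
                | some cc =>
                  cases cc with
                  | false => rfl
                  | true => exact absurd hui (hlowA i h1)
              · by_cases h2 : i.val < j + 3
                · rw [Cp_mid (by omega) h2]
                  rcases (by omega : i.val = j ∨ i.val = j + 1 ∨ i.val = j + 2) with h | h | h
                  · have he : i = ⟨j, hjn⟩ := Fin.ext h; rw [he]; exact huj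
                  · have he : i = ⟨j+1, hj1n⟩ := Fin.ext h; rw [he]; exact hb2
                  · have he : i = ⟨j+2, by omega⟩ := Fin.ext h; rw [he]; exact hb4
                · rw [Cp_star (by omega)]
                  exact none_of (fun b hb => hC i b hb) (Cp_star (by omega))
          · -- A2b : x0 lies in D j which has a star at j
            have hDm : x0 ∈ (Dp n j).points := memD
              (fun i hi => hx0f i (hlowA i hi))
              (fun i hi => by
                rw [hx0t]
                have he : i = ⟨j+1, hj1n⟩ := Fin.ext hi
                rw [he]; exact hb2)
              (fun i hi => hx0f i (fun h => by
                have he : i = ⟨j+2, by omega⟩ := Fin.ext hi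
                rw [he] at h; exact hb4 h))
            have hcon : Dp n j ⟨j, hjn⟩ = some true := K x0 hx0u (.inr (⟨j, by omega⟩, true)) hDm ⟨j, hjn⟩ true huj
            have h9 := invD_true hcon
            simp only [Fin.val_mk] at h9
            omega
      · -- A3 : u (j+1) is not fixed to 1
        by_cases hj0 : j = 0
        · -- refine through S
          have hSmem : x0 ∈ (Sp n).points := memS
            (fun i hi => by
              rw [hx0t]
              have he : i = ⟨j, hjn⟩ := Fin.ext (by simp only [Fin.val_mk]; omega)
              rw [he]; exact huj)
            (fun i hi => hx0f i (fun h => by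
              have he : i = ⟨j+1, hj1n⟩ := Fin.ext (by simp only [Fin.val_mk]; omega)
              rw [he] at h; exact hb2 h))
          have hS : ∀ (i : Fin n) (b : Bool), u i = some b → Sp n i = some b :=
            K x0 hx0u (.inl 2) hSmem
          have hAset : ∀ i : Fin n, u i = some true → i.val = 0 :=
            fun i hi => invS_true (hS i true hi)
          by_cases hc1 : u ⟨1, by omega⟩ = none
          · have hy := mem_aug 1 (by omega) hc1
            have hDm : (fun i : Fin n => (decide (i.val = 1) || x0 i)) ∈ (Dp n 0).points := by
              apply memD
              · intro i hi
                exact absurd hi (by omega)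
              · intro i hi
                simp only [Bool.or_eq_true, decide_eq_true_eq]
                exact Or.inl (by omega)
              · intro i hi
                simp only [Bool.or_eq_false_iff, decide_eq_false_iff_not]
                exact ⟨by omega, hx0f i (fun h => by have := hAset i h; omega)⟩
            have hcon : Dp n 0 ⟨j, hjn⟩ = some true := K _ hy (.inr (⟨0, by omega⟩, true)) hDm ⟨j, hjn⟩ true huj
            have h9 := invD_true hcon
            simp only [Fin.val_mk] at h9
            omega
          · apply hfin (.inl 2)
            funext i
            show u i = Sp n i
            by_cases h1 : i.val = 0
            · rw [Sp_zero h1]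
              have he : i = ⟨j, hjn⟩ := Fin.ext (by simp only [Fin.val_mk]; omega)
              rw [he]; exact huj
            · by_cases h2 : i.val = 1
              · rw [Sp_one h2]
                cases hui : u i with
                | none =>
                  exfalso
                  have he : i = ⟨1, by omega⟩ := Fin.ext h2
                  rw [he] at hui
                  exact hc1 hui
                | some cc =>
                  cases cc with
                  | false => rfl
                  | true => exact absurd (hAset i hui) (by omega)
              · rw [Sp_star (by omega)]
                exact none_of (fun b hb => hS i b hb) (Sp_star (by omega))
        · -- A3b : refine through D (j-1)
          have hDmem : x0 ∈ (Dp n (j-1)).points := memD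
            (fun i hi => hx0f i (hlowA i (by omega)))
            (fun i hi => by
              rw [hx0t]
              have he : i = ⟨j, hjn⟩ := Fin.ext (by simp only [Fin.val_mk]; omega)
              rw [he]; exact huj)
            (fun i hi => hx0f i (fun h => by
              have he : i = ⟨j+1, hj1n⟩ := Fin.ext (by simp only [Fin.val_mk]; omega)
              rw [he] at h; exact hb2 h))
          have hD : ∀ (i : Fin n) (b : Bool), u i = some b → Dp n (j-1) i = some b :=
            K x0 hx0u (.inr (⟨j-1, by omega⟩, true)) hDmem
          have hAset : ∀ i : Fin n, u i = some true → i.val = j :=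
            fun i hi => by have := invD_true (hD i true hi); omega
          by_cases hcex : ∃ i : Fin n, (i.val < j - 1 ∨ i.val = j + 1) ∧ u i = none
          · obtain ⟨c, hcor, hcn⟩ := hcex
            have hy := mem_aug c.val c.isLt (by rw [Fin.eta]; exact hcn)
            rcases hcor with hc | hc
            · by_cases hc0 : c.val = 0
              · have hSm : (fun i : Fin n => (decide (i.val = c.val) || x0 i)) ∈
                    (Sp n).points := by
                  apply memS
                  · intro i hi
                    simp only [Bool.or_eq_true, decide_eq_true_eq]
                    exact Or.inl (by omega)
                  · intro i hi
                    simp only [Bool.or_eq_false_iff, decide_eq_false_iff_not]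
                    exact ⟨by omega, hx0f i (fun h => by have := hAset i h; omega)⟩
                have hcon : Sp n ⟨j, hjn⟩ = some true := K _ hy (.inl 2) hSm ⟨j, hjn⟩ true huj
                have h9 := invS_true hcon
                simp only [Fin.val_mk] at h9
                omega
              · have hDm2 : (fun i : Fin n => (decide (i.val = c.val) || x0 i)) ∈
                    (Dp n (c.val - 1)).points := by
                  apply memD
                  · intro i hi
                    simp only [Bool.or_eq_false_iff, decide_eq_false_iff_not]
                    exact ⟨by omega, hx0f i (fun h => by have := hAset i h; omega)⟩
                  · intro i hi
                    simp only [Bool.or_eq_true, decide_eq_true_eq]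
                    exact Or.inl (by omega)
                  · intro i hi
                    simp only [Bool.or_eq_false_iff, decide_eq_false_iff_not]
                    exact ⟨by omega, hx0f i (fun h => by have := hAset i h; omega)⟩
                have hcon : Dp n (c.val - 1) ⟨j, hjn⟩ = some true := K _ hy (.inr (⟨c.val - 1, by omega⟩, true)) hDm2 ⟨j, hjn⟩ true huj
                have h9 := invD_true hcon
                simp only [Fin.val_mk] at h9
                omega
            · by_cases hjn2 : j + 2 = n
              · have hTm : (fun i : Fin n => (decide (i.val = c.val) || x0 i)) ∈
                    (Tp n).points := by
                  apply memT
                  · intro i hi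
                    simp only [Bool.or_eq_false_iff, decide_eq_false_iff_not]
                    exact ⟨by omega, hx0f i (hlowA i (by omega))⟩
                  · intro i hi
                    simp only [Bool.or_eq_true, decide_eq_true_eq]
                    exact Or.inl (by omega)
                have hcon : Tp n ⟨j, hjn⟩ = some true := K _ hy (.inl 1) hTm ⟨j, hjn⟩ true huj
                have h9 := invT_true hcon
                simp only [Fin.val_mk] at h9
                omega
              · have hDm2 : (fun i : Fin n => (decide (i.val = c.val) || x0 i)) ∈
                    (Dp n j).points := by
                  apply memD
                  · intro i hi
                    simp only [Bool.or_eq_false_iff, decide_eq_false_iff_not]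
                    exact ⟨by omega, hx0f i (hlowA i hi)⟩
                  · intro i hi
                    simp only [Bool.or_eq_true, decide_eq_true_eq]
                    exact Or.inl (by omega)
                  · intro i hi
                    simp only [Bool.or_eq_false_iff, decide_eq_false_iff_not]
                    exact ⟨by omega, hx0f i (fun h => by have := hAset i h; omega)⟩
                have hcon : Dp n j ⟨j, hjn⟩ = some true := K _ hy (.inr (⟨j, by omega⟩, true)) hDm2 ⟨j, hjn⟩ true huj
                have h9 := invD_true hcon
                simp only [Fin.val_mk] at h9
                omega
          · push_neg at hcex
            apply hfin (.inr (⟨j-1, by omega⟩, true))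
            funext i
            show u i = Dp n (j-1) i
            by_cases h1 : i.val < j - 1
            · rw [Dp_low h1]
              cases hui : u i with
              | none => exact absurd hui (hcex i (Or.inl h1))
              | some cc =>
                cases cc with
                | false => rfl
                | true => exact absurd hui (hlowA i (by omega))
            · by_cases h2 : i.val = j - 1
              · rw [Dp_starr h2]
                exact none_of (fun b hb => hD i b hb) (Dp_starr h2)
              · by_cases h3 : i.val = j
                · rw [Dp_one (by omega)]
                  have he : i = ⟨j, hjn⟩ := Fin.ext h3
                  rw [he]; exact huj
                · by_cases h4 : i.val = j + 1
                  · rw [Dp_two (by omega)]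
                    cases hui : u i with
                    | none => exact absurd hui (hcex i (Or.inr h4))
                    | some cc =>
                      cases cc with
                      | false => rfl
                      | true =>
                        exfalso
                        have he : i = ⟨j+1, hj1n⟩ := Fin.ext h4
                        rw [he] at hui
                        exact hb2 hui
                  · rw [Dp_hi (by omega)]
                    exact none_of (fun b hb => hD i b hb) (Dp_hi (by omega))
  · -- Case B : no coordinate fixed to 1
    push_neg at hA
    by_cases hcex : ∃ m : ℕ, ∃ h : m < n, u ⟨m, h⟩ = none
    · set c := Nat.find hcex with hcdef
      obtain ⟨hcn, hcnone⟩ : ∃ h : c < n, u ⟨c, h⟩ = none := Nat.find_spec hcex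
      have hlowB : ∀ i : Fin n, i.val < c → u i = some false := by
        intro i hi
        have h1 : ¬ ∃ h : i.val < n, u ⟨i.val, h⟩ = none := Nat.find_min hcex hi
        push_neg at h1
        have h2 := h1 i.isLt
        rw [Fin.eta] at h2
        cases hui : u i with
        | none => exact absurd hui h2
        | some cc =>
          cases cc with
          | false => rfl
          | true => exact absurd hui (hA i)
      have hy := mem_aug c hcn hcnone
      by_cases hc1 : c + 1 = n
      · have hTm : (fun i : Fin n => (decide (i.val = c) || x0 i)) ∈ (Tp n).points := by
          apply memT
          · intro i hi
            simp only [Bool.or_eq_false_iff, decide_eq_false_iff_not]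
            exact ⟨by omega, hx0f i (hA i)⟩
          · intro i hi
            simp only [Bool.or_eq_true, decide_eq_true_eq]
            exact Or.inl (by omega)
        have hcon : Tp n ⟨n-2, by omega⟩ = some false := K _ hy (.inl 1) hTm ⟨n-2, by omega⟩ false
          (hlowB ⟨n-2, by omega⟩ (by simp only [Fin.val_mk]; omega))
        have h9 := invT_false hcon
        simp only [Fin.val_mk] at h9
        omega
      · by_cases hc0 : c = 0
        · have hSm : (fun i : Fin n => (decide (i.val = c) || x0 i)) ∈ (Sp n).points := by
            apply memS
            · intro i hi
              simp only [Bool.or_eq_true, decide_eq_true_eq]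
              exact Or.inl (by omega)
            · intro i hi
              simp only [Bool.or_eq_false_iff, decide_eq_false_iff_not]
              exact ⟨by omega, hx0f i (hA i)⟩
          have hS : ∀ (i : Fin n) (b : Bool), u i = some b → Sp n i = some b :=
            K _ hy (.inl 2) hSm
          have hBone : ∀ i : Fin n, u i = some false → i.val = 1 :=
            fun i hi => invS_false (hS i false hi)
          obtain ⟨i0, b0, hib⟩ := E
          have hb0 : b0 = false := by
            cases b0 with
            | false => rfl
            | true => exact absurd hib (hA i0)
          subst hb0
          have hu1 : u ⟨1, by omega⟩ = some false := by
            have he : i0 = ⟨1, by omega⟩ := Fin.ext (hBone i0 hib)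
            rw [← he]; exact hib
          have hu2 : u ⟨2, by omega⟩ = none := by
            cases hui : u ⟨2, by omega⟩ with
            | none => rfl
            | some cc =>
              cases cc with
              | false =>
                have h9 := hBone _ hui
                simp only [Fin.val_mk] at h9
                omega
              | true => exact absurd hui (hA _)
          have hy2 := mem_aug 2 (by omega) hu2
          by_cases h3 : 3 = n
          · have hTm : (fun i : Fin n => (decide (i.val = 2) || x0 i)) ∈ (Tp n).points := by
              apply memT
              · intro i hi
                simp only [Bool.or_eq_false_iff, decide_eq_false_iff_not]
                exact ⟨by omega, hx0f i (hA i)⟩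
              · intro i hi
                simp only [Bool.or_eq_true, decide_eq_true_eq]
                exact Or.inl (by omega)
            have hcon : Tp n ⟨1, by omega⟩ = some false := K _ hy2 (.inl 1) hTm ⟨1, by omega⟩ false hu1
            have h9 := invT_false hcon
            simp only [Fin.val_mk] at h9
            omega
          · have hDm : (fun i : Fin n => (decide (i.val = 2) || x0 i)) ∈ (Dp n 1).points := by
              apply memD
              · intro i hi
                simp only [Bool.or_eq_false_iff, decide_eq_false_iff_not]
                exact ⟨by omega, hx0f i (hA i)⟩
              · intro i hi
                simp only [Bool.or_eq_true, decide_eq_true_eq]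
                exact Or.inl (by omega)
              · intro i hi
                simp only [Bool.or_eq_false_iff, decide_eq_false_iff_not]
                exact ⟨by omega, hx0f i (hA i)⟩
            have hcon : Dp n 1 ⟨1, by omega⟩ = some false := K _ hy2 (.inr (⟨1, by omega⟩, true)) hDm ⟨1, by omega⟩ false hu1
            have h9 := invD_false hcon
            simp only [Fin.val_mk] at h9
            omega
        · have hDm : (fun i : Fin n => (decide (i.val = c) || x0 i)) ∈
              (Dp n (c - 1)).points := by
            apply memD
            · intro i hi
              simp only [Bool.or_eq_false_iff, decide_eq_false_iff_not]
              exact ⟨by omega, hx0f i (hA i)⟩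
            · intro i hi
              simp only [Bool.or_eq_true, decide_eq_true_eq]
              exact Or.inl (by omega)
            · intro i hi
              simp only [Bool.or_eq_false_iff, decide_eq_false_iff_not]
              exact ⟨by omega, hx0f i (hA i)⟩
          have hcon : Dp n (c - 1) ⟨c-1, by omega⟩ = some false := K _ hy (.inr (⟨c - 1, by omega⟩, true)) hDm ⟨c-1, by omega⟩ false
            (hlowB ⟨c-1, by omega⟩ (by simp only [Fin.val_mk]; omega))
          have h9 := invD_false hcon
          simp only [Fin.val_mk] at h9
          omega
    · push_neg at hcex
      apply hfin (.inl 0)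
      funext i
      show u i = some false
      cases hui : u i with
      | none =>
        exfalso
        have h2 := hcex i.val i.isLt
        rw [Fin.eta] at h2
        exact h2 hui
      | some cc =>
        cases cc with
        | false => rfl
        | true => exact absurd hui (hA i)

end Constr
namespace Constr
variable {n : ℕ}

theorem fam_partition (hn : 3 ≤ n) : IsSubcubePartition (fam n) := by
  constructor
  · intro s hs t ht hst
    obtain ⟨l1, rfl⟩ := mem_fam.mp hs
    obtain ⟨l2, rfl⟩ := mem_fam.mp ht
    have hne : l1 ≠ l2 := fun h => hst (by rw [h])
    rw [Set.disjoint_left]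
    intro x hx1 hx2
    exact piece_disj hn hne hx1 hx2
  · ext x
    simp only [Set.mem_iUnion, Set.mem_univ, iff_true]
    obtain ⟨l, hl⟩ := cover hn x
    exact ⟨piece n l, mem_fam.mpr ⟨l, rfl⟩, hl⟩

theorem fam_tight : IsTight (fam n) := by
  intro i
  refine ⟨piece n (.inl 0), mem_fam.mpr ⟨_, rfl⟩, ?_⟩
  show (some false : Option Bool) ≠ none
  simp

end Constr

/-- For every `n ≥ 3` there exists a tight irreducible subcube partition
of `{0,1}^n` of size `2n - 1`. -/
theorem exists_tight_irreducible_size_two_n_sub_one (n : ℕ) (hn : 3 ≤ n) :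
    ∃ F : Finset (Subcube n), IsSubcubePartition F ∧ IsTight F ∧
      IsIrreduciblePartition F ∧ F.card = 2 * n - 1 := by
  exact ⟨Constr.fam n, Constr.fam_partition hn, Constr.fam_tight, Constr.fam_irred hn,
    Constr.fam_card hn⟩
end

section
/- If s and t are an nfs-pair of subcubes of {0,1}^n and s', t' is their nfs-flip, then s ∪ t = s' ∪ t' as subsets of {0,1}^n. -/
/-- `IsNfs s t s' t'` says that `s, t` is an nfs-pair (differing exactly at positions
`i, j`, where `s i = b`, `t i = !b`, `s j = c`, `t j = *`) and `s', t'` is its nfs-flip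
(`s' i = *`, `s' j = c`, `t' i = !b`, `t' j = !c`, all other coordinates copied). -/
def IsNfs {n : ℕ} (s t s' t' : Subcube n) : Prop :=
  ∃ i j : Fin n, ∃ b c : Bool, i ≠ j ∧
    s i = some b ∧ t i = some (!b) ∧ s j = some c ∧ t j = none ∧
    s' i = none ∧ s' j = some c ∧ t' i = some (!b) ∧ t' j = some (!c) ∧
    (∀ k : Fin n, k ≠ i → k ≠ j → s k = t k ∧ s' k = s k ∧ t' k = s k)

/-- If `s, t` is an nfs-pair with nfs-flip `s', t'`, then
`s ∪ t = s' ∪ t'` as subsets of `{0,1}^n`. -/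
theorem nfs_flip_union {n : ℕ} (s t s' t' : Subcube n) (h : IsNfs s t s' t') :
    Subcube.points s ∪ Subcube.points t = Subcube.points s' ∪ Subcube.points t' := by
  obtain ⟨i, j, b, c, hij, hsi, hti, hsj, htj, hs'i, hs'j, ht'i, ht'j, hrest⟩ := h
  ext x
  simp only [Set.mem_union, Subcube.points, Set.mem_setOf_eq]
  constructor
  · rintro (hx | hx)
    · left
      intro k bk hk
      rcases eq_or_ne k i with rfl | hki
      · exact absurd hk (by rw [hs'i]; simp)
      rcases eq_or_ne k j with rfl | hkj
      · rw [hs'j] at hk; exact hx k bk (hsj ▸ hk)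
      · exact hx k bk ((hrest k hki hkj).2.1 ▸ hk)
    · by_cases hxj : x j = c
      · left
        intro k bk hk
        rcases eq_or_ne k i with rfl | hki
        · exact absurd hk (by rw [hs'i]; simp)
        rcases eq_or_ne k j with rfl | hkj
        · rw [hs'j] at hk; cases hk; exact hxj
        · exact hx k bk (((hrest k hki hkj).2.1.trans (hrest k hki hkj).1) ▸ hk)
      · right
        intro k bk hk
        rcases eq_or_ne k i with rfl | hki
        · rw [ht'i] at hk; exact hx k bk (hti ▸ hk)
        rcases eq_or_ne k j with rfl | hkj
        · rw [ht'j] at hk; cases hk; cases c <;> simp_all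
        · exact hx k bk (((hrest k hki hkj).2.2.trans (hrest k hki hkj).1) ▸ hk)
  · rintro (hx | hx)
    · by_cases hxi : x i = b
      · left
        intro k bk hk
        rcases eq_or_ne k i with rfl | hki
        · rw [hsi] at hk; cases hk; exact hxi
        rcases eq_or_ne k j with rfl | hkj
        · rw [hsj] at hk; exact hx k bk (hs'j ▸ hk)
        · exact hx k bk ((hrest k hki hkj).2.1.symm ▸ hk)
      · right
        intro k bk hk
        rcases eq_or_ne k i with rfl | hki
        · rw [hti] at hk; cases hk; cases b <;> simp_all
        rcases eq_or_ne k j with rfl | hkj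
        · exact absurd hk (by rw [htj]; simp)
        · exact hx k bk (((hrest k hki hkj).1.symm.trans (hrest k hki hkj).2.1.symm) ▸ hk)
    · right
      intro k bk hk
      rcases eq_or_ne k i with rfl | hki
      · rw [hti] at hk; exact hx k bk (ht'i ▸ hk)
      rcases eq_or_ne k j with rfl | hkj
      · exact absurd hk (by rw [htj]; simp)
      · exact hx k bk (((hrest k hki hkj).1.symm.trans (hrest k hki hkj).2.2.symm) ▸ hk)
end

section
/- Let s,t and s',t' be two pairs of disjoint subcubes of {0,1}^n with s ∪ t = s' ∪ t', such that the common union is not itself a subcube and {s,t} ≠ {s',t'}. Then, up to swapping within each pair, s,t is an nfs-pair and s',t' is its nfs-flip. -/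
namespace NfsHelpers

variable {n : ℕ}

lemma mem_points {s : Subcube n} {x : Fin n → Bool} :
    x ∈ s.points ↔ ∀ i : Fin n, ∀ b : Bool, s i = some b → x i = b := Iff.rfl

/-- A canonical point of a subcube. -/
def pick (s : Subcube n) : Fin n → Bool := fun i => (s i).getD false

lemma pick_mem (s : Subcube n) : pick s ∈ s.points := by
  intro i b h; simp [pick, h]

lemma forced {s : Subcube n} {k : Fin n} {a : Bool}
    (h : ∀ x ∈ s.points, x k = a) : s k = some a := by
  cases hk : s k with
  | none =>
      have hmem : Function.update (pick s) k (!a) ∈ s.points := by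
        intro i b hb
        rcases eq_or_ne i k with rfl | hik
        · rw [hk] at hb; cases hb
        · rw [Function.update_of_ne hik]; exact pick_mem s i b hb
      have h1 := h _ hmem
      simp at h1
  | some b =>
      have := h (pick s) (pick_mem s)
      simp only [pick, hk, Option.getD_some] at this
      rw [this]

lemma points_inj {s t : Subcube n} (h : s.points = t.points) : s = t := by
  funext k
  have h1 : ∀ a : Bool, s k = some a → t k = some a := by
    intro a ha
    exact forced (fun x hx => (h ▸ hx : x ∈ s.points) k a ha)
  have h2 : ∀ a : Bool, t k = some a → s k = some a := by
    intro a ha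
    exact forced (fun x hx => (h ▸ hx : x ∈ t.points) k a ha)
  cases hs : s k with
  | none =>
      cases ht : t k with
      | none => rfl
      | some a =>
          have := h2 a ht
          rw [hs] at this
          cases this
  | some a => exact (h1 a hs).symm

lemma exists_conflict {s t : Subcube n} (hs : Disjoint s.points t.points) :
    ∃ k : Fin n, ∃ b : Bool, s k = some b ∧ t k = some (!b) := by
  by_contra hc
  push_neg at hc
  set x : Fin n → Bool := fun i => match hi : s i with
    | some b => b
    | none => (t i).getD false with hxdef
  have hxs : x ∈ s.points := by
    intro i b hb
    simp only [hxdef]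
    split
    · next b' hb' => rw [hb'] at hb; cases hb; rfl
    · next hb' => rw [hb'] at hb; cases hb
  have hxt : x ∈ t.points := by
    intro i b hb
    simp only [hxdef]
    split
    · next b' hb' =>
        have := hc i b' hb'
        rw [hb] at this
        cases b <;> cases b' <;> simp_all
    · next hb' => simp [hb]
  exact Set.disjoint_left.mp hs hxs hxt

lemma slice {s t : Subcube n} {k : Fin n} {b : Bool}
    (hs : s k = some b) (ht : t k = some (!b)) :
    (s.points ∪ t.points) ∩ {x | x k = b} = s.points := by
  ext x
  constructor
  · rintro ⟨hx | hx, hxk⟩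
    · exact hx
    · exfalso
      have h1 := hx k (!b) ht
      have h2 : x k = b := hxk
      rw [h2] at h1
      simp at h1
  · intro hx
    exact ⟨Or.inl hx, hx k b hs⟩

lemma restrict_points {t : Subcube n} {j : Fin n} (hj : t j = none) (c : Bool) :
    Subcube.points (Function.update t j (some c)) = t.points ∩ {x | x j = c} := by
  ext x
  constructor
  · intro hx
    refine ⟨fun i b hb => ?_, hx j c (by simp)⟩
    rcases eq_or_ne i j with rfl | hij
    · rw [hj] at hb; cases hb
    · exact hx i b (by rwa [Function.update_of_ne hij])
  · rintro ⟨hx, hxj⟩ i b hb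
    rcases eq_or_ne i j with rfl | hij
    · rw [Function.update_self] at hb; cases hb; exact hxj
    · rw [Function.update_of_ne hij] at hb; exact hx i b hb

lemma sub_forced {u w : Subcube n} (h : u.points ⊆ w.points) {k : Fin n} {a : Bool}
    (hw : w k = some a) : u k = some a :=
  forced (fun x hx => h hx k a hw)

lemma split {w u v : Subcube n}
    (hw : w.points = u.points ∪ v.points)
    (huv : Disjoint u.points v.points) :
    ∃ k : Fin n, ∃ d : Bool, u k = some d ∧ v k = some (!d) ∧ w k = none ∧
      ∀ m, m ≠ k → u m = w m ∧ v m = w m := by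
  obtain ⟨k, d, hu, hv⟩ := exists_conflict huv
  have hsubu : u.points ⊆ w.points := hw ▸ Set.subset_union_left
  have hsubv : v.points ⊆ w.points := hw ▸ Set.subset_union_right
  have hwk : w k = none := by
    cases hwk : w k with
    | none => rfl
    | some a =>
        have h1 := sub_forced hsubu hwk
        have h2 := sub_forced hsubv hwk
        rw [hu] at h1; rw [hv] at h2
        cases h1; cases d <;> simp_all
  refine ⟨k, d, hu, hv, hwk, fun m hm => ?_⟩
  cases hwm : w m with
  | some a => exact ⟨sub_forced hsubu hwm, sub_forced hsubv hwm⟩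
  | none =>
      constructor
      · cases hum : u m with
        | none => rfl
        | some a =>
            exfalso
            have hy : pick u ∈ u.points := pick_mem u
            set z := Function.update (pick u) m (!a) with hz
            have hzw : z ∈ w.points := by
              intro i b hb
              rcases eq_or_ne i m with rfl | him
              · rw [hwm] at hb; cases hb
              · rw [hz, Function.update_of_ne him]; exact hsubu hy i b hb
            have hzuv : z ∈ u.points ∪ v.points := hw ▸ hzw
            have hznu : z ∉ u.points := by
              intro hzu
              have := hzu m a hum
              simp [hz] at this
            have hzv : z ∈ v.points := hzuv.resolve_left hznu
            have h1 := hzv k (!d) hv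
            have h2 : z k = d := by
              rw [hz, Function.update_of_ne (Ne.symm hm)]; exact hy k d hu
            rw [h2] at h1; simp at h1
      · cases hvm : v m with
        | none => rfl
        | some a =>
            exfalso
            have hy : pick v ∈ v.points := pick_mem v
            set z := Function.update (pick v) m (!a) with hz
            have hzw : z ∈ w.points := by
              intro i b hb
              rcases eq_or_ne i m with rfl | him
              · rw [hwm] at hb; cases hb
              · rw [hz, Function.update_of_ne him]; exact hsubv hy i b hb
            have hzuv : z ∈ u.points ∪ v.points := hw ▸ hzw
            have hznv : z ∉ v.points := by
              intro hzv
              have := hzv m a hvm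
              simp [hz] at this
            have hzu : z ∈ u.points := hzuv.resolve_right hznv
            have h1 := hzu k d hu
            have h2 : z k = !d := by
              rw [hz, Function.update_of_ne (Ne.symm hm)]; exact hy k (!d) hv
            rw [h2] at h1; simp at h1

/-- The core construction: if `s j = c`, `t j = *`, and `s'` resp. `t'` are the
slices of `s ∪ t` at `x j = c` resp. `x j = !c`, then `s,t,s',t'` is an nfs
configuration. -/
lemma core {s t s' t' : Subcube n} {j : Fin n} {c : Bool}
    (hst : Disjoint s.points t.points)
    (hsj : s j = some c) (htj : t j = none)
    (hs' : s'.points = (s.points ∪ t.points) ∩ {x | x j = c})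
    (ht' : t'.points = (s.points ∪ t.points) ∩ {x | x j = !c}) :
    IsNfs s t s' t' := by
  have htc := restrict_points htj c
  have htc' := restrict_points htj (!c)
  have hs'2 : s'.points = s.points ∪ Subcube.points (Function.update t j (some c)) := by
    rw [hs', htc]
    ext x
    constructor
    · rintro ⟨hx | hx, hxj⟩
      · exact Or.inl hx
      · exact Or.inr ⟨hx, hxj⟩
    · rintro (hx | ⟨hx, hxj⟩)
      · exact ⟨Or.inl hx, hx j c hsj⟩
      · exact ⟨Or.inr hx, hxj⟩
  have ht'2 : t' = Function.update t j (some (!c)) := by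
    apply points_inj
    rw [ht', htc']
    ext x
    constructor
    · rintro ⟨hx | hx, hxj⟩
      · exfalso
        have h1 := hx j c hsj
        have h2 : x j = !c := hxj
        rw [h2] at h1; cases c <;> simp_all
      · exact ⟨hx, hxj⟩
    · rintro ⟨hx, hxj⟩
      exact ⟨Or.inr hx, hxj⟩
  have hdisj : Disjoint s.points (Subcube.points (Function.update t j (some c))) := by
    refine hst.mono_right ?_
    rw [htc]; exact Set.inter_subset_left
  obtain ⟨k, d, hsk, hvk, hs'k, hrest⟩ := split hs'2 hdisj
  have hkj : k ≠ j := by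
    intro h
    subst h
    rw [Function.update_self] at hvk
    rw [hsj] at hsk
    cases hsk; cases c <;> simp_all
  have htk : t k = some (!d) := by
    rwa [Function.update_of_ne hkj] at hvk
  have hs'j : s' j = some c := by
    have := (hrest j (Ne.symm hkj)).1
    rw [← this, hsj]
  refine ⟨k, j, d, c, hkj, hsk, htk, hsj, htj, hs'k, hs'j, ?_, ?_, ?_⟩
  · rw [ht'2, Function.update_of_ne hkj]; exact htk
  · rw [ht'2, Function.update_self]
  · intro m hmk hmj
    have h1 := (hrest m hmk).1
    have h2 := (hrest m hmk).2
    have h3 : Function.update t j (some c) m = t m := Function.update_of_ne hmj _ _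
    refine ⟨by rw [h1, ← h2, h3], h1.symm ▸ rfl, ?_⟩
    · rw [ht'2, Function.update_of_ne hmj, ← h3, h2, ← h1]
  
/-- Flip-invariance at `j` plus a conflict at `j` on the other side makes the
union a subcube. -/
lemma flip_cube {s' : Subcube n} {A : Set (Fin n → Bool)} {j : Fin n} {c' : Bool}
    (hflip : ∀ x ∈ A, Function.update x j (!(x j)) ∈ A)
    (hs' : s'.points = A ∩ {x | x j = c'}) :
    A = Subcube.points (Function.update s' j none) := by
  have key : ∀ x : Fin n → Bool, Function.update x j c' ∈ A ↔ x ∈ A := by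
    intro x
    cases hx : x j with
    | false =>
        cases c' with
        | false =>
            have : Function.update x j false = x := by
              funext i; rcases eq_or_ne i j with rfl | h
              · rw [Function.update_self, hx]
              · rw [Function.update_of_ne h]
            rw [this]
        | true =>
            constructor
            · intro h
              have := hflip _ h
              simp only [Function.update_self, Function.update_idem, Bool.not_true] at this
              have hh : Function.update x j false = x := by
                funext i; rcases eq_or_ne i j with rfl | h
                · rw [Function.update_self, hx]
                · rw [Function.update_of_ne h]
              rwa [hh] at this
            · intro h
              have := hflip _ h
              rwa [hx] at this
    | true =>
        cases c' with
        | true =>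
            have : Function.update x j true = x := by
              funext i; rcases eq_or_ne i j with rfl | h
              · rw [Function.update_self, hx]
              · rw [Function.update_of_ne h]
            rw [this]
        | false =>
            constructor
            · intro h
              have := hflip _ h
              simp only [Function.update_self, Function.update_idem, Bool.not_false] at this
              have hh : Function.update x j true = x := by
                funext i; rcases eq_or_ne i j with rfl | h
                · rw [Function.update_self, hx]
                · rw [Function.update_of_ne h]
              rwa [hh] at this
            · intro h
              have := hflip _ h
              rwa [hx] at this
  ext x
  constructor
  · intro hxA
    have hy : Function.update x j c' ∈ s'.points := by
      rw [hs']
      exact ⟨(key x).mpr hxA, by simp⟩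
    intro i b hb
    rcases eq_or_ne i j with rfl | hij
    · rw [Function.update_self] at hb; cases hb
    · rw [Function.update_of_ne hij] at hb
      have := hy i b hb
      rwa [Function.update_of_ne hij] at this
  · intro hx
    have hs'j : s' j = some c' := by
      refine forced (fun y hy => ?_)
      have h2 : y ∈ A ∩ {x | x j = c'} := hs' ▸ hy
      exact h2.2
    have hy : Function.update x j c' ∈ s'.points := by
      intro i b hb
      rcases eq_or_ne i j with rfl | hij
      · rw [Function.update_self]
        rw [hs'j] at hb; cases hb; rfl
      · rw [Function.update_of_ne hij]
        exact hx i b (by rwa [Function.update_of_ne hij])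
    have hyA : Function.update x j c' ∈ A := (hs' ▸ hy : _ ∈ A ∩ _).1
    exact (key x).mp hyA

end NfsHelpers

/-- If two distinct pairs of disjoint subcubes have the same union, and
that union is not a subcube, then (up to swapping within each pair) the first pair is an
nfs-pair and the second is its nfs-flip. -/
theorem nfs_pair_unique {n : ℕ} (s t s' t' : Subcube n)
    (hst : Disjoint (Subcube.points s) (Subcube.points t))
    (hs't' : Disjoint (Subcube.points s') (Subcube.points t'))
    (hunion : Subcube.points s ∪ Subcube.points t =
      Subcube.points s' ∪ Subcube.points t')
    (hnotcube : ¬ ∃ u : Subcube n,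
      Subcube.points s ∪ Subcube.points t = Subcube.points u)
    (hne : ¬ ((s = s' ∧ t = t') ∨ (s = t' ∧ t = s'))) :
    IsNfs s t s' t' ∨ IsNfs s t t' s' ∨ IsNfs t s s' t' ∨ IsNfs t s t' s' := by
  classical
  obtain ⟨j, c', hs'j, ht'j⟩ := NfsHelpers.exists_conflict hs't'
  have hS' : Subcube.points s' = (Subcube.points s ∪ Subcube.points t) ∩ {x | x j = c'} := by
    rw [hunion]; exact (NfsHelpers.slice hs'j ht'j).symm
  have hT' : Subcube.points t' = (Subcube.points s ∪ Subcube.points t) ∩ {x | x j = !c'} := by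
    rw [hunion, Set.union_comm]
    exact (NfsHelpers.slice ht'j (show s' j = some (!(!c')) by simpa using hs'j)).symm
  cases hsj : s j with
  | none =>
    cases htj : t j with
    | none =>
      -- both stars at j: the union is flip-invariant, hence a subcube
      exfalso
      apply hnotcube
      refine ⟨Function.update s' j none, ?_⟩
      apply NfsHelpers.flip_cube (c' := c') ?_ hS'
      rintro x (hx | hx)
      · left
        intro i b hb
        rcases eq_or_ne i j with rfl | hij
        · rw [hsj] at hb; cases hb
        · rw [Function.update_of_ne hij]; exact hx i b hb
      · right
        intro i b hb
        rcases eq_or_ne i j with rfl | hij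
        · rw [htj] at hb; cases hb
        · rw [Function.update_of_ne hij]; exact hx i b hb
    | some b =>
      -- t j = b, s j = *: swapped main case
      have hst' : Disjoint (Subcube.points t) (Subcube.points s) := hst.symm
      have hS'2 : Subcube.points s' = (Subcube.points t ∪ Subcube.points s) ∩ {x | x j = c'} := by
        rw [Set.union_comm]; exact hS'
      have hT'2 : Subcube.points t' = (Subcube.points t ∪ Subcube.points s) ∩ {x | x j = !c'} := by
        rw [Set.union_comm]; exact hT'
      rcases Bool.eq_or_eq_not c' b with h | h
      · subst h
        exact Or.inr (Or.inr (Or.inl (NfsHelpers.core hst' htj hsj hS'2 hT'2)))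
      · subst h
        refine Or.inr (Or.inr (Or.inr (NfsHelpers.core hst' htj hsj ?_ ?_)))
        · rw [hT'2]; simp
        · rw [hS'2]
  | some b =>
    cases htj : t j with
    | none =>
      -- main case: s j = b, t j = *
      rcases Bool.eq_or_eq_not c' b with h | h
      · subst h
        exact Or.inl (NfsHelpers.core hst hsj htj hS' hT')
      · subst h
        refine Or.inr (Or.inl (NfsHelpers.core hst hsj htj ?_ ?_))
        · rw [hT']; simp
        · rw [hS']
    | some b2 =>
      rcases Bool.eq_or_eq_not b2 b with h | h
      · -- s j = t j = b: both sides force x j = b, but s',t' conflict at j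
        subst h
        exfalso
        have hx : NfsHelpers.pick s' ∈ Subcube.points s ∪ Subcube.points t := by
          rw [hunion]; exact Or.inl (NfsHelpers.pick_mem s')
        have hy : NfsHelpers.pick t' ∈ Subcube.points s ∪ Subcube.points t := by
          rw [hunion]; exact Or.inr (NfsHelpers.pick_mem t')
        have hx1 : NfsHelpers.pick s' j = c' := NfsHelpers.pick_mem s' j c' hs'j
        have hy1 : NfsHelpers.pick t' j = !c' := NfsHelpers.pick_mem t' j (!c') ht'j
        have hx2 : NfsHelpers.pick s' j = b2 := by
          rcases hx with h | h
          · exact h j b2 hsj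
          · exact h j b2 htj
        have hy2 : NfsHelpers.pick t' j = b2 := by
          rcases hy with h | h
          · exact h j b2 hsj
          · exact h j b2 htj
        rw [hx1] at hx2; rw [hy1] at hy2
        rw [← hx2] at hy2
        simp at hy2
      · -- s j = b, t j = !b: conflict at j for both pairs forces equal pairs
        subst h
        exfalso
        apply hne
        have hS : Subcube.points s = (Subcube.points s ∪ Subcube.points t) ∩ {x | x j = b} :=
          (NfsHelpers.slice hsj htj).symm
        have hT : Subcube.points t = (Subcube.points s ∪ Subcube.points t) ∩ {x | x j = !b} := by
          rw [Set.union_comm]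
          exact (NfsHelpers.slice htj (show s j = some (!(!b)) by simpa using hsj)).symm
        rcases Bool.eq_or_eq_not c' b with h | h
        · subst h
          left
          constructor
          · exact NfsHelpers.points_inj (hS.trans hS'.symm)
          · exact NfsHelpers.points_inj (hT.trans hT'.symm)
        · subst h
          right
          constructor
          · refine NfsHelpers.points_inj (hS.trans ?_)
            rw [hT']; simp
          · refine NfsHelpers.points_inj (hT.trans ?_)
            rw [hS']
end

section
/- If F is a tight irreducible subcube partition of {0,1}^n with n ≥ 3, then F contains a subcube with at least two coordinates equal to 1. -/
namespace WkAux

variable {n : ℕ}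

/-- `false` on `B`, `true` at `i`, star elsewhere. -/
def cube1 (B : Finset (Fin n)) (i : Fin n) : Subcube n :=
  fun j => if j ∈ B then some false else if j = i then some true else none

/-- `false` on `A`, star elsewhere. -/
def cube0 (A : Finset (Fin n)) : Subcube n :=
  fun j => if j ∈ A then some false else none

lemma nonempty_points (s : Subcube n) : (Subcube.points s).Nonempty := by
  refine ⟨fun i => (s i).getD true, fun i b hb => ?_⟩
  simp [hb]

lemma weight_ge_two {s : Subcube n} {j k : Fin n} (hjk : j ≠ k)
    (hj : s j = some true) (hk : s k = some true) : 2 ≤ Subcube.weight s := by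
  have hsub : ({j, k} : Finset (Fin n)) ⊆
      Finset.univ.filter (fun i : Fin n => s i = some true) := by
    intro a ha
    rcases Finset.mem_insert.mp ha with rfl | ha
    · simp [hj]
    · rcases Finset.mem_singleton.mp ha with rfl
      simp [hk]
  have := Finset.card_le_card hsub
  rwa [Finset.card_pair hjk] at this

lemma points_univ_iff (A : Finset (Fin n)) :
    Subcube.points (cube0 A) = Set.univ ↔ A = ∅ := by
  constructor
  · intro h
    by_contra hA
    obtain ⟨a, ha⟩ := Finset.nonempty_iff_ne_empty.mpr hA
    have : (fun _ : Fin n => true) ∈ Subcube.points (cube0 A) := by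
      rw [h]; trivial
    have := this a false (by simp [cube0, ha])
    simp at this
  · rintro rfl
    ext x
    simp [Subcube.points, cube0]


lemma mem_points_cube0 {A : Finset (Fin n)} {x : Fin n → Bool} :
    x ∈ Subcube.points (cube0 A) ↔ ∀ j ∈ A, x j = false := by
  constructor
  · intro hx j hj
    exact hx j false (by simp [cube0, hj])
  · intro h j b hb
    by_cases hj : j ∈ A
    · simp [cube0, hj] at hb
      rw [hb]; exact h j hj
    · simp [cube0, hj] at hb

lemma mem_points_cube1 {B : Finset (Fin n)} {i : Fin n} (hi : i ∉ B) {x : Fin n → Bool} :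
    x ∈ Subcube.points (cube1 B i) ↔ (∀ j ∈ B, x j = false) ∧ x i = true := by
  constructor
  · intro hx
    refine ⟨fun j hj => hx j false (by simp [cube1, hj]), hx i true (by simp [cube1, hi])⟩
  · rintro ⟨h0, h1⟩ j b hb
    by_cases hj : j ∈ B
    · simp [cube1, hj] at hb
      rw [hb]; exact h0 j hj
    · by_cases hji : j = i
      · subst hji
        simp [cube1, hj] at hb
        rw [hb]; exact h1
      · simp [cube1, hj, hji] at hb

/-- The terminal contradiction: if `cube0 A ∈ F` and (for nonempty `A`) some
`cube1 (A.erase i) i ∈ F`, we contradict tightness/irreducibility. -/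
lemma terminal (hn : 3 ≤ n) (F : Finset (Subcube n))
    (hdisj : ∀ s ∈ F, ∀ t ∈ F, s ≠ t → Disjoint (Subcube.points s) (Subcube.points t))
    (hcov : (⋃ s ∈ F, Subcube.points s) = Set.univ)
    (htight : IsTight F) (hirr : IsIrreduciblePartition F)
    (A : Finset (Fin n)) (ht : cube0 A ∈ F)
    (hInv2 : A.Nonempty → ∃ i ∈ A, cube1 (A.erase i) i ∈ F) : False := by
  by_cases hA : A.Nonempty
  · obtain ⟨i, hiA, hc⟩ := hInv2 hA
    set c : Subcube n := cube1 (A.erase i) i with hc_def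
    set t : Subcube n := cube0 A with ht_def
    have hine : i ∉ A.erase i := Finset.notMem_erase i A
    have hct : c ≠ t := by
      intro h
      have : c i = t i := by rw [h]
      simp [hc_def, ht_def, cube1, cube0, hine, hiA] at this
    -- the union of c and t is the subcube cube0 (A.erase i)
    have hunion : Subcube.points c ∪ Subcube.points t
        = Subcube.points (cube0 (A.erase i)) := by
      ext x
      rw [Set.mem_union, hc_def, ht_def, mem_points_cube0, mem_points_cube0,
        mem_points_cube1 hine]
      constructor
      · rintro (⟨h0, _⟩ | h0)
        · exact h0
        · exact fun j hj => h0 j (Finset.mem_of_mem_erase hj)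
      · intro h0
        cases hxi : x i
        · right
          intro j hj
          rcases eq_or_ne j i with rfl | hji
          · exact hxi
          · exact h0 j (Finset.mem_erase.mpr ⟨hji, hj⟩)
        · exact Or.inl ⟨h0, rfl⟩
    have hsubF : ({c, t} : Finset (Subcube n)) ⊆ F := by
      intro s hs
      rcases Finset.mem_insert.mp hs with rfl | hs
      · exact hc
      · rw [Finset.mem_singleton.mp hs]; exact ht
    have hGcard : ({c, t} : Finset (Subcube n)).card = 2 := Finset.card_pair hct
    have hGunion : (⋃ s ∈ ({c, t} : Finset (Subcube n)), Subcube.points s)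
        = Subcube.points (cube0 (A.erase i)) := by
      rw [← hunion]
      simp [Set.biUnion_insert]
    by_cases hcard : 2 < F.card
    · exact hirr ⟨{c, t}, hsubF, by omega, by omega, cube0 (A.erase i), hGunion⟩
    · -- F = {c, t}
      have hFeq : F = {c, t} := by
        refine (Finset.eq_of_subset_of_card_le hsubF (by omega)).symm
      have huniv : Subcube.points (cube0 (A.erase i)) = Set.univ := by
        rw [← hGunion, ← hFeq, hcov]
      have hAe : A.erase i = ∅ := (points_univ_iff _).mp huniv
      -- tightness fails at a coordinate j ≠ i
      have : Nontrivial (Fin n) := Fin.nontrivial_iff_two_le.mpr (by omega)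
      obtain ⟨j, hji⟩ := exists_ne i
      obtain ⟨s, hsF, hsj⟩ := htight j
      have hjA : j ∉ A := by
        intro hjA
        have := Finset.mem_erase.mpr ⟨hji, hjA⟩
        rw [hAe] at this
        exact Finset.notMem_empty j this
      rw [hFeq] at hsF
      rcases Finset.mem_insert.mp hsF with rfl | hs
      · exact hsj (by simp [hc_def, cube1, hAe, hji])
      · rw [Finset.mem_singleton.mp hs] at hsj
        exact hsj (by simp [ht_def, cube0, hjA])
  · -- A = ∅ : cube0 ∅ covers everything, so F is a singleton; tightness fails
    have hA0 : A = ∅ := Finset.not_nonempty_iff_eq_empty.mp hA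
    have huniv : Subcube.points (cube0 A) = Set.univ := (points_univ_iff _).mpr hA0
    have h0n : 0 < n := by omega
    obtain ⟨s, hsF, hs0⟩ := htight ⟨0, h0n⟩
    have hst : s ≠ cube0 A := by
      intro h; rw [h] at hs0; exact hs0 (by simp [cube0, hA0])
    have hd := hdisj s hsF (cube0 A) ht hst
    obtain ⟨x, hx⟩ := nonempty_points s
    exact (Set.disjoint_left.mp hd hx (by rw [huniv]; trivial))

/-- The chain-building step: starting from a set `A` of zeroed coordinates with the
chain invariant, we eventually reach a terminal subcube and a contradiction. -/
lemma step (hn : 3 ≤ n) (F : Finset (Subcube n))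
    (hdisj : ∀ s ∈ F, ∀ t ∈ F, s ≠ t → Disjoint (Subcube.points s) (Subcube.points t))
    (hcov : (⋃ s ∈ F, Subcube.points s) = Set.univ)
    (htight : IsTight F) (hirr : IsIrreduciblePartition F)
    (hw : ∀ s ∈ F, ∀ j k : Fin n, s j = some true → s k = some true → j = k)
    (A : Finset (Fin n))
    (hInv1 : ∀ i ∈ A, ∃ B ⊆ A.erase i, cube1 B i ∈ F)
    (hInv2 : A.Nonempty → ∃ i ∈ A, cube1 (A.erase i) i ∈ F) : False := by
  -- the current point: 0 on A, 1 elsewhere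
  set p : Fin n → Bool := fun j => if j ∈ A then false else true with hp_def
  have hpmem : p ∈ (⋃ s ∈ F, Subcube.points s) := by rw [hcov]; trivial
  simp only [Set.mem_iUnion, exists_prop] at hpmem
  obtain ⟨t, htF, hpt⟩ := hpmem
  -- t is false on all of A
  have ht0 : ∀ i ∈ A, t i = some false := by
    intro i hi
    cases h : t i with
    | some b =>
      have := hpt i b h
      simp [hp_def, hi] at this
      rw [this]
    | none =>
      exfalso
      obtain ⟨B, hB, hcB⟩ := hInv1 i hi
      have hiB : i ∉ B := fun hmem => Finset.notMem_erase i A (hB hmem)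
      set q : Fin n → Bool := Function.update p i true with hq_def
      have hqt : q ∈ Subcube.points t := by
        intro j b hb
        rcases eq_or_ne j i with rfl | hji
        · rw [h] at hb; exact absurd hb (by simp)
        · rw [hq_def, Function.update_of_ne hji]
          exact hpt j b hb
      have hqc : q ∈ Subcube.points (cube1 B i) := by
        rw [mem_points_cube1 hiB]
        refine ⟨fun j hj => ?_, by simp [hq_def]⟩
        have hji : j ≠ i := fun hh => hiB (hh ▸ hj)
        have hjA : j ∈ A := Finset.mem_of_mem_erase (hB hj)
        rw [hq_def, Function.update_of_ne hji]
        simp [hp_def, hjA]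
      have hne : t ≠ cube1 B i := by
        intro hteq
        have : p i = true := hpt i true (by rw [hteq]; simp [cube1, hiB])
        simp [hp_def, hi] at this
      exact Set.disjoint_left.mp (hdisj t htF _ hcB hne) hqt hqc
  by_cases hex : ∃ j, t j = some true
  · -- extend the chain
    obtain ⟨j, hj⟩ := hex
    have hjA : j ∉ A := by
      intro hmem
      have := ht0 j hmem
      rw [hj] at this
      simp at this
    have hteq : t = cube1 A j := by
      funext k
      by_cases hk : k ∈ A
      · rw [ht0 k hk]; simp [cube1, hk]
      · rcases eq_or_ne k j with rfl | hkj
        · rw [hj]; simp [cube1, hk]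
        · have : t k = none := by
            cases hk2 : t k with
            | none => rfl
            | some b =>
              have hb := hpt k b hk2
              simp [hp_def, hk] at hb
              rw [hb] at hk2
              exact absurd (hw t htF k j hk2 hj) hkj
          rw [this]; simp [cube1, hk, hkj]
    -- termination facts
    have hcardA : (insert j A).card = A.card + 1 := Finset.card_insert_of_notMem hjA
    have hcardle : (insert j A).card ≤ n := by
      have := Finset.card_le_univ (insert j A)
      simpa using this
    have hdec : n - (insert j A).card < n - A.card := by omega
    refine step hn F hdisj hcov htight hirr hw (insert j A) ?_ ?_
    · intro i hi
      rcases Finset.mem_insert.mp hi with rfl | hiA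
      · exact ⟨A, by rw [Finset.erase_insert hjA], hteq ▸ htF⟩
      · obtain ⟨B, hB, hcB⟩ := hInv1 i hiA
        exact ⟨B, hB.trans (Finset.erase_subset_erase i (Finset.subset_insert j A)), hcB⟩
    · intro _
      exact ⟨j, Finset.mem_insert_self j A, by rw [Finset.erase_insert hjA]; exact hteq ▸ htF⟩
  · -- terminal: t = cube0 A
    push_neg at hex
    have hteq : t = cube0 A := by
      funext k
      by_cases hk : k ∈ A
      · rw [ht0 k hk]; simp [cube0, hk]
      · have : t k = none := by
          cases hk2 : t k with
          | none => rfl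
          | some b =>
            have hb := hpt k b hk2
            simp [hp_def, hk] at hb
            rw [hb] at hk2
            exact absurd hk2 (hex k)
        rw [this]; simp [cube0, hk]
    exact terminal hn F hdisj hcov htight hirr A (hteq ▸ htF) hInv2
termination_by n - A.card

end WkAux

/-- A tight irreducible subcube partition of `{0,1}^n`, `n ≥ 3`,
contains a subcube of weight at least 2. -/
theorem exists_weight_two {n : ℕ} (hn : 3 ≤ n) (F : Finset (Subcube n))
    (hF : IsSubcubePartition F) (htight : IsTight F) (hirr : IsIrreduciblePartition F) :
    ∃ s ∈ F, 2 ≤ Subcube.weight s := by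
  by_contra hcon
  push_neg at hcon
  have hw : ∀ s ∈ F, ∀ j k : Fin n, s j = some true → s k = some true → j = k := by
    intro s hs j k hj hk
    by_contra hne
    exact absurd (WkAux.weight_ge_two hne hj hk) (by have := hcon s hs; omega)
  exact WkAux.step hn F hF.1 hF.2 htight hirr hw ∅ (by simp) (by simp)
end

section
/- Let F ≠ {0*^{n-1}, 1*^{n-1}} be an irreducible subcube partition of {0,1}^n. Then G = { 00t, 11t : 0t ∈ F } ∪ { 01t, 10t : 1t ∈ F } ∪ { **t : *t ∈ F } is an irreducible subcube partition of {0,1}^{n+1}. -/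
/-- The two subcubes a bit in the first coordinate expands to: `0t ∈ F` yields
`00t, 11t`, `1t ∈ F` yields `01t, 10t`, and `*t ∈ F` yields `**t`. -/
def xorExpandOne {n : ℕ} (s : Subcube (n + 1)) : Finset (Subcube (n + 2)) :=
  match s 0 with
  | none => {Fin.cons (none : Option Bool) s}
  | some b =>
      {Fin.cons (some false) (Function.update s 0 (some b)),
       Fin.cons (some true) (Function.update s 0 (some (!b)))}

def xorExpand {n : ℕ} (F : Finset (Subcube (n + 1))) : Finset (Subcube (n + 2)) :=
  F.biUnion xorExpandOne

/-- The subcube `b*^n`. -/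
def headOnly (n : ℕ) (b : Bool) : Subcube (n + 1) :=
  Fin.cons (some b) (fun _ => (none : Option Bool))



namespace XorProof


variable {n : ℕ}

lemma mem_points {s : Subcube n} {x : Fin n → Bool} :
    x ∈ s.points ↔ ∀ i b, s i = some b → x i = b := Iff.rfl

lemma points_nonempty (s : Subcube n) : s.points.Nonempty := by
  refine ⟨fun i => (s i).getD false, fun i b h => ?_⟩
  simp [h]

lemma points_mono_coord {s t : Subcube n} (h : s.points ⊆ t.points) :
    ∀ i b, t i = some b → s i = some b := by
  intro i b hti
  by_contra hsi
  have hx : (Function.update (fun j => (s j).getD false) i (!b)) ∈ s.points := by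
    intro j b' hj
    rcases eq_or_ne j i with rfl | hne
    · have : b' ≠ b := fun hb => hsi (hb ▸ hj)
      have : b' = !b := by cases b' <;> cases b <;> simp_all
      simp [this]
    · simp [Function.update_of_ne hne, hj]
  have := h hx i b hti
  simp at this

lemma points_injective {s t : Subcube n} (h : s.points = t.points) : s = t := by
  funext i
  rcases hti : t i with _ | b
  · rcases hsi : s i with _ | b
    · rfl
    · exact absurd (points_mono_coord h.ge i b hsi) (by simp [hti])
  · exact points_mono_coord h.le i b hti

lemma points_eq_of_mem_unique {H : Finset (Subcube n)}
    (hdisj : ∀ s ∈ H, ∀ t ∈ H, s ≠ t → Disjoint (Subcube.points s) (Subcube.points t))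
    {g h : Subcube n} (hg : g ∈ H) (hh : h ∈ H) {x : Fin n → Bool}
    (hxg : x ∈ g.points) (hxh : x ∈ h.points) : g = h := by
  by_contra hne
  exact Set.disjoint_left.mp (hdisj g hg h hh hne) hxg hxh



variable {n : ℕ}


/-- the fixed-type cube -/
def cube (e f : Bool) (s : Subcube (n+1)) : Subcube (n+2) :=
  Fin.cons (some e) (Function.update s 0 (some f))

lemma xorExpandOne_none {s : Subcube (n+1)} (h : s 0 = none) :
    xorExpandOne s = {Fin.cons (none : Option Bool) s} := by
  unfold xorExpandOne; rw [h]

lemma xorExpandOne_some {s : Subcube (n+1)} {b : Bool} (h : s 0 = some b) :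
    xorExpandOne s = {cube false b s, cube true (!b) s} := by
  unfold xorExpandOne; rw [h]; rfl

lemma one_eq_succ_zero : (1 : Fin (n+2)) = (0 : Fin (n+1)).succ :=
  Fin.succ_zero_eq_one.symm

lemma mem_cube {e f : Bool} {s : Subcube (n+1)} {x : Fin (n+2) → Bool} :
    x ∈ (cube e f s).points ↔
      x 0 = e ∧ x 1 = f ∧ ∀ j : Fin n, ∀ b, s j.succ = some b → x j.succ.succ = b := by
  constructor
  · intro h
    refine ⟨h 0 e (by simp [cube]), ?_, fun j b hb => ?_⟩
    · refine h 1 f ?_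
      rw [one_eq_succ_zero]
      simp [cube]
    · refine h j.succ.succ b ?_
      simp [cube, Function.update_of_ne (Fin.succ_ne_zero j), hb]
  · rintro ⟨h0, h1, ht⟩ i b hi
    induction i using Fin.cases with
    | zero => simp [cube] at hi; simp [h0, hi]
    | succ j =>
      induction j using Fin.cases with
      | zero =>
        simp [cube] at hi
        rw [← one_eq_succ_zero, h1, hi]
      | succ k =>
        simp [cube, Function.update_of_ne (Fin.succ_ne_zero k)] at hi
        exact ht k b hi

lemma mem_starCube {s : Subcube (n+1)} {x : Fin (n+2) → Bool} :
    x ∈ Subcube.points (Fin.cons (none : Option Bool) s : Subcube (n+2)) ↔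
      ∀ j : Fin (n+1), ∀ b, s j = some b → x j.succ = b := by
  constructor
  · intro h j b hb
    exact h j.succ b (by simp [hb])
  · intro h i b hi
    induction i using Fin.cases with
    | zero => simp at hi
    | succ j => simp at hi; exact h j b hi

/-- split membership for a general subcube of `Fin (n+2)` -/
lemma mem_points_split {u : Subcube (n+2)} {x : Fin (n+2) → Bool} :
    x ∈ u.points ↔
      (∀ b, u 0 = some b → x 0 = b) ∧ (∀ b, u 1 = some b → x 1 = b) ∧
      ∀ j : Fin n, ∀ b, u j.succ.succ = some b → x j.succ.succ = b := by
  constructor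
  · intro h
    exact ⟨fun b hb => h 0 b hb, fun b hb => h 1 b hb, fun j b hb => h _ b hb⟩
  · rintro ⟨h0, h1, ht⟩ i b hi
    induction i using Fin.cases with
    | zero => exact h0 b hi
    | succ j =>
      induction j using Fin.cases with
      | zero => rw [← one_eq_succ_zero] at hi ⊢; exact h1 b hi
      | succ k => exact ht k b hi

def phi (x : Fin (n+2) → Bool) : Fin (n+1) → Bool :=
  Fin.cons (xor (x 0) (x 1)) (fun j => x j.succ.succ)

def psi (c : Bool) (y : Fin (n+1) → Bool) : Fin (n+2) → Bool :=
  Fin.cons c (Fin.cons (xor c (y 0)) (fun j => y j.succ))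

@[simp] lemma psi_zero (c : Bool) (y : Fin (n+1) → Bool) : psi c y 0 = c := rfl

@[simp] lemma psi_one (c : Bool) (y : Fin (n+1) → Bool) : psi c y 1 = xor c (y 0) := by
  rw [one_eq_succ_zero]; simp [psi]

@[simp] lemma psi_succ_succ (c : Bool) (y : Fin (n+1) → Bool) (j : Fin n) :
    psi c y j.succ.succ = y j.succ := by
  simp [psi]

lemma phi_psi (c : Bool) (y : Fin (n+1) → Bool) : phi (psi c y) = y := by
  funext i
  induction i using Fin.cases with
  | zero =>
    show xor (psi c y 0) (psi c y 1) = y 0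
    simp
  | succ j => simp [phi]

lemma phi_surjective : Function.Surjective (phi (n := n)) :=
  fun y => ⟨psi false y, phi_psi false y⟩

lemma phi_mem {s : Subcube (n+1)} {x : Fin (n+2) → Bool} :
    phi x ∈ s.points ↔
      (∀ b, s 0 = some b → xor (x 0) (x 1) = b) ∧
      ∀ j : Fin n, ∀ b, s j.succ = some b → x j.succ.succ = b := by
  constructor
  · intro h
    refine ⟨fun b hb => h 0 b hb, fun j b hb => ?_⟩
    have := h j.succ b hb
    simpa [phi] using this
  · rintro ⟨h0, ht⟩ i b hi
    induction i using Fin.cases with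
    | zero => simpa [phi] using h0 b hi
    | succ j => simpa [phi] using ht j b hi

/-- union of the points of the expansion of `s` -/
lemma expandOne_points (s : Subcube (n+1)) :
    ⋃ g ∈ xorExpandOne s, Subcube.points g = phi ⁻¹' s.points := by
  ext x
  rcases h : s 0 with _ | b
  · rw [xorExpandOne_none h]
    simp only [Finset.mem_singleton, Set.mem_iUnion, Set.mem_preimage, exists_prop,
      exists_eq_left]
    rw [mem_starCube, phi_mem]
    constructor
    · intro ht
      refine ⟨fun b hb => ?_, fun j b hb => ht j.succ b hb⟩
      rw [h] at hb; cases hb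
    · rintro ⟨-, ht⟩ j b hb
      induction j using Fin.cases with
      | zero => rw [h] at hb; cases hb
      | succ k => exact ht k b hb
  · rw [xorExpandOne_some h]
    simp only [Finset.mem_insert, Finset.mem_singleton, Set.mem_iUnion, Set.mem_preimage,
      exists_prop]
    rw [phi_mem]
    constructor
    · rintro ⟨g, hg | hg, hx⟩ <;> subst hg <;> rw [mem_cube] at hx <;>
        obtain ⟨h0, h1, ht⟩ := hx <;>
        exact ⟨fun b' hb' => by rw [h] at hb'; cases hb'; simp [h0, h1], ht⟩
    · rintro ⟨h0, ht⟩
      have hxor := h0 b h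
      cases hx0 : x 0
      · refine ⟨_, Or.inl rfl, ?_⟩
        rw [mem_cube]
        refine ⟨hx0, ?_, ht⟩
        rw [hx0] at hxor; simpa using hxor
      · refine ⟨_, Or.inr rfl, ?_⟩
        rw [mem_cube]
        refine ⟨hx0, ?_, ht⟩
        rw [hx0] at hxor; cases b <;> cases hx1 : x 1 <;> simp_all



lemma cube_mem {s : Subcube (n+1)} {e f : Bool} (h : s 0 = some (xor e f)) :
    cube e f s ∈ xorExpandOne s := by
  rw [xorExpandOne_some h]
  cases e
  · simp [Finset.mem_insert]
  · have hf : (!(xor true f)) = f := by cases f <;> rfl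
    rw [hf]
    exact Finset.mem_insert_of_mem (Finset.mem_singleton_self _)

lemma expand_points (F : Finset (Subcube (n+1))) :
    ⋃ g ∈ xorExpand F, Subcube.points g = phi ⁻¹' (⋃ s ∈ F, Subcube.points s) := by
  unfold xorExpand
  rw [Finset.set_biUnion_biUnion]
  rw [Set.preimage_iUnion₂]
  exact Set.iUnion₂_congr fun s _ => expandOne_points s

lemma points_subset_preimage {s : Subcube (n+1)} {g : Subcube (n+2)}
    (hg : g ∈ xorExpandOne s) : g.points ⊆ phi ⁻¹' s.points := by
  rw [← expandOne_points]
  exact Set.subset_biUnion_of_mem hg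

lemma source_unique {F : Finset (Subcube (n+1))} (hF : IsSubcubePartition F)
    {s t : Subcube (n+1)} (hs : s ∈ F) (ht : t ∈ F) {g : Subcube (n+2)}
    (hgs : g ∈ xorExpandOne s) (hgt : g ∈ xorExpandOne t) : s = t := by
  obtain ⟨x, hx⟩ := points_nonempty g
  exact points_eq_of_mem_unique hF.1 hs ht
    (points_subset_preimage hgs hx) (points_subset_preimage hgt hx)

theorem expand_partition {F : Finset (Subcube (n+1))} (hF : IsSubcubePartition F) :
    IsSubcubePartition (xorExpand F) := by
  constructor
  · intro g hg h hh hne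
    obtain ⟨s, hs, hgs⟩ := Finset.mem_biUnion.mp hg
    obtain ⟨t, ht, hht⟩ := Finset.mem_biUnion.mp hh
    rcases eq_or_ne s t with rfl | hst
    · rcases h0 : s 0 with _ | b
      · rw [xorExpandOne_none h0] at hgs hht
        rw [Finset.mem_singleton] at hgs hht
        exact absurd (hgs.trans hht.symm) hne
      · rw [xorExpandOne_some h0] at hgs hht
        rw [Set.disjoint_left]
        intro x hxg hxh
        simp only [Finset.mem_insert, Finset.mem_singleton] at hgs hht
        rcases hgs with rfl | rfl <;> rcases hht with rfl | rfl
        · exact hne rfl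
        · rw [mem_cube] at hxg hxh
          rw [hxg.1] at hxh; cases hxh.1
        · rw [mem_cube] at hxg hxh
          rw [hxg.1] at hxh; cases hxh.1
        · exact hne rfl
    · exact Set.disjoint_of_subset (points_subset_preimage hgs)
        (points_subset_preimage hht) (Disjoint.preimage phi (hF.1 s hs t ht hst))
  · rw [expand_points, hF.2, Set.preimage_univ]

lemma mem_points_split1 {s : Subcube (n+1)} {y : Fin (n+1) → Bool} :
    y ∈ s.points ↔
      (∀ b, s 0 = some b → y 0 = b) ∧ ∀ j : Fin n, ∀ b, s j.succ = some b → y j.succ = b := by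
  constructor
  · intro h
    exact ⟨fun b hb => h 0 b hb, fun j b hb => h j.succ b hb⟩
  · rintro ⟨h0, ht⟩ i b hi
    induction i using Fin.cases with
    | zero => exact h0 b hi
    | succ j => exact ht j b hi

lemma mem_update0 {w : Subcube (n+1)} {b : Bool} {y : Fin (n+1) → Bool} :
    y ∈ Subcube.points (Function.update w 0 (some b)) ↔
      y 0 = b ∧ ∀ j : Fin n, ∀ b', w j.succ = some b' → y j.succ = b' := by
  rw [mem_points_split1]
  constructor
  · rintro ⟨h0, ht⟩
    refine ⟨h0 b (by simp), fun j b' hb' => ht j b' ?_⟩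
    rw [Function.update_of_ne (Fin.succ_ne_zero j)]; exact hb'
  · rintro ⟨h0, ht⟩
    refine ⟨fun b' hb' => ?_, fun j b' hb' => ht j b' ?_⟩
    · simp at hb'; rw [h0, hb']
    · rwa [Function.update_of_ne (Fin.succ_ne_zero j)] at hb'

lemma mem_update0_none {w : Subcube (n+1)} {y : Fin (n+1) → Bool} :
    y ∈ Subcube.points (Function.update w 0 (none : Option Bool)) ↔
      ∀ j : Fin n, ∀ b', w j.succ = some b' → y j.succ = b' := by
  rw [mem_points_split1]
  constructor
  · rintro ⟨-, ht⟩
    intro j b' hb'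
    refine ht j b' ?_
    rw [Function.update_of_ne (Fin.succ_ne_zero j)]; exact hb'
  · intro ht
    refine ⟨fun b' hb' => ?_, fun j b' hb' => ht j b' ?_⟩
    · simp at hb'
    · rwa [Function.update_of_ne (Fin.succ_ne_zero j)] at hb'

/-- If `u` fixes coordinate 0 or 1, all members of `G'` are fixed-type cubes. -/
lemma all_fixed {F : Finset (Subcube (n+1))} {G' : Finset (Subcube (n+2))}
    (hsub : G' ⊆ xorExpand F) {u : Subcube (n+2)}
    (hu : ⋃ g ∈ G', Subcube.points g = u.points)
    (hnn : u 0 ≠ none ∨ u 1 ≠ none) :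
    ∀ g ∈ G', ∃ s ∈ F, ∃ e f : Bool, s 0 = some (xor e f) ∧ g = cube e f s := by
  intro g hg
  obtain ⟨s, hs, hgs⟩ := Finset.mem_biUnion.mp (hsub hg)
  rcases h0 : s 0 with _ | b
  · exfalso
    rw [xorExpandOne_none h0, Finset.mem_singleton] at hgs
    subst hgs
    have hxmem : ∀ a0 a1 : Bool,
        (Fin.cons a0 (Fin.cons a1 (fun j => (s j.succ).getD false)) : Fin (n+2) → Bool)
          ∈ u.points := by
      intro a0 a1
      rw [← hu]
      refine Set.mem_biUnion hg ?_
      rw [mem_starCube]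
      intro j b hb
      induction j using Fin.cases with
      | zero => rw [h0] at hb; cases hb
      | succ k => simp [hb]
    have key : ∀ a0 a1 : Bool, (∀ c, u 0 = some c → a0 = c) ∧ (∀ c, u 1 = some c → a1 = c) := by
      intro a0 a1
      have h := mem_points_split.mp (hxmem a0 a1)
      refine ⟨fun c hc => ?_, fun c hc => ?_⟩
      · have := h.1 c hc; simpa using this
      · have := h.2.1 c hc
        rw [one_eq_succ_zero] at this; simpa using this
    rcases hnn with hn | hn
    · obtain ⟨c, hc⟩ := Option.ne_none_iff_exists'.mp hn
      have h1 := (key false false).1 c hc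
      have h2 := (key true false).1 c hc
      rw [← h1] at h2; cases h2
    · obtain ⟨c, hc⟩ := Option.ne_none_iff_exists'.mp hn
      have h1 := (key false false).2 c hc
      have h2 := (key false true).2 c hc
      rw [← h1] at h2; cases h2
  · rw [xorExpandOne_some h0] at hgs
    rcases Finset.mem_insert.mp hgs with rfl | hgs
    · exact ⟨s, hs, false, b, by simpa using h0, rfl⟩
    · rw [Finset.mem_singleton] at hgs
      subst hgs
      refine ⟨s, hs, true, !b, ?_, rfl⟩
      rw [h0]; cases b <;> rfl

/-- the trace of `G'` on the class `(c, d)` of first-two-coordinates. -/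
def classF (F : Finset (Subcube (n+1))) (G' : Finset (Subcube (n+2))) (c d : Bool) :
    Finset (Subcube (n+1)) :=
  F.filter (fun s => s 0 = some (xor c d) ∧ cube c d s ∈ G')

lemma psi_mem_cube {c d : Bool} {s : Subcube (n+1)} {y : Fin (n+1) → Bool} :
    psi c y ∈ (cube c d s).points ↔
      xor c (y 0) = d ∧ ∀ j : Fin n, ∀ b, s j.succ = some b → y j.succ = b := by
  rw [mem_cube]
  simp only [psi_zero, psi_one, psi_succ_succ, true_and]

lemma xor_cancel_left (c d : Bool) : xor c (xor c d) = d := by cases c <;> cases d <;> rfl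

lemma classUnion {F : Finset (Subcube (n+1))} {G' : Finset (Subcube (n+2))}
    (hsub : G' ⊆ xorExpand F) {u : Subcube (n+2)}
    (hu : ⋃ g ∈ G', Subcube.points g = u.points)
    (hfix : ∀ g ∈ G', ∃ s ∈ F, ∃ e f : Bool, s 0 = some (xor e f) ∧ g = cube e f s)
    {c d : Bool} (h0 : ∀ b, u 0 = some b → b = c) (h1 : ∀ b, u 1 = some b → b = d) :
    ⋃ s ∈ classF F G' c d, Subcube.points s
      = Subcube.points (Function.update (Fin.tail u) 0 (some (xor c d))) := by
  ext y
  rw [mem_update0]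
  have htail : ∀ j : Fin n, (Fin.tail u) j.succ = u j.succ.succ := fun j => rfl
  constructor
  · intro hy
    rw [Set.mem_iUnion₂] at hy
    obtain ⟨s, hsF', hys⟩ := hy
    rw [classF, Finset.mem_filter] at hsF'
    obtain ⟨hsF, hs0, hcube⟩ := hsF'
    have hy0 : y 0 = xor c d := mem_points_split1.mp hys |>.1 _ hs0
    have hpsi : psi c y ∈ (cube c d s).points := by
      rw [psi_mem_cube]
      exact ⟨by rw [hy0, xor_cancel_left], (mem_points_split1.mp hys).2⟩
    have hpu : psi c y ∈ u.points := by
      rw [← hu]; exact Set.mem_biUnion hcube hpsi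
    refine ⟨hy0, fun j b' hb' => ?_⟩
    have := (mem_points_split.mp hpu).2.2 j b' (htail j ▸ hb')
    rwa [psi_succ_succ] at this
  · rintro ⟨hy0, ht⟩
    have hpu : psi c y ∈ u.points := by
      rw [mem_points_split]
      refine ⟨fun b hb => by rw [psi_zero]; exact (h0 b hb).symm, fun b hb => ?_, fun j b hb => ?_⟩
      · rw [psi_one, hy0, xor_cancel_left, h1 b hb]
      · rw [psi_succ_succ]
        exact ht j b (htail j ▸ hb)
    rw [← hu] at hpu
    rw [Set.mem_iUnion₂] at hpu
    obtain ⟨g, hgG', hpg⟩ := hpu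
    obtain ⟨s, hsF, e, f, hs0, rfl⟩ := hfix g hgG'
    have hm := mem_cube.mp hpg
    have he : e = c := by have := hm.1; simpa using this.symm
    have hf : f = d := by
      have := hm.2.1
      rw [psi_one, hy0, xor_cancel_left] at this
      exact this.symm
    subst he; subst hf
    rw [Set.mem_iUnion₂]
    refine ⟨s, ?_, ?_⟩
    · rw [classF, Finset.mem_filter]
      exact ⟨hsF, hs0, hgG'⟩
    · rw [mem_points_split1]
      refine ⟨fun b hb => ?_, fun j b hb => ?_⟩
      · rw [hs0] at hb
        rw [hy0]
        exact Option.some_injective _ hb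
      · have := hm.2.2 j b hb
        rwa [psi_succ_succ] at this


lemma xor_cancel_right (b d : Bool) : xor (xor b d) d = b := by cases b <;> cases d <;> rfl

lemma bool_ne_not (b : Bool) : b ≠ !b := by cases b <;> simp

lemma cube_inj {c d : Bool} {s t : Subcube (n+1)}
    (hs : s 0 = some (xor c d)) (ht : t 0 = some (xor c d)) (h : cube c d s = cube c d t) :
    s = t := by
  funext j
  rcases eq_or_ne j 0 with rfl | hj
  · rw [hs, ht]
  · have := congrFun h j.succ
    simp only [cube, Fin.cons_succ] at this
    rwa [Function.update_of_ne hj, Function.update_of_ne hj] at this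

lemma classF_card {F : Finset (Subcube (n+1))} {G' : Finset (Subcube (n+2))}
    {u : Subcube (n+2)} (hu : ⋃ g ∈ G', Subcube.points g = u.points)
    (hfix : ∀ g ∈ G', ∃ s ∈ F, ∃ e f : Bool, s 0 = some (xor e f) ∧ g = cube e f s)
    {c d : Bool} (hc : u 0 = some c) (hd : u 1 = some d) :
    (classF F G' c d).card = G'.card := by
  refine Finset.card_bij (fun s _ => cube c d s) ?_ ?_ ?_
  · intro s hs; exact ((Finset.mem_filter.mp hs).2).2
  · intro s hsm t htm h
    exact cube_inj (Finset.mem_filter.mp hsm).2.1 (Finset.mem_filter.mp htm).2.1 h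
  · intro g hg
    obtain ⟨s, hsF, e, f, hs0, rfl⟩ := hfix g hg
    obtain ⟨p, hp⟩ := points_nonempty (cube e f s)
    have hpu : p ∈ u.points := by rw [← hu]; exact Set.mem_biUnion hg hp
    have hm := mem_cube.mp hp
    have hsp := mem_points_split.mp hpu
    have he : e = c := by rw [← hm.1]; exact hsp.1 c hc
    have hf : f = d := by rw [← hm.2.1]; exact hsp.2.1 d hd
    subst he; subst hf
    refine ⟨s, ?_, rfl⟩
    rw [classF, Finset.mem_filter]
    exact ⟨hsF, hs0, hg⟩

lemma exists_not_classF {F : Finset (Subcube (n+1))} (hF : IsSubcubePartition F)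
    (G' : Finset (Subcube (n+2))) (c d : Bool) :
    ∃ t ∈ F, t ∉ classF F G' c d := by
  have hy : (Fin.cons (!(xor c d)) (fun _ => false) : Fin (n+1) → Bool) ∈ Set.univ :=
    Set.mem_univ _
  rw [← hF.2, Set.mem_iUnion₂] at hy
  obtain ⟨t, htF, hyt⟩ := hy
  refine ⟨t, htF, fun htc => ?_⟩
  have h0 := (Finset.mem_filter.mp htc).2.1
  have := hyt 0 (xor c d) h0
  simp only [Fin.cons_zero] at this
  exact bool_ne_not (xor c d) this.symm

/-- the involution flipping the first two coordinates. -/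
def sigma (x : Fin (n+2) → Bool) : Fin (n+2) → Bool :=
  Fin.cons (!(x 0)) (Fin.cons (!(x 1)) (fun j => x j.succ.succ))

@[simp] lemma sigma_zero (x : Fin (n+2) → Bool) : sigma x 0 = !(x 0) := rfl

@[simp] lemma sigma_one (x : Fin (n+2) → Bool) : sigma x 1 = !(x 1) := by
  rw [one_eq_succ_zero]; simp [sigma]

@[simp] lemma sigma_succ_succ (x : Fin (n+2) → Bool) (j : Fin n) :
    sigma x j.succ.succ = x j.succ.succ := by
  simp [sigma]

lemma bool_not_eq_comm {a b : Bool} : (!a) = b ↔ a = !b := by cases a <;> cases b <;> simp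

lemma sigma_mem_cube {e f : Bool} {s : Subcube (n+1)} {x : Fin (n+2) → Bool} :
    sigma x ∈ (cube e f s).points ↔ x ∈ (cube (!e) (!f) s).points := by
  rw [mem_cube, mem_cube]
  simp only [sigma_zero, sigma_one, sigma_succ_succ, bool_not_eq_comm]

lemma sigma_mem_u {u : Subcube (n+2)} (h0 : u 0 = none) (h1 : u 1 = none)
    {x : Fin (n+2) → Bool} : sigma x ∈ u.points ↔ x ∈ u.points := by
  rw [mem_points_split, mem_points_split]
  constructor
  · rintro ⟨-, -, ht⟩
    refine ⟨fun b hb => ?_, fun b hb => ?_, fun j b hb => ?_⟩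
    · rw [h0] at hb; cases hb
    · rw [h1] at hb; cases hb
    · have := ht j b hb
      rwa [sigma_succ_succ] at this
  · rintro ⟨-, -, ht⟩
    refine ⟨fun b hb => ?_, fun b hb => ?_, fun j b hb => ?_⟩
    · rw [h0] at hb; cases hb
    · rw [h1] at hb; cases hb
    · rw [sigma_succ_succ]
      exact ht j b hb

lemma partner_closed {F : Finset (Subcube (n+1))} (hF : IsSubcubePartition F)
    {G' : Finset (Subcube (n+2))} (hsub : G' ⊆ xorExpand F)
    {u : Subcube (n+2)} (hu : ⋃ g ∈ G', Subcube.points g = u.points)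
    (h0 : u 0 = none) (h1 : u 1 = none) {s : Subcube (n+1)} (hsF : s ∈ F)
    {e f : Bool} (hs0 : s 0 = some (xor e f)) (hg : cube e f s ∈ G') :
    cube (!e) (!f) s ∈ G' := by
  obtain ⟨p, hp⟩ := points_nonempty (cube (!e) (!f) s)
  have hsp : sigma p ∈ (cube e f s).points := by
    rw [sigma_mem_cube]
    simpa [Bool.not_not] using hp
  have hspu : sigma p ∈ u.points := by rw [← hu]; exact Set.mem_biUnion hg hsp
  have hpu : p ∈ u.points := (sigma_mem_u h0 h1).mp hspu
  rw [← hu, Set.mem_iUnion₂] at hpu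
  obtain ⟨g', hg', hpg'⟩ := hpu
  have hmem : cube (!e) (!f) s ∈ xorExpand F := by
    refine Finset.mem_biUnion.mpr ⟨s, hsF, cube_mem ?_⟩
    rw [hs0]
    cases e <;> cases f <;> rfl
  have := points_eq_of_mem_unique (expand_partition hF).1 (hsub hg') hmem hpg' hp
  rw [← this]
  exact hg'

lemma points_allNone : Subcube.points (fun _ => (none : Option Bool) : Subcube n) = Set.univ := by
  ext x
  simp [Subcube.points]

/-- common endgame for the half-free cases. -/
lemma caseC_end {F : Finset (Subcube (n+1))} (hF : IsSubcubePartition F)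
    (hirr : IsIrreduciblePartition F) (hne : F ≠ {headOnly n false, headOnly n true})
    (w : Subcube (n+1)) (A : Bool → Finset (Subcube (n+1)))
    (hAsub : ∀ b, A b ⊆ F) (hA0 : ∀ b, ∀ s ∈ A b, s 0 = some b)
    (hAU : ∀ b, ⋃ s ∈ A b, Subcube.points s
        = Subcube.points (Function.update w 0 (some b))) : False := by
  have hne' : ∀ b, (A b).Nonempty := by
    intro b
    obtain ⟨y, hy⟩ := points_nonempty (Function.update w 0 (some b))
    rw [← hAU b, Set.mem_iUnion₂] at hy
    obtain ⟨s, hs, -⟩ := hy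
    exact ⟨s, hs⟩
  have hlt : ∀ b, (A b).card < F.card := by
    intro b
    obtain ⟨t, ht⟩ := hne' (!b)
    refine Finset.card_lt_card ⟨hAsub b, fun hsub => ?_⟩
    have h1 := hA0 b t (hsub (hAsub (!b) ht))
    have h2 := hA0 (!b) t ht
    rw [h1] at h2
    exact bool_ne_not b (Option.some_injective _ h2)
  have hone : ∀ b, ∃ s, A b = {s} := by
    intro b
    rcases Nat.lt_or_ge 1 (A b).card with h | h
    · exact absurd ⟨A b, hAsub b, h, hlt b, _, hAU b⟩ hirr
    · exact Finset.card_eq_one.mp (le_antisymm h (Finset.card_pos.mpr (hne' b)))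
  have hseq : ∀ b, Function.update w 0 (some b) ∈ F := by
    intro b
    obtain ⟨s, hs⟩ := hone b
    have := hAU b
    rw [hs] at this
    simp only [Finset.mem_singleton, Set.iUnion_iUnion_eq_left] at this
    have hsw := points_injective this
    rw [← hsw]
    exact hAsub b (by rw [hs]; exact Finset.mem_singleton_self s)
  set P : Finset (Subcube (n+1)) :=
    {Function.update w 0 (some false), Function.update w 0 (some true)} with hP
  have hPne : Function.update w 0 (some false) ≠ Function.update w 0 (some true) := by
    intro h
    have := congrFun h 0
    simp at this
  have hPcard : P.card = 2 := Finset.card_pair hPne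
  have hPsub : P ⊆ F := by
    intro s hs
    rw [hP, Finset.mem_insert, Finset.mem_singleton] at hs
    rcases hs with rfl | rfl
    · exact hseq false
    · exact hseq true
  have hPU : ⋃ s ∈ P, Subcube.points s = Subcube.points (Function.update w 0 none) := by
    ext y
    rw [Set.mem_iUnion₂, mem_update0_none]
    constructor
    · rintro ⟨s, hs, hys⟩
      rw [hP, Finset.mem_insert, Finset.mem_singleton] at hs
      rcases hs with rfl | rfl <;> exact (mem_update0.mp hys).2
    · intro ht
      refine ⟨Function.update w 0 (some (y 0)), ?_, mem_update0.mpr ⟨rfl, ht⟩⟩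
      rw [hP, Finset.mem_insert, Finset.mem_singleton]
      cases y 0
      · exact Or.inl rfl
      · exact Or.inr rfl
  rcases Nat.lt_or_ge 2 F.card with h2 | h2
  · exact absurd ⟨P, hPsub, by rw [hPcard]; norm_num, by rw [hPcard]; exact h2, _, hPU⟩ hirr
  · have hFP : P = F := Finset.eq_of_subset_of_card_le hPsub (by rw [hPcard]; exact h2)
    have huniv : Subcube.points (Function.update w 0 (none : Option Bool)) = Set.univ := by
      rw [← hPU, hFP]
      exact hF.2
    have hwn : Function.update w 0 (none : Option Bool) = fun _ => none :=
      points_injective (by rw [huniv, points_allNone])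
    have hhead : ∀ b, Function.update w 0 (some b) = headOnly n b := by
      intro b
      funext i
      induction i using Fin.cases with
      | zero => simp [headOnly]
      | succ j =>
        have := congrFun hwn j.succ
        rw [Function.update_of_ne (Fin.succ_ne_zero j)] at this
        rw [Function.update_of_ne (Fin.succ_ne_zero j), this]
        simp [headOnly]
    apply hne
    rw [← hFP, hP, hhead false, hhead true]

lemma caseB {F : Finset (Subcube (n+1))} (hF : IsSubcubePartition F)
    (hirr : IsIrreduciblePartition F) {G' : Finset (Subcube (n+2))}
    (hsub : G' ⊆ xorExpand F) {u : Subcube (n+2)}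
    (hu : ⋃ g ∈ G', Subcube.points g = u.points)
    (h0 : u 0 = none) (h1 : u 1 = none)
    (hc1 : 1 < G'.card) (hc2 : G'.card < (xorExpand F).card) : False := by
  classical
  set F' : Finset (Subcube (n+1)) :=
    F.filter (fun s => ∃ g ∈ xorExpandOne s, g ∈ G') with hF'
  have hF'sub : F' ⊆ F := Finset.filter_subset _ _
  have hGF' : G' = xorExpand F' := by
    ext g
    constructor
    · intro hg
      obtain ⟨s, hsF, hgs⟩ := Finset.mem_biUnion.mp (hsub hg)
      refine Finset.mem_biUnion.mpr ⟨s, ?_, hgs⟩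
      rw [hF', Finset.mem_filter]
      exact ⟨hsF, g, hgs, hg⟩
    · intro hg
      obtain ⟨s, hsF', hgs⟩ := Finset.mem_biUnion.mp hg
      rw [hF', Finset.mem_filter] at hsF'
      obtain ⟨hsF, g0, hg0s, hg0⟩ := hsF'.imp id id
      rcases hb : s 0 with _ | b
      · rw [xorExpandOne_none hb, Finset.mem_singleton] at hgs hg0s
        rw [hgs, ← hg0s]
        exact hg0
      · rw [xorExpandOne_some hb, Finset.mem_insert, Finset.mem_singleton] at hgs hg0s
        have hxf : s 0 = some (xor false b) := by simpa using hb
        have hxt : s 0 = some (xor true (!b)) := by rw [hb]; cases b <;> rfl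
        rcases hgs with rfl | rfl <;> rcases hg0s with h' | h'
        · rw [← h']; exact hg0
        · rw [h'] at hg0
          have := partner_closed hF hsub hu h0 h1 hsF hxt hg0
          simpa [Bool.not_not] using this
        · rw [h'] at hg0
          exact partner_closed hF hsub hu h0 h1 hsF hxf hg0
        · rw [← h']; exact hg0
  set v : Subcube (n+1) := Fin.cons (none : Option Bool) (fun j => u j.succ.succ) with hv
  have hpre : phi ⁻¹' (⋃ s ∈ F', Subcube.points s) = phi ⁻¹' v.points := by
    rw [← expand_points, ← hGF', hu]
    ext x
    rw [Set.mem_preimage, mem_points_split, phi_mem]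
    constructor
    · rintro ⟨-, -, ht⟩
      refine ⟨fun b hb => ?_, fun j b hb => ?_⟩
      · rw [hv] at hb; simp at hb
      · refine ht j b ?_
        rw [hv] at hb; simpa using hb
    · rintro ⟨-, ht⟩
      refine ⟨fun b hb => ?_, fun b hb => ?_, fun j b hb => ?_⟩
      · rw [h0] at hb; cases hb
      · rw [h1] at hb; cases hb
      · refine ht j b ?_
        rw [hv]; simpa using hb
  have hUnion : ⋃ s ∈ F', Subcube.points s = v.points :=
    Set.preimage_injective.mpr phi_surjective hpre
  have hcard1 : 1 < F'.card := by
    by_contra hle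
    push_neg at hle
    have := Finset.card_le_one_iff_subset_singleton.mp hle
    obtain ⟨x, hx⟩ := this
    rcases Finset.subset_singleton_iff.mp hx with h' | h'
    · rw [h'] at hGF'
      have : G' = ∅ := by rw [hGF']; rfl
      rw [this] at hc1
      simp at hc1
    · rw [h'] at hUnion hGF'
      simp only [Finset.mem_singleton, Set.iUnion_iUnion_eq_left] at hUnion
      have hxv : x = v := points_injective hUnion
      have hx0 : x 0 = none := by rw [hxv, hv]; rfl
      have : G' = {Fin.cons none x} := by
        rw [hGF']
        unfold xorExpand
        rw [Finset.singleton_biUnion, xorExpandOne_none hx0]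
      rw [this] at hc1
      simp at hc1
  have hcard2 : F'.card < F.card := by
    rcases eq_or_ne F' F with h | h
    · exfalso
      rw [h] at hGF'
      rw [hGF'] at hc2
      exact lt_irrefl _ hc2
    · exact Finset.card_lt_card (hF'sub.ssubset_of_ne h)
  exact hirr ⟨F', hF'sub, hcard1, hcard2, v, hUnion⟩

end XorProof

/-- If `F ≠ {0*^n, 1*^n}` is an irreducible subcube partition of
`{0,1}^(n+1)`, then `G = {00t, 11t : 0t ∈ F} ∪ {01t, 10t : 1t ∈ F} ∪ {**t : *t ∈ F}`
is an irreducible subcube partition of `{0,1}^(n+2)`. -/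
theorem xor_expand_irreducible {n : ℕ} (F : Finset (Subcube (n + 1)))
    (hF : IsSubcubePartition F) (hirr : IsIrreduciblePartition F)
    (hne : F ≠ {headOnly n false, headOnly n true}) :
    IsSubcubePartition (xorExpand F) ∧ IsIrreduciblePartition (xorExpand F) := by
  classical
  refine ⟨XorProof.expand_partition hF, ?_⟩
  rintro ⟨G', hsub, hc1, hc2, u, hu⟩
  rcases hu0 : u 0 with _ | c
  · rcases hu1 : u 1 with _ | d
    · exact XorProof.caseB hF hirr hsub hu hu0 hu1 hc1 hc2
    · -- u0 = *, u1 = d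
      have hnn : u 0 ≠ none ∨ u 1 ≠ none := Or.inr (by rw [hu1]; simp)
      have hfix := XorProof.all_fixed hsub hu hnn
      refine XorProof.caseC_end hF hirr hne (Fin.tail u)
        (fun b => XorProof.classF F G' (xor b d) d) (fun b => Finset.filter_subset _ _)
        (fun b s hs => ?_) (fun b => ?_)
      · have := (Finset.mem_filter.mp hs).2.1
        rwa [XorProof.xor_cancel_right] at this
      · have h0' : ∀ b', u 0 = some b' → b' = xor b d := by
          rw [hu0]; intro b' h; cases h
        have h1' : ∀ b', u 1 = some b' → b' = d := by
          rw [hu1]; intro b' h; exact (Option.some_injective _ h).symm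
        have := XorProof.classUnion hsub hu hfix h0' h1'
        rwa [XorProof.xor_cancel_right] at this
  · rcases hu1 : u 1 with _ | d
    · -- u0 = c, u1 = *
      have hnn : u 0 ≠ none ∨ u 1 ≠ none := Or.inl (by rw [hu0]; simp)
      have hfix := XorProof.all_fixed hsub hu hnn
      refine XorProof.caseC_end hF hirr hne (Fin.tail u)
        (fun b => XorProof.classF F G' c (xor c b)) (fun b => Finset.filter_subset _ _)
        (fun b s hs => ?_) (fun b => ?_)
      · have := (Finset.mem_filter.mp hs).2.1
        rwa [XorProof.xor_cancel_left] at this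
      · have h0' : ∀ b', u 0 = some b' → b' = c := by
          rw [hu0]; intro b' h; exact (Option.some_injective _ h).symm
        have h1' : ∀ b', u 1 = some b' → b' = xor c b := by
          rw [hu1]; intro b' h; cases h
        have := XorProof.classUnion hsub hu hfix h0' h1'
        rwa [XorProof.xor_cancel_left] at this
    · -- u0 = c, u1 = d : case A
      have hnn : u 0 ≠ none ∨ u 1 ≠ none := Or.inl (by rw [hu0]; simp)
      have hfix := XorProof.all_fixed hsub hu hnn
      have h0' : ∀ b, u 0 = some b → b = c := by
        rw [hu0]; intro b h; exact (Option.some_injective _ h).symm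
      have h1' : ∀ b, u 1 = some b → b = d := by
        rw [hu1]; intro b h; exact (Option.some_injective _ h).symm
      have hCU := XorProof.classUnion hsub hu hfix h0' h1'
      have hCc := XorProof.classF_card hu hfix hu0 hu1
      obtain ⟨t, htF, htn⟩ := XorProof.exists_not_classF hF G' c d
      have hlt : (XorProof.classF F G' c d).card < F.card :=
        Finset.card_lt_card ⟨Finset.filter_subset _ _, fun hss => htn (hss htF)⟩
      exact hirr ⟨XorProof.classF F G' c d, Finset.filter_subset _ _,
        by rw [hCc]; exact hc1, hlt, _, hCU⟩
end
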